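/- arXiv:2410.01868 — 13 statements merged into one kernel-verified Lean document; each statement's English description precedes it below -/
import Mathlib

section
/- Let X and Y be locally compact, Hausdorff, second countable, totally disconnected topological spaces and let σ : X → Y be a surjective local homeomorphism. Then σ admits a continuous section: there exists a continuous map φ : Y → X such that σ(φ(y)) = y for every y ∈ Y. -/
/-!
A local homeomorphism has continuous local sections over open sets, and by zero-dimensionality
these can be taken over clopen sets. By the Lindelöf property countably many such clopens cover
`Y`; making them disjoint (subtract the earlier ones) keeps them clopen, and the local sections
over a disjoint open cover glue to a global continuous section.
-/

open Set Filter Function Topology TopologicalSpace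

section

variable {X Y : Type*} [TopologicalSpace X] [TopologicalSpace Y]

theorem IsLocalHomeomorph.exists_continuousOn_section {σ : X → Y} (hσ : IsLocalHomeomorph σ)
    (x : X) : ∃ U ∈ 𝓝 (σ x), ∃ s : Y → X, ContinuousOn s U ∧ ∀ y ∈ U, σ (s y) = y := by
  obtain ⟨e, hx, rfl⟩ := hσ x
  exact ⟨e.target, e.open_target.mem_nhds (e.map_source hx), e.symm, e.continuousOn_symm,
    fun y hy => e.right_inv hy⟩

theorem IsClopen.disjointed {W : ℕ → Set Y} (hW : ∀ n, IsClopen (W n)) (n : ℕ) :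
    IsClopen (disjointed W n) :=
  disjointedRec (fun _ i ht => ht.diff (hW i)) (hW n)

theorem exists_disjoint_clopen_cover_of_nhds [LindelofSpace Y] [Nonempty Y]
    (hB : IsTopologicalBasis {s : Set Y | IsClopen s}) (U : Y → Set Y) (hU : ∀ y, U y ∈ 𝓝 y) :
    ∃ (D : ℕ → Set Y) (c : ℕ → Y), (∀ n, IsClopen (D n)) ∧ Pairwise (Disjoint on D) ∧
      ⋃ n, D n = univ ∧ ∀ n, D n ⊆ U (c n) := by
  choose V hV hyV hVU using fun y => hB.mem_nhds_iff.1 (hU y)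
  obtain ⟨t, ht, htV⟩ :=
    LindelofSpace.elim_nhds_subcover V fun y => (hV y).isOpen.mem_nhds (hyV y)
  have ht_ne : t.Nonempty := by
    by_contra h
    rw [not_nonempty_iff_eq_empty.1 h, biUnion_empty] at htV
    exact empty_ne_univ htV
  obtain ⟨c, rfl⟩ := ht.exists_eq_range ht_ne
  refine ⟨disjointed (V ∘ c), c, IsClopen.disjointed fun n => hV (c n), disjoint_disjointed _,
    ?_, fun n => (disjointed_subset _ n).trans (hVU (c n))⟩
  rw [iUnion_disjointed, ← htV, biUnion_range]
  rfl

theorem exists_continuous_eqOn_of_disjoint_open_cover {ι : Type*} {D : ι → Set Y}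
    (hD : ∀ i, IsOpen (D i)) (hdisj : Pairwise (Disjoint on D)) (hcover : ⋃ i, D i = univ)
    {f : ι → Y → X} (hf : ∀ i, ContinuousOn (f i) (D i)) :
    ∃ g : Y → X, Continuous g ∧ ∀ i, EqOn g (f i) (D i) := by
  choose idx hidx using fun y => mem_iUnion.1 (hcover ▸ mem_univ y)
  have hg : ∀ i, EqOn (fun y => f (idx y) y) (f i) (D i) := fun i y hy => by
    dsimp only
    rw [hdisj.eq (not_disjoint_iff.2 ⟨y, hidx y, hy⟩)]
  exact ⟨_, continuous_of_cover_nhds (fun y => ⟨idx y, (hD _).mem_nhds (hidx y)⟩)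
    fun i => (hf i).congr (hg i), hg⟩

end

theorem surjective_localHomeomorph_has_continuous_section_general
    {X Y : Type*} [TopologicalSpace X] [TopologicalSpace Y]
    [LocallyCompactSpace Y] [T2Space Y] [SecondCountableTopology Y]
    [TotallyDisconnectedSpace Y]
    (σ : X → Y) (hσ : IsLocalHomeomorph σ) (hsurj : Function.Surjective σ) :
    ∃ φ : Y → X, Continuous φ ∧ ∀ y : Y, σ (φ y) = y := by
  rcases isEmpty_or_nonempty Y with hY | hY
  · exact ⟨isEmptyElim, continuous_of_discreteTopology, isEmptyElim⟩
  have hloc : ∀ y, ∃ U ∈ 𝓝 y, ∃ s : Y → X, ContinuousOn s U ∧ ∀ z ∈ U, σ (s z) = z := by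
    intro y
    obtain ⟨x, rfl⟩ := hsurj y
    exact hσ.exists_continuousOn_section x
  choose U hU s hs hσs using hloc
  obtain ⟨D, c, hD, hdisj, hcover, hDU⟩ :=
    exists_disjoint_clopen_cover_of_nhds loc_compact_Haus_tot_disc_of_zero_dim U hU
  obtain ⟨φ, hφ, hφs⟩ := exists_continuous_eqOn_of_disjoint_open_cover (fun n => (hD n).isOpen)
    hdisj hcover fun n => (hs (c n)).mono (hDU n)
  refine ⟨φ, hφ, fun y => ?_⟩
  obtain ⟨n, hn⟩ := mem_iUnion.1 (hcover ▸ mem_univ y)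
  rw [hφs n hn]
  exact hσs _ _ (hDU n hn)

/-- Every surjective local homeomorphism between locally compact, Hausdorff,
second countable, totally disconnected spaces admits a continuous section. -/
theorem surjective_localHomeomorph_has_continuous_section
    {X Y : Type*} [TopologicalSpace X] [TopologicalSpace Y]
    [LocallyCompactSpace X] [T2Space X] [SecondCountableTopology X]
    [TotallyDisconnectedSpace X]
    [LocallyCompactSpace Y] [T2Space Y] [SecondCountableTopology Y]
    [TotallyDisconnectedSpace Y]
    (σ : X → Y) (hσ : IsLocalHomeomorph σ) (hsurj : Function.Surjective σ) :
    ∃ φ : Y → X, Continuous φ ∧ ∀ y : Y, σ (φ y) = y :=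
  surjective_localHomeomorph_has_continuous_section_general σ hσ hsurj
end

section
/- Let X and Y be td-lcsc spaces and let σ : X → Y be a local homeomorphism. For every f ∈ C_c(X, ℤ) and every y ∈ Y, the set {x ∈ X : σ(x) = y and f(x) ≠ 0} is finite, and the function σ_*(f) : Y → ℤ defined by σ_*(f)(y) = Σ_{x : σ(x) = y} f(x) is continuous and has compact support; that is, σ_*(f) ∈ C_c(Y, ℤ). -/
open Set Function Topology

/-- In a locally compact Hausdorff totally disconnected space, every point of an open set
has a compact open neighborhood inside it. -/
lemma exists_isCompact_isOpen_nhd {X : Type*} [TopologicalSpace X] [LocallyCompactSpace X]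
    [T2Space X] [TotallyDisconnectedSpace X] {x : X} {U : Set X} (hU : IsOpen U) (hx : x ∈ U) :
    ∃ V : Set X, IsCompact V ∧ IsOpen V ∧ x ∈ V ∧ V ⊆ U := by
  obtain ⟨s, scomp, xs, sU⟩ := exists_compact_subset hU hx
  obtain ⟨V, hV, hxV, hVs⟩ := loc_compact_Haus_tot_disc_of_zero_dim.mem_nhds_iff.1
    (isOpen_interior.mem_nhds xs)
  exact ⟨V, scomp.of_isClosed_subset hV.1 (hVs.trans interior_subset), hV.2, hxV,
    (hVs.trans interior_subset).trans sU⟩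

/-- If `σ : X → Y` is a local homeomorphism of td-lcsc spaces and
`f ∈ C_c(X, ℤ)`, then every fiber of `σ` meets the support of `f` in a finite
set, and `σ_*(f) : y ↦ Σ_{x : σ x = y} f x` belongs to `C_c(Y, ℤ)`. -/
theorem fiberSum_continuous_compactSupport
    {X Y : Type*} [TopologicalSpace X] [TopologicalSpace Y]
    [LocallyCompactSpace X] [T2Space X] [SecondCountableTopology X]
    [TotallyDisconnectedSpace X]
    [LocallyCompactSpace Y] [T2Space Y] [SecondCountableTopology Y]
    [TotallyDisconnectedSpace Y]
    (σ : X → Y) (hσ : IsLocalHomeomorph σ)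
    (f : X → ℤ) (hf : Continuous f) (hfc : HasCompactSupport f) :
    (∀ y : Y, {x : X | σ x = y ∧ f x ≠ 0}.Finite) ∧
      Continuous (fun y : Y => ∑ᶠ (x : X) (_ : σ x = y), f x) ∧
      HasCompactSupport (fun y : Y => ∑ᶠ (x : X) (_ : σ x = y), f x) := by
  classical
  choose E hEmem hEeq using hσ
  have hco : ∀ x : X, ∃ V : Set X, IsCompact V ∧ IsOpen V ∧ x ∈ V ∧ V ⊆ (E x).source :=
    fun x => exists_isCompact_isOpen_nhd (E x).open_source (hEmem x)
  choose C hCcomp hCopen hCmem hCsub using hco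
  have hKcomp : IsCompact (tsupport f) := hfc
  obtain ⟨t, ht⟩ := hKcomp.elim_finite_subcover C hCopen
    (fun k _ => mem_iUnion.2 ⟨k, hCmem k⟩)
  set l : List X := t.toList with hl
  set n : ℕ := l.length with hn
  set Cs : ℕ → Set X := fun i => if h : i < n then C (l.get ⟨i, h⟩) else ∅ with hCs
  set V : ℕ → Set X := disjointed Cs with hVdef
  have hCsClopen : ∀ i, IsClopen (Cs i) := by
    intro i
    by_cases h : i < n
    · simp only [hCs, dif_pos h]
      exact ⟨(hCcomp _).isClosed, hCopen _⟩
    · simp only [hCs, dif_neg h]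
      exact isClopen_empty
  have hCsComp : ∀ i, IsCompact (Cs i) := by
    intro i
    by_cases h : i < n
    · simp only [hCs, dif_pos h]; exact hCcomp _
    · simp only [hCs, dif_neg h]; exact isCompact_empty
  have hPS : ∀ i, IsClopen (partialSups Cs i) := by
    intro i
    induction i with
    | zero => rw [partialSups_zero]; exact hCsClopen 0
    | succ i ih => rw [partialSups_add_one]; exact ih.union (hCsClopen (i + 1))
  have hVClopen : ∀ i, IsClopen (V i) := by
    intro i
    cases i with
    | zero => rw [hVdef, disjointed_zero]; exact hCsClopen 0
    | succ i =>
      rw [hVdef, disjointed_add_one]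
      exact (hCsClopen (i + 1)).diff (hPS i)
  have hVsub : ∀ i, V i ⊆ Cs i := fun i => disjointed_subset Cs i
  have hVcomp : ∀ i, IsCompact (V i) :=
    fun i => (hCsComp i).of_isClosed_subset (hVClopen i).1 (hVsub i)
  have hVdisj : Pairwise (Disjoint on V) := disjoint_disjointed Cs
  -- membership in source
  have hVsource : ∀ i (h : i < n), V i ⊆ (E (l.get ⟨i, h⟩)).source := by
    intro i h x hx
    have := hVsub i hx
    simp only [hCs, dif_pos h] at this
    exact hCsub _ this
  -- the tsupport is covered by the V i, for i < n
  have hKV : ∀ x ∈ tsupport f, ∃ i, i < n ∧ x ∈ V i := by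
    intro x hx
    have : x ∈ ⋃ i, Cs i := by
      have hx2 := ht hx
      simp only [mem_iUnion, exists_prop] at hx2
      obtain ⟨z, hzt, hzC⟩ := hx2
      have hzl : z ∈ l := by rw [hl]; exact Finset.mem_toList.mpr hzt
      obtain ⟨j, hj⟩ := List.mem_iff_get.1 hzl
      refine mem_iUnion.2 ⟨j.1, ?_⟩
      simp only [hCs, dif_pos j.2]
      rw [dif_pos (show (j : ℕ) < n from j.2), Fin.eta, hj]
      exact hzC
    rw [← iUnion_disjointed] at this
    obtain ⟨i, hi⟩ := mem_iUnion.1 this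
    refine ⟨i, ?_, hi⟩
    by_contra h
    have := hVsub i hi
    simp only [hCs, dif_neg h] at this
    exact this
  -- fibers intersect each V i in at most one point
  have hsub : ∀ (y : Y) i, ({x | σ x = y} ∩ V i).Subsingleton := by
    intro y i a ha b hb
    by_cases h : i < n
    · have ha' := hVsource i h ha.2
      have hb' := hVsource i h hb.2
      have : σ a = σ b := ha.1.trans hb.1.symm
      rw [hEeq (l.get ⟨i, h⟩)] at this
      exact (E (l.get ⟨i, h⟩)).injOn ha' hb' this
    · exfalso
      have := hVsub i ha.2
      simp only [hCs, dif_neg h] at this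
      exact this
  -- Part 1 : fibers meet support in finite sets
  have hfin : ∀ y : Y, {x : X | σ x = y ∧ f x ≠ 0}.Finite := by
    intro y
    have hsubset : {x : X | σ x = y ∧ f x ≠ 0} ⊆
        ⋃ i ∈ Finset.range n, ({x | σ x = y} ∩ V i) := by
      intro x hx
      obtain ⟨i, hi, hxi⟩ := hKV x (subset_tsupport f hx.2)
      exact mem_iUnion₂.2 ⟨i, Finset.mem_range.2 hi, hx.1, hxi⟩
    exact Set.Finite.subset ((Finset.range n).finite_toSet.biUnion
      (fun i _ => (hsub y i).finite)) hsubset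
  refine ⟨hfin, ?_⟩
  -- the pieces of the pushforward
  set g : ℕ → Y → ℤ := fun i y =>
    if h : i < n then (σ '' V i).indicator (fun y' => f ((E (l.get ⟨i, h⟩)).symm y')) y else 0
    with hg
  -- images are clopen and compact
  have himage_comp : ∀ i, IsCompact (σ '' V i) := by
    intro i
    exact (hVcomp i).image (IsLocalHomeomorph.continuous (fun x => ⟨E x, hEmem x, hEeq x⟩))
  have himage_open : ∀ i (h : i < n), IsOpen (σ '' V i) := by
    intro i h
    rw [hEeq (l.get ⟨i, h⟩)]
    exact (E (l.get ⟨i, h⟩)).isOpen_image_of_subset_source (hVClopen i).2 (hVsource i h)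
  -- each g i is continuous
  have hgcont : ∀ i, Continuous (g i) := by
    intro i
    by_cases h : i < n
    · simp only [hg, dif_pos h]
      rw [continuous_iff_continuousAt]
      intro y
      by_cases hy : y ∈ σ '' V i
      · have hyt : y ∈ (E (l.get ⟨i, h⟩)).target := by
          obtain ⟨x, hxV, rfl⟩ := hy
          rw [hEeq (l.get ⟨i, h⟩)]
          exact (E (l.get ⟨i, h⟩)).map_source (hVsource i h hxV)
        have hc : ContinuousAt (fun y' => f ((E (l.get ⟨i, h⟩)).symm y')) y :=
          hf.continuousAt.comp ((E (l.get ⟨i, h⟩)).symm.continuousAt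
            (by rwa [OpenPartialHomeomorph.symm_source]))
        refine hc.congr ?_
        filter_upwards [(himage_open i h).mem_nhds hy] with z hz
        exact (Set.indicator_of_mem hz (fun y' => f ((E (l.get ⟨i, h⟩)).symm y'))).symm
      · have : ContinuousAt (fun _ : Y => (0 : ℤ)) y := continuousAt_const
        refine this.congr ?_
        filter_upwards [((himage_comp i).isClosed.isOpen_compl).mem_nhds hy] with z hz
        exact (Set.indicator_of_notMem hz (fun y' => f ((E (l.get ⟨i, h⟩)).symm y'))).symm
    · simp only [hg, dif_neg h]
      exact continuous_const
  -- the pointwise identity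
  have hpoint : ∀ y : Y, (∑ᶠ (x : X) (_ : σ x = y), f x) = ∑ i ∈ Finset.range n, g i y := by
    intro y
    have hfin' : ({x : X | σ x = y} ∩ support f).Finite := by
      refine (hfin y).subset ?_
      rintro x ⟨hx1, hx2⟩
      exact ⟨hx1, hx2⟩
    have hL : (∑ᶠ (x : X) (_ : σ x = y), f x) = ∑ x ∈ hfin'.toFinset, f x :=
      finsum_mem_eq_sum f hfin'
    set s : Finset X := hfin'.toFinset with hs
    have hmem : ∀ x, x ∈ s ↔ σ x = y ∧ f x ≠ 0 := by
      intro x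
      simp only [hs, Set.Finite.mem_toFinset, mem_inter_iff, mem_setOf_eq, mem_support]
    -- s decomposes as a disjoint union of its intersections with the V i
    have hdecomp : s = (Finset.range n).biUnion (fun i => s.filter (· ∈ V i)) := by
      ext x
      simp only [Finset.mem_biUnion, Finset.mem_range, Finset.mem_filter]
      constructor
      · intro hx
        obtain ⟨i, hi, hxi⟩ := hKV x (subset_tsupport f ((hmem x).1 hx).2)
        exact ⟨i, hi, hx, hxi⟩
      · rintro ⟨i, _, hx, _⟩
        exact hx
    have hdisj : ∀ i ∈ (Finset.range n : Finset ℕ), ∀ j ∈ (Finset.range n : Finset ℕ),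
        i ≠ j → Disjoint (s.filter (· ∈ V i)) (s.filter (· ∈ V j)) := by
      intro i _ j _ hij
      rw [Finset.disjoint_left]
      intro x hxi hxj
      have h1 := (Finset.mem_filter.1 hxi).2
      have h2 := (Finset.mem_filter.1 hxj).2
      exact Set.disjoint_left.1 (hVdisj hij) h1 h2
    have hR : ∀ i ∈ Finset.range n, g i y = ∑ x ∈ s.filter (· ∈ V i), f x := by
      intro i hi
      have h : i < n := Finset.mem_range.1 hi
      simp only [hg, dif_pos h]
      by_cases hy : y ∈ σ '' V i
      · have hy' := hy
        obtain ⟨x₀, hx₀V, hx₀⟩ := hy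
        have hsymm : (E (l.get ⟨i, h⟩)).symm y = x₀ := by
          rw [← hx₀, hEeq (l.get ⟨i, h⟩)]
          exact (E (l.get ⟨i, h⟩)).left_inv (hVsource i h hx₀V)
        rw [Set.indicator_of_mem hy' (fun y' => f ((E (l.get ⟨i, h⟩)).symm y')), hsymm]
        by_cases hfx : f x₀ = 0
        · have : s.filter (· ∈ V i) = ∅ := by
            rw [Finset.eq_empty_iff_forall_notMem]
            intro x hx
            obtain ⟨hxs, hxV⟩ := Finset.mem_filter.1 hx
            have hxeq : x = x₀ := hsub y i (Set.mem_inter (((hmem x).1 hxs).1 : σ x = y) hxV) (Set.mem_inter hx₀ hx₀V)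
            exact ((hmem x).1 hxs).2 (hxeq ▸ hfx)
          rw [this, Finset.sum_empty, hfx]
        · have : s.filter (· ∈ V i) = {x₀} := by
            ext x
            simp only [Finset.mem_filter, Finset.mem_singleton]
            constructor
            · rintro ⟨hxs, hxV⟩
              exact hsub y i (Set.mem_inter (((hmem x).1 hxs).1 : σ x = y) hxV) (Set.mem_inter hx₀ hx₀V)
            · rintro rfl
              exact ⟨(hmem _).2 ⟨hx₀, hfx⟩, hx₀V⟩
          rw [this, Finset.sum_singleton]
      · rw [Set.indicator_of_notMem hy]
        have : s.filter (· ∈ V i) = ∅ := by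
          rw [Finset.eq_empty_iff_forall_notMem]
          intro x hx
          obtain ⟨hxs, hxV⟩ := Finset.mem_filter.1 hx
          exact hy ⟨x, hxV, ((hmem x).1 hxs).1⟩
        rw [this, Finset.sum_empty]
    rw [hL, Finset.sum_congr rfl hR, ← Finset.sum_biUnion hdisj, ← hdecomp]
  have hfun : (fun y : Y => ∑ᶠ (x : X) (_ : σ x = y), f x) =
      fun y : Y => ∑ i ∈ Finset.range n, g i y := funext hpoint
  rw [hfun]
  constructor
  · exact continuous_finset_sum _ (fun i _ => hgcont i)
  · refine HasCompactSupport.intro ((Finset.range n).isCompact_biUnion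
      (fun i _ => himage_comp i)) ?_
    intro y hy
    refine Finset.sum_eq_zero ?_
    intro i hi
    have h : i < n := Finset.mem_range.1 hi
    have hyi : y ∉ σ '' V i := fun hmem' => hy (mem_iUnion₂.2 ⟨i, hi, hmem'⟩)
    simp only [hg, dif_pos h]
    exact Set.indicator_of_notMem hyi _
end

section
/- Let X and Y be td-lcsc spaces, let σ : X → Y be a surjective local homeomorphism, and suppose X₀ ⊆ X is a compact open set with σ⁻¹(σ(X₀)) = X₀ such that σ is injective on X ∖ X₀. Let φ : Y → X be a continuous section of σ and set X_φ = φ(Y). Then every y ∈ Y has a clopen neighbourhood W, and there exist a positive integer n and pairwise disjoint subsets U₁, …, Uₙ ⊆ X such that: (i) σ⁻¹(W) = U₁ ∪ ⋯ ∪ Uₙ; (ii) for each i, the restriction of σ to Uᵢ is a homeomorphism from Uᵢ onto W; and (iii) σ⁻¹(W) ∩ X_φ = U₁. Moreover, if y ∈ σ(X₀) then W and the sets U₁, …, Uₙ can be chosen compact, and if y ∉ σ(X₀) one can take n = 1, W = Y ∖ σ(X₀) and U₁ = X ∖ X₀. -/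
open Set

lemma exists_isCompact_isClopen_subset {H : Type*} [TopologicalSpace H] [LocallyCompactSpace H]
    [T2Space H] [TotallyDisconnectedSpace H] {x : H} {U : Set H} (hU : IsOpen U) (hx : x ∈ U) :
    ∃ V : Set H, IsClopen V ∧ IsCompact V ∧ x ∈ V ∧ V ⊆ U := by
  obtain ⟨K, hKc, hxK, hKU⟩ := exists_compact_subset hU hx
  obtain ⟨V, hVclopen, hxV, hVK⟩ :=
    loc_compact_Haus_tot_disc_of_zero_dim.mem_nhds_iff.1 (isOpen_interior.mem_nhds hxK)
  exact ⟨V, hVclopen, hKc.of_isClosed_subset hVclopen.isClosed (hVK.trans interior_subset),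
    hxV, (hVK.trans interior_subset).trans hKU⟩



/-- Decomposition of fibers of a surjective local homeomorphism over a clopen
neighbourhood of any point, compatible with a compact open saturated set `X₀`
and with the image of a continuous section `φ`. -/
theorem localHomeomorph_fiber_decomposition
    {X Y : Type*} [TopologicalSpace X] [TopologicalSpace Y]
    [LocallyCompactSpace X] [T2Space X] [SecondCountableTopology X]
    [TotallyDisconnectedSpace X]
    [LocallyCompactSpace Y] [T2Space Y] [SecondCountableTopology Y]
    [TotallyDisconnectedSpace Y]
    (σ : X → Y) (hσ : IsLocalHomeomorph σ) (hsurj : Function.Surjective σ)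
    (X₀ : Set X) (hX₀c : IsCompact X₀) (hX₀o : IsOpen X₀)
    (hX₀sat : σ ⁻¹' (σ '' X₀) = X₀)
    (hinj : Set.InjOn σ X₀ᶜ)
    (φ : Y → X) (hφ : Continuous φ) (hsec : ∀ y : Y, σ (φ y) = y)
    (y : Y) :
    ∃ (W : Set Y) (n : ℕ) (U : Fin (n + 1) → Set X),
      IsClopen W ∧ y ∈ W ∧
      Pairwise (Function.onFun Disjoint U) ∧
      σ ⁻¹' W = ⋃ i, U i ∧
      (∀ i, ∃ e : (U i) ≃ₜ W, ∀ x : U i, (e x : Y) = σ (x : X)) ∧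
      σ ⁻¹' W ∩ Set.range φ = U 0 ∧
      (y ∈ σ '' X₀ → IsCompact W ∧ ∀ i, IsCompact (U i)) ∧
      (y ∉ σ '' X₀ → n = 0 ∧ W = (σ '' X₀)ᶜ ∧ U 0 = X₀ᶜ) := by
  by_cases hy : y ∈ σ '' X₀
  case neg =>
    set W : Set Y := (σ '' X₀)ᶜ with hW
    have hWclopen : IsClopen W :=
      IsClopen.compl ⟨(hX₀c.image hσ.continuous).isClosed, hσ.isOpenMap _ hX₀o⟩
    have hpre : σ ⁻¹' W = X₀ᶜ := by rw [hW, Set.preimage_compl, hX₀sat]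
    refine ⟨W, 0, fun _ => X₀ᶜ, hWclopen, hy, ?_, ?_, ?_, ?_, fun h => absurd h hy,
      fun _ => ⟨rfl, rfl, rfl⟩⟩
    · intro i j hij; omega
    · rw [hpre, Set.iUnion_const]
    · intro i
      rw [← hpre]
      have hbij : Function.Bijective (W.restrictPreimage σ) := by
        constructor
        · rintro ⟨a, ha⟩ ⟨b, hb⟩ hab
          rw [hpre] at ha hb
          exact Subtype.ext (hinj ha hb (congrArg Subtype.val hab))
        · rintro ⟨w, hw⟩
          obtain ⟨x, hx⟩ := hsurj w
          exact ⟨⟨x, by rw [Set.mem_preimage, hx]; exact hw⟩, Subtype.ext hx⟩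
      exact ⟨Equiv.toHomeomorphOfContinuousOpen (Equiv.ofBijective _ hbij)
        (hσ.continuous.restrictPreimage) (hσ.isOpenMap.restrictPreimage W),
        fun x => rfl⟩
    · rw [hpre]
      refine Set.inter_eq_left.2 ?_
      intro x hx
      have hφx : φ (σ x) ∈ X₀ᶜ := by
        rw [← hpre]
        rw [Set.mem_preimage, hsec (σ x), ← hpre] at *
        exact hx
      exact ⟨σ x, hinj hφx hx (hsec (σ x))⟩
  case pos =>
    classical
    -- the fiber
    set F : Set X := σ ⁻¹' {y} with hF
    have hFX₀ : F ⊆ X₀ := by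
      intro x hx
      rw [← hX₀sat]
      exact mem_preimage.2 (by rw [mem_preimage, mem_singleton_iff] at hx; rw [hx]; exact hy)
    have hFclosed : IsClosed F := isClosed_singleton.preimage hσ.continuous
    have hFcompact : IsCompact F := hX₀c.of_isClosed_subset hFclosed hFX₀
    have hφyF : φ y ∈ F := by simp [hF, hsec y]
    -- charts
    have hcontσ : Continuous σ := hσ.continuous
    have hopenσ : IsOpenMap σ := hσ.isOpenMap
    choose e hxe hfe using hσ
    -- the fiber is finite
    have hsrcF : ∀ x ∈ F, F ∩ (e x).source ⊆ {x} := by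
      intro x hx z ⟨hzF, hzsrc⟩
      have : σ z = σ x := by
        rw [mem_preimage, mem_singleton_iff] at hzF hx; rw [hzF, hx]
      exact (e x).injOn hzsrc (hxe x) (by rw [← hfe x]; exact this)
    have hFfin : F.Finite := by
      obtain ⟨t, htF, htfin, hcover⟩ := hFcompact.elim_finite_subcover_image
        (fun x (_ : x ∈ F) => (e x).open_source) (fun z hz => mem_biUnion hz (hxe z))
      refine htfin.subset ?_
      intro z hz
      obtain ⟨x, hxt, hzsrc⟩ := mem_iUnion₂.1 (hcover hz)
      have := hsrcF x (htF hxt) ⟨hz, hzsrc⟩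
      rw [mem_singleton_iff] at this
      rwa [this]
    haveI : Fintype ↥F := hFfin.fintype
    -- totally separated: separating clopen sets
    haveI : TotallySeparatedSpace X := loc_compact_t2_tot_disc_iff_tot_sep.mp inferInstance
    have hsep : ∀ a b : X, a ≠ b → ∃ C : Set X, IsClopen C ∧ a ∈ C ∧ b ∉ C := fun a b hab =>
      (exists_isClopen_of_totally_separated hab).imp fun C ⟨h1, h2, h3⟩ => ⟨h1, h2, h3⟩
    choose c hc1 hc2 hc3 using hsep
    -- pairwise disjoint clopen neighbourhoods of fiber points
    set B : ↥F → ↥F → Set X := fun x x' =>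
      if h : (x : X) = (x' : X) then univ else c x x' h ∩ (c x' x (Ne.symm h))ᶜ with hB
    have hBclopen : ∀ x x' : ↥F, IsClopen (B x x') := by
      intro x x'
      rw [hB]
      by_cases h : (x : X) = (x' : X)
      · simp only [dif_pos h]; exact isClopen_univ
      · simp only [dif_neg h]; exact (hc1 _ _ h).inter (hc1 _ _ (Ne.symm h)).compl
    set A : ↥F → Set X := fun x => ⋂ x' : ↥F, B x x' with hA
    have hAclopen : ∀ x : ↥F, IsClopen (A x) := fun x =>
      isClopen_iInter_of_finite fun x' => hBclopen x x'
    have hxA : ∀ x : ↥F, (x : X) ∈ A x := by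
      intro x
      refine mem_iInter.2 fun x' => ?_
      rw [hB]
      by_cases h : (x : X) = (x' : X)
      · simp only [dif_pos h]; exact mem_univ _
      · simp only [dif_neg h]; exact ⟨hc2 _ _ h, hc3 _ _ (Ne.symm h)⟩
    have hAdisj : ∀ x x' : ↥F, x ≠ x' → Disjoint (A x) (A x') := by
      intro x x' hxx'
      have h : (x : X) ≠ (x' : X) := fun h => hxx' (Subtype.ext h)
      rw [Set.disjoint_left]
      intro z hz hz'
      have h1 : z ∈ B x x' := mem_iInter.1 hz x'
      have h2 : z ∈ B x' x := mem_iInter.1 hz' x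
      rw [hB] at h1 h2
      simp only [dif_neg h] at h1
      simp only [dif_neg (Ne.symm h)] at h2
      exact h1.2 h2.1
    -- compact clopen neighbourhoods inside charts
    have hVex : ∀ x : ↥F, ∃ V' : Set X, IsClopen V' ∧ IsCompact V' ∧ (x : X) ∈ V' ∧
        V' ⊆ (e x).source ∩ A x := fun x =>
      exists_isCompact_isClopen_subset ((e (x : X)).open_source.inter (hAclopen x).isOpen)
        ⟨hxe x, hxA x⟩
    choose V hVclopen hVcompact hxV hVsub using hVex
    have hVsrc : ∀ x : ↥F, V x ⊆ (e (x : X)).source := fun x =>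
      (hVsub x).trans inter_subset_left
    have hVdisj : ∀ x x' : ↥F, x ≠ x' → Disjoint (V x) (V x') := fun x x' h =>
      (hAdisj x x' h).mono ((hVsub x).trans inter_subset_right)
        ((hVsub x').trans inter_subset_right)
    -- leftover compact set and the open neighbourhood W₁ of y
    set K : Set X := X₀ \ ⋃ x : ↥F, V x with hK
    have hKcompact : IsCompact K := hX₀c.diff (isOpen_iUnion fun x => (hVclopen x).isOpen)
    set x₀ : ↥F := ⟨φ y, hφyF⟩ with hx₀
    set W₁ : Set Y := (⋂ x : ↥F, σ '' V x) ∩ (σ '' X₀ ∩ (σ '' K)ᶜ ∩ φ ⁻¹' (V x₀)) with hW₁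
    have hW₁open : IsOpen W₁ := by
      refine ((isOpen_iInter_of_finite fun x => hopenσ _ (hVclopen x).isOpen).inter
        (((hopenσ _ hX₀o).inter
          (hKcompact.image hcontσ).isClosed.isOpen_compl).inter
          ((hVclopen x₀).isOpen.preimage hφ)))
    have hσF : ∀ x : ↥F, σ (x : X) = y := fun x => x.2
    have hyW₁ : y ∈ W₁ := by
      refine ⟨mem_iInter.2 fun x => ⟨x, hxV x, hσF x⟩, ⟨hy, ?_⟩, by
        rw [mem_preimage]; exact hxV x₀⟩
      rintro ⟨z, hzK, hzy⟩
      exact hzK.2 (mem_iUnion.2 ⟨⟨z, hzy⟩, hxV ⟨z, hzy⟩⟩)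
    obtain ⟨W, hWclopen, hWcompact, hyW, hWsub⟩ := exists_isCompact_isClopen_subset hW₁open hyW₁
    have hW1 : ∀ x : ↥F, W ⊆ σ '' V x := fun x =>
      hWsub.trans (inter_subset_left.trans (iInter_subset _ x))
    have hW2 : W ⊆ σ '' X₀ := hWsub.trans (inter_subset_right.trans
      (inter_subset_left.trans inter_subset_left))
    have hW3 : W ⊆ (σ '' K)ᶜ := hWsub.trans (inter_subset_right.trans
      (inter_subset_left.trans inter_subset_right))
    have hW4 : W ⊆ φ ⁻¹' (V x₀) := hWsub.trans (inter_subset_right.trans inter_subset_right)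
    have hpreV : σ ⁻¹' W ⊆ ⋃ x : ↥F, V x := by
      intro z hz
      have hzX₀ : z ∈ X₀ := by
        rw [← hX₀sat]; exact hW2 hz
      by_contra hnot
      exact hW3 hz ⟨z, ⟨hzX₀, hnot⟩, rfl⟩
    -- enumeration of the fiber
    set n : ℕ := Fintype.card ↥F - 1 with hn
    have hcard : Fintype.card ↥F = n + 1 :=
      (Nat.succ_pred_eq_of_pos (Fintype.card_pos_iff.2 ⟨x₀⟩)).symm
    set e₁ : ↥F ≃ Fin (n + 1) := Fintype.equivFinOfCardEq hcard with he₁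
    set g : Fin (n + 1) → ↥F := fun i => e₁.symm (Equiv.swap 0 (e₁ x₀) i) with hg
    have hginj : Function.Injective g :=
      e₁.symm.injective.comp (Equiv.swap 0 (e₁ x₀)).injective
    have hgsurj : Function.Surjective g :=
      e₁.symm.surjective.comp (Equiv.swap 0 (e₁ x₀)).surjective
    have hg0 : g 0 = x₀ := by
      rw [hg]; simp [Equiv.swap_apply_left]
    set U : Fin (n + 1) → Set X := fun i => V (g i) ∩ σ ⁻¹' W with hU
    have hUcompact : ∀ i, IsCompact (U i) := fun i =>
      (hVcompact (g i)).inter_right (hWclopen.isClosed.preimage hcontσ)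
    refine ⟨W, n, U, hWclopen, hyW, ?_, ?_, ?_, ?_, fun _ => ⟨hWcompact, hUcompact⟩,
      fun h => absurd hy h⟩
    · -- pairwise disjoint
      intro i j hij
      exact (hVdisj _ _ fun h => hij (hginj h)).mono inter_subset_left inter_subset_left
    · -- union
      apply Subset.antisymm
      · intro z hz
        obtain ⟨x, hzV⟩ := mem_iUnion.1 (hpreV hz)
        obtain ⟨i, rfl⟩ := hgsurj x
        exact mem_iUnion.2 ⟨i, hzV, hz⟩
      · exact iUnion_subset fun i => inter_subset_right
    · -- homeomorphisms
      intro i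
      set x : ↥F := g i with hx
      have hbij : Function.Bijective (fun z : ↥(U i) => (⟨σ z, z.2.2⟩ : ↥W)) := by
        constructor
        · rintro ⟨a, ha⟩ ⟨b, hb⟩ hab
          have hab' : σ a = σ b := congrArg Subtype.val hab
          rw [hfe (x : X)] at hab'
          exact Subtype.ext ((e (x : X)).injOn (hVsrc x ha.1) (hVsrc x hb.1) hab')
        · rintro ⟨w, hw⟩
          obtain ⟨v, hvV, hvw⟩ := hW1 x hw
          exact ⟨⟨v, hvV, by rw [mem_preimage, hvw]; exact hw⟩, Subtype.ext hvw⟩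
      haveI : CompactSpace ↥(U i) := isCompact_iff_compactSpace.1 (hUcompact i)
      have hcont : Continuous (Equiv.ofBijective _ hbij) :=
        Continuous.subtype_mk (hcontσ.comp continuous_subtype_val) _
      exact ⟨hcont.homeoOfEquivCompactToT2, fun z => rfl⟩
    · -- intersection with the range of φ
      have hU0 : U 0 = V x₀ ∩ σ ⁻¹' W := by rw [hU]; simp [hg0]
      rw [hU0]
      apply Subset.antisymm
      · rintro z ⟨hzW, w', rfl⟩
        have hwW : w' ∈ W := by rw [mem_preimage, hsec w'] at hzW; exact hzW
        exact ⟨hW4 hwW, by rw [mem_preimage, hsec w']; exact hwW⟩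
      · rintro z ⟨hzV, hzW⟩
        refine ⟨hzW, σ z, ?_⟩
        have hwW : σ z ∈ W := hzW
        have hφz : φ (σ z) ∈ V x₀ := hW4 hwW
        have key : (e (x₀ : X)) (φ (σ z)) = (e (x₀ : X)) z := by
          rw [← hfe (x₀ : X)]; exact hsec (σ z)
        exact (e (x₀ : X)).injOn (hVsrc x₀ hφz) (hVsrc x₀ hzV) key
end

section
/- Let X and Y be td-lcsc spaces and let σ : X → Y be a surjective local homeomorphism. Let f₁, f₂ ∈ C_c(X, ℕ). Then the following are equivalent: (a) there exists F ∈ C_c(R(σ), ℤ) such that for every u ∈ X, f₁(u) − f₂(u) = Σ_{v : σ(v) = σ(u)} (F(v,u) − F(u,v)) (i.e. f₁ and f₂ are equivalent in H₀(R(σ))); (b) for every x ∈ X, Σ_{u : σ(u) = σ(x)} f₁(u) = Σ_{u : σ(u) = σ(x)} f₂(u). -/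
open Set Function Classical
set_option linter.unusedSectionVars false
set_option maxHeartbeats 1000000

section H0Aux

variable {X Y : Type*} [TopologicalSpace X] [TopologicalSpace Y] [T2Space X] [T2Space Y]

theorem fiber_inter_compact_finite {σ : X → Y} (hσ : IsLocalHomeomorph σ)
    {K : Set X} (hK : IsCompact K) (y : Y) : {x | x ∈ K ∧ σ x = y}.Finite := by
  classical
  have h : ∀ x : X, ∃ U : Set X, IsOpen U ∧ x ∈ U ∧ Set.InjOn σ U := by
    intro x
    obtain ⟨e, hx, rfl⟩ := hσ x
    exact ⟨e.source, e.open_source, hx, e.injOn⟩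
  choose U hUo hUx hUinj using h
  obtain ⟨t, ht⟩ := hK.elim_nhds_subcover U (fun x _ => (hUo x).mem_nhds (hUx x))
  have hsub : {x | x ∈ K ∧ σ x = y} ⊆ ⋃ i ∈ t, {x | x ∈ U i ∧ σ x = y} := by
    intro x hx
    have := ht.2 hx.1
    simp only [mem_iUnion] at this ⊢
    obtain ⟨i, hi, hxi⟩ := this
    exact ⟨i, hi, hxi, hx.2⟩
  refine Set.Finite.subset (Set.Finite.biUnion t.finite_toSet fun i _ => ?_) hsub
  apply Set.Subsingleton.finite
  intro a ha b hb
  exact hUinj i ha.1 hb.1 (ha.2.trans hb.2.symm)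

theorem fsum_eq_finset {s : Set X} {f : X → ℤ} {t : Finset X} (hts : ↑t ⊆ s)
    (h1 : ∀ u ∈ s, f u ≠ 0 → u ∈ t) : ∑ᶠ u ∈ s, f u = ∑ u ∈ t, f u := by
  apply finsum_mem_eq_sum_of_inter_support_eq
  ext u
  constructor
  · rintro ⟨hu, hsupp⟩; exact ⟨h1 u hu hsupp, hsupp⟩
  · rintro ⟨hu, hsupp⟩; exact ⟨hts hu, hsupp⟩

variable (σ : X → Y)

/-- Extension of a function on `R(σ)` by zero. -/
noncomputable def extF (F : {p : X × X // σ p.1 = σ p.2} → ℤ) : X × X → ℤ :=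
  fun p => if h : σ p.1 = σ p.2 then F ⟨p, h⟩ else 0

theorem extF_spec (F : {p : X × X // σ p.1 = σ p.2} → ℤ) {p : X × X} (h : σ p.1 = σ p.2) :
    extF σ F p = F ⟨p, h⟩ := dif_pos h

/-- The key rewriting: the statement's double finsum as a set-finsum of extensions. -/
theorem cob_eq (F : {p : X × X // σ p.1 = σ p.2} → ℤ) (u : X) :
    (∑ᶠ (v : X) (h : σ v = σ u), (F ⟨(v, u), h⟩ - F ⟨(u, v), h.symm⟩)) =
    ∑ᶠ v ∈ {v | σ v = σ u}, (extF σ F (v, u) - extF σ F (u, v)) := by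
  apply finsum_congr
  intro v
  rw [finsum_eq_dif, finsum_eq_dif]
  simp only [mem_setOf_eq]
  by_cases h : σ v = σ u
  · rw [dif_pos h, dif_pos h, extF_spec σ F (p := (v, u)) h, extF_spec σ F (p := (u, v)) h.symm]
  · rw [dif_neg h, dif_neg h]

def IsCob (g : X → ℤ) : Prop :=
  ∃ F : {p : X × X // σ p.1 = σ p.2} → ℤ,
    Continuous F ∧ HasCompactSupport F ∧
    ∀ u : X, g u = ∑ᶠ (v : X) (h : σ v = σ u), (F ⟨(v, u), h⟩ - F ⟨(u, v), h.symm⟩)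

variable {σ}

/-- compact set in `X` containing both coordinates of the support of `F`. -/
theorem exists_supp_compact (F : {p : X × X // σ p.1 = σ p.2} → ℤ)
    (hFc : HasCompactSupport F) :
    ∃ K : Set X, IsCompact K ∧
      ∀ p : {p : X × X // σ p.1 = σ p.2}, F p ≠ 0 → p.val.1 ∈ K ∧ p.val.2 ∈ K := by
  refine ⟨(fun q : {p : X × X // σ p.1 = σ p.2} => q.val.1) '' tsupport F ∪
      (fun q : {p : X × X // σ p.1 = σ p.2} => q.val.2) '' tsupport F, ?_, ?_⟩
  · exact (hFc.image (continuous_fst.comp continuous_subtype_val)).union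
      (hFc.image (continuous_snd.comp continuous_subtype_val))
  · intro p hp
    have hp' : p ∈ tsupport F := subset_tsupport F hp
    exact ⟨Or.inl ⟨p, hp', rfl⟩, Or.inr ⟨p, hp', rfl⟩⟩

theorem term_support {F : {p : X × X // σ p.1 = σ p.2} → ℤ} {K : Set X}
    (hK : ∀ p : {p : X × X // σ p.1 = σ p.2}, F p ≠ 0 → p.val.1 ∈ K ∧ p.val.2 ∈ K)
    {v u : X} (h : extF σ F (v, u) - extF σ F (u, v) ≠ 0) : v ∈ K ∧ u ∈ K := by
  rcases sub_ne_zero.mp (by simpa using h) with h'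
  by_cases h1 : extF σ F (v, u) = 0
  · have h2 : extF σ F (u, v) ≠ 0 := fun hz => h (by simp [h1, hz])
    unfold extF at h2
    split at h2
    · have := hK _ h2
      exact ⟨this.2, this.1⟩
    · exact absurd rfl h2
  · unfold extF at h1
    split at h1
    · have := hK _ h1
      exact ⟨this.1, this.2⟩
    · exact absurd rfl h1

/-- The statement's sum, as a finset sum. -/
theorem cob_eq_sum (hσ : IsLocalHomeomorph σ) (F : {p : X × X // σ p.1 = σ p.2} → ℤ)
    {K : Set X} (hKc : IsCompact K)
    (hK : ∀ p : {p : X × X // σ p.1 = σ p.2}, F p ≠ 0 → p.val.1 ∈ K ∧ p.val.2 ∈ K)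
    (u : X) {t : Finset X} (ht1 : ∀ v ∈ t, σ v = σ u)
    (ht2 : ∀ v, v ∈ K → σ v = σ u → v ∈ t) :
    (∑ᶠ (v : X) (h : σ v = σ u), (F ⟨(v, u), h⟩ - F ⟨(u, v), h.symm⟩)) =
    ∑ v ∈ t, (extF σ F (v, u) - extF σ F (u, v)) := by
  rw [cob_eq]
  apply fsum_eq_finset (fun v hv => ht1 v hv)
  intro v hv hne
  exact ht2 v (term_support hK hne).1 hv


theorem IsCob.zero : IsCob σ (fun _ => 0) := by
  refine ⟨fun _ => 0, continuous_const, HasCompactSupport.intro isCompact_empty (by simp), ?_⟩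
  intro u
  simp

theorem IsCob.add (hσ : IsLocalHomeomorph σ) {g₁ g₂ : X → ℤ} (h₁ : IsCob σ g₁)
    (h₂ : IsCob σ g₂) : IsCob σ (fun u => g₁ u + g₂ u) := by
  obtain ⟨F₁, hF₁cont, hF₁c, hF₁⟩ := h₁
  obtain ⟨F₂, hF₂cont, hF₂c, hF₂⟩ := h₂
  obtain ⟨K₁, hK₁c, hK₁⟩ := exists_supp_compact F₁ hF₁c
  obtain ⟨K₂, hK₂c, hK₂⟩ := exists_supp_compact F₂ hF₂c
  refine ⟨F₁ + F₂, hF₁cont.add hF₂cont, hF₁c.add hF₂c, ?_⟩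
  intro u
  have hKc : IsCompact (K₁ ∪ K₂) := hK₁c.union hK₂c
  set t : Finset X := (fiber_inter_compact_finite hσ hKc (σ u)).toFinset with ht
  have htmem : ∀ v, v ∈ t ↔ (v ∈ K₁ ∪ K₂ ∧ σ v = σ u) := by
    intro v; rw [ht, Set.Finite.mem_toFinset]; rfl
  have ht1 : ∀ v ∈ t, σ v = σ u := fun v hv => ((htmem v).1 hv).2
  have hK1' : ∀ p : {p : X × X // σ p.1 = σ p.2}, F₁ p ≠ 0 →
      p.val.1 ∈ K₁ ∪ K₂ ∧ p.val.2 ∈ K₁ ∪ K₂ :=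
    fun p hp => ⟨Or.inl (hK₁ p hp).1, Or.inl (hK₁ p hp).2⟩
  have hK2' : ∀ p : {p : X × X // σ p.1 = σ p.2}, F₂ p ≠ 0 →
      p.val.1 ∈ K₁ ∪ K₂ ∧ p.val.2 ∈ K₁ ∪ K₂ :=
    fun p hp => ⟨Or.inr (hK₂ p hp).1, Or.inr (hK₂ p hp).2⟩
  have hK12 : ∀ p : {p : X × X // σ p.1 = σ p.2}, (F₁ + F₂) p ≠ 0 →
      p.val.1 ∈ K₁ ∪ K₂ ∧ p.val.2 ∈ K₁ ∪ K₂ := by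
    intro p hp
    by_cases h1 : F₁ p = 0
    · have h2 : F₂ p ≠ 0 := by
        intro h2; exact hp (by simp [Pi.add_apply, h1, h2])
      exact hK2' p h2
    · exact hK1' p h1
  have ht2 : ∀ v, v ∈ K₁ ∪ K₂ → σ v = σ u → v ∈ t :=
    fun v hv hσv => (htmem v).2 ⟨hv, hσv⟩
  show g₁ u + g₂ u = _
  rw [cob_eq_sum hσ (F₁ + F₂) hKc hK12 u ht1 ht2,
    hF₁ u, hF₂ u, cob_eq_sum hσ F₁ hKc hK1' u ht1 ht2,
    cob_eq_sum hσ F₂ hKc hK2' u ht1 ht2, ← Finset.sum_add_distrib]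
  apply Finset.sum_congr rfl
  intro v _
  have hext : ∀ p : X × X, extF σ (F₁ + F₂) p = extF σ F₁ p + extF σ F₂ p := by
    intro p; unfold extF; split <;> simp
  rw [hext, hext]
  ring

theorem IsCob.zsmul (hσ : IsLocalHomeomorph σ) (c : ℤ) {g : X → ℤ} (h : IsCob σ g) :
    IsCob σ (fun u => c * g u) := by
  obtain ⟨F, hFcont, hFc, hF⟩ := h
  obtain ⟨K, hKc, hK⟩ := exists_supp_compact F hFc
  refine ⟨fun p => c * F p, continuous_const.mul hFcont, ?_, ?_⟩
  · apply HasCompactSupport.intro hFc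
    intro p hp
    rw [image_eq_zero_of_notMem_tsupport hp, mul_zero]
  · intro u
    set t : Finset X := (fiber_inter_compact_finite hσ hKc (σ u)).toFinset with ht
    have htmem : ∀ v, v ∈ t ↔ (v ∈ K ∧ σ v = σ u) := by
      intro v; rw [ht, Set.Finite.mem_toFinset]; rfl
    have ht1 : ∀ v ∈ t, σ v = σ u := fun v hv => ((htmem v).1 hv).2
    have ht2 : ∀ v, v ∈ K → σ v = σ u → v ∈ t := fun v hv hσv => (htmem v).2 ⟨hv, hσv⟩
    have hKc' : ∀ p : {p : X × X // σ p.1 = σ p.2}, (fun p => c * F p) p ≠ 0 →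
        p.val.1 ∈ K ∧ p.val.2 ∈ K := by
      intro p hp
      exact hK p (fun h0 => hp (by simp [h0]))
    show c * g u = _
    rw [cob_eq_sum hσ _ hKc hKc' u ht1 ht2, hF u, cob_eq_sum hσ F hKc hK u ht1 ht2,
      Finset.mul_sum]
    apply Finset.sum_congr rfl
    intro v _
    have hext : ∀ p : X × X, extF σ (fun p => c * F p) p = c * extF σ F p := by
      intro p; unfold extF; split <;> simp
    rw [hext, hext]
    ring

theorem IsCob.finsetSum (hσ : IsLocalHomeomorph σ) {ι : Type*} (t : Finset ι)
    (g : ι → X → ℤ) (h : ∀ i ∈ t, IsCob σ (g i)) :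
    IsCob σ (fun u => ∑ i ∈ t, g i u) := by
  classical
  revert h
  induction t using Finset.induction_on with
  | empty => intro _; simpa using IsCob.zero (σ := σ)
  | @insert a s ha ih =>
    intro h
    simp only [Finset.sum_insert ha]
    exact IsCob.add hσ (h _ (Finset.mem_insert_self _ _))
      (ih fun i hi => h i (Finset.mem_insert_of_mem hi))

theorem IsCob.fiberSum_eq_zero (hσ : IsLocalHomeomorph σ) {g : X → ℤ} (hg : IsCob σ g)
    (x : X) : ∑ᶠ u ∈ {u | σ u = σ x}, g u = 0 := by
  obtain ⟨F, _, hFc, hF⟩ := hg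
  obtain ⟨K, hKc, hK⟩ := exists_supp_compact F hFc
  set t : Finset X := (fiber_inter_compact_finite hσ hKc (σ x)).toFinset with ht
  have htmem : ∀ v, v ∈ t ↔ (v ∈ K ∧ σ v = σ x) := by
    intro v; rw [ht, Set.Finite.mem_toFinset]; rfl
  have key : ∀ u, σ u = σ x → g u = ∑ v ∈ t, (extF σ F (v, u) - extF σ F (u, v)) := by
    intro u hu
    rw [hF u]
    apply cob_eq_sum hσ F hKc hK u
    · intro v hv; rw [((htmem v).1 hv).2, hu]
    · intro v hv hσv; exact (htmem v).2 ⟨hv, hσv.trans hu⟩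
  have hsum : ∑ᶠ u ∈ {u | σ u = σ x}, g u = ∑ u ∈ t, g u := by
    apply fsum_eq_finset
    · intro v hv; exact ((htmem v).1 hv).2
    · intro u hu hne
      rw [key u hu] at hne
      obtain ⟨v, _, hv⟩ := Finset.exists_ne_zero_of_sum_ne_zero hne
      exact (htmem u).2 ⟨(term_support hK hv).2, hu⟩
  rw [hsum]
  have : ∀ u ∈ t, g u = ∑ v ∈ t, (extF σ F (v, u) - extF σ F (u, v)) :=
    fun u hu => key u ((htmem u).1 hu).2
  rw [Finset.sum_congr rfl this]
  have heq : ∑ u ∈ t, ∑ v ∈ t, (extF σ F (v, u) - extF σ F (u, v))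
      = (∑ u ∈ t, ∑ v ∈ t, extF σ F (v, u)) - ∑ u ∈ t, ∑ v ∈ t, extF σ F (u, v) := by
    simp [Finset.sum_sub_distrib]
  rw [heq, Finset.sum_comm]
  exact sub_self _


theorem continuous_indicator_clopen {Z : Type*} [TopologicalSpace Z] {D : Set Z}
    (hD : IsClopen D) : Continuous (fun z => if z ∈ D then (1 : ℤ) else 0) := by
  have heq : (fun z => if z ∈ D then (1 : ℤ) else 0) =
      (fun b : Bool => if b then (1 : ℤ) else 0) ∘ D.boolIndicator := by
    funext z
    by_cases h : z ∈ D <;> simp [Set.boolIndicator, h]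
  rw [heq]
  exact continuous_of_discreteTopology.comp ((continuous_boolIndicator_iff_isClopen D).2 hD)

/-- `1_A - 1_B` is a coboundary when `σ` is injective on compact open `A`, `B`
with `σ '' A = σ '' B`. -/
theorem isCob_pair (hσ : IsLocalHomeomorph σ) {A B : Set X}
    (hAc : IsCompact A) (hAo : IsOpen A) (hAinj : Set.InjOn σ A)
    (hBc : IsCompact B) (hBo : IsOpen B) (hBinj : Set.InjOn σ B)
    (himg : σ '' A = σ '' B) :
    IsCob σ (fun u => (if u ∈ A then (1 : ℤ) else 0) - (if u ∈ B then 1 else 0)) := by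
  classical
  have hRclosed : IsClosed {p : X × X | σ p.1 = σ p.2} :=
    isClosed_eq (hσ.continuous.comp continuous_fst) (hσ.continuous.comp continuous_snd)
  set D : Set {p : X × X // σ p.1 = σ p.2} := Subtype.val ⁻¹' (B ×ˢ A) with hD
  have hDclopen : IsClopen D := by
    constructor
    · exact IsClosed.preimage continuous_subtype_val
        ((hBc.isClosed.prod hAc.isClosed))
    · exact IsOpen.preimage continuous_subtype_val (hBo.prod hAo)
  have hDcompact : IsCompact D :=
    hRclosed.isClosedEmbedding_subtypeVal.isCompact_preimage (hBc.prod hAc)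
  set F : {p : X × X // σ p.1 = σ p.2} → ℤ := fun p => if p ∈ D then 1 else 0 with hFdef
  have hFmem : ∀ p : {p : X × X // σ p.1 = σ p.2},
      F p = if p.val.1 ∈ B ∧ p.val.2 ∈ A then 1 else 0 := by
    intro p
    simp only [hFdef, hD, Set.mem_preimage, Set.mem_prod]
  refine ⟨F, continuous_indicator_clopen hDclopen, ?_, ?_⟩
  · apply HasCompactSupport.intro hDcompact
    intro p hp
    simp only [hFdef, if_neg hp]
  · intro u
    have hK : ∀ p : {p : X × X // σ p.1 = σ p.2}, F p ≠ 0 →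
        p.val.1 ∈ A ∪ B ∧ p.val.2 ∈ A ∪ B := by
      intro p hp
      rw [hFmem] at hp
      by_cases h : p.val.1 ∈ B ∧ p.val.2 ∈ A
      · exact ⟨Or.inr h.1, Or.inl h.2⟩
      · exact absurd (if_neg h) hp
    set t : Finset X := (fiber_inter_compact_finite hσ (hAc.union hBc) (σ u)).toFinset with htd
    have htmem : ∀ v, v ∈ t ↔ (v ∈ A ∪ B ∧ σ v = σ u) := by
      intro v; rw [htd, Set.Finite.mem_toFinset]; rfl
    rw [cob_eq_sum hσ F (hAc.union hBc) hK u (fun v hv => ((htmem v).1 hv).2)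
      (fun v hv hσv => (htmem v).2 ⟨hv, hσv⟩)]
    have hterm : ∀ v ∈ t, (extF σ F (v, u) - extF σ F (u, v)) =
        (if v ∈ B ∧ u ∈ A then (1 : ℤ) else 0) - (if u ∈ B ∧ v ∈ A then 1 else 0) := by
      intro v hv
      have h : σ v = σ u := ((htmem v).1 hv).2
      rw [extF_spec σ F (p := (v, u)) h, extF_spec σ F (p := (u, v)) h.symm, hFmem, hFmem]
    rw [Finset.sum_congr rfl hterm, Finset.sum_sub_distrib]
    have hsum1 : (∑ v ∈ t, if v ∈ B ∧ u ∈ A then (1 : ℤ) else 0) =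
        if u ∈ A then 1 else 0 := by
      by_cases hu : u ∈ A
      · obtain ⟨b, hbB, hb⟩ : ∃ b ∈ B, σ b = σ u := by
          have : σ u ∈ σ '' B := himg ▸ ⟨u, hu, rfl⟩
          obtain ⟨b, hbB, hb⟩ := this
          exact ⟨b, hbB, hb⟩
        have h1 : (∑ v ∈ t, if v ∈ B ∧ u ∈ A then (1 : ℤ) else 0) =
            if b ∈ B ∧ u ∈ A then 1 else 0 := by
          apply Finset.sum_eq_single_of_mem b ((htmem b).2 ⟨Or.inr hbB, hb⟩)
          intro v hv hne
          rw [if_neg]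
          rintro ⟨hvB, -⟩
          exact hne (hBinj hvB hbB (((htmem v).1 hv).2.trans hb.symm))
        rw [h1, if_pos ⟨hbB, hu⟩, if_pos hu]
      · rw [if_neg hu]
        apply Finset.sum_eq_zero
        intro v _
        rw [if_neg]
        rintro ⟨-, h⟩; exact hu h
    have hsum2 : (∑ v ∈ t, if u ∈ B ∧ v ∈ A then (1 : ℤ) else 0) =
        if u ∈ B then 1 else 0 := by
      by_cases hu : u ∈ B
      · obtain ⟨a, haA, ha⟩ : ∃ a ∈ A, σ a = σ u := by
          have : σ u ∈ σ '' A := by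
            rw [himg]; exact ⟨u, hu, rfl⟩
          obtain ⟨a, haA, ha⟩ := this
          exact ⟨a, haA, ha⟩
        have h1 : (∑ v ∈ t, if u ∈ B ∧ v ∈ A then (1 : ℤ) else 0) =
            if u ∈ B ∧ a ∈ A then 1 else 0 := by
          apply Finset.sum_eq_single_of_mem a ((htmem a).2 ⟨Or.inl haA, ha⟩)
          intro v hv hne
          rw [if_neg]
          rintro ⟨-, hvA⟩
          exact hne (hAinj hvA haA (((htmem v).1 hv).2.trans ha.symm))
        rw [h1, if_pos ⟨hu, haA⟩, if_pos hu]
      · rw [if_neg hu]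
        apply Finset.sum_eq_zero
        intro v _
        rw [if_neg]
        rintro ⟨h, -⟩; exact hu h
    rw [hsum1, hsum2]


/-- Decompose a compactly supported continuous integer function into a combination of
indicators of disjoint compact open sets on each of which `σ` is injective. -/
theorem exists_decomposition [LocallyCompactSpace X] [TotallyDisconnectedSpace X]
    (hσ : IsLocalHomeomorph σ) {g : X → ℤ} (hg : Continuous g) (hgc : HasCompactSupport g) :
    ∃ (n : ℕ) (A : Fin n → Set X) (c : Fin n → ℤ),
      (∀ i, IsCompact (A i)) ∧ (∀ i, IsOpen (A i)) ∧ (∀ i, IsClosed (A i)) ∧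
      (∀ i, Set.InjOn σ (A i)) ∧
      (∀ i j, i ≠ j → A i ∩ A j = ∅) ∧
      (∀ u, g u = ∑ i, c i * (if u ∈ A i then 1 else 0)) := by
  classical
  have hV : ∀ x : X, ∃ V : Set X, IsCompact V ∧ IsOpen V ∧ IsClosed V ∧ x ∈ V ∧
      Set.InjOn σ V ∧ ∀ u ∈ V, g u = g x := by
    intro x
    obtain ⟨e, hx, heq⟩ := hσ x
    have hWopen : IsOpen (e.source ∩ g ⁻¹' {g x}) :=
      e.open_source.inter (IsOpen.preimage hg (isOpen_discrete _))
    have hxW : x ∈ e.source ∩ g ⁻¹' {g x} := ⟨hx, rfl⟩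
    obtain ⟨K, hKc, hxK, hKW⟩ := exists_compact_subset hWopen hxW
    obtain ⟨V, hVclopen, hxV, hVsub⟩ :=
      loc_compact_Haus_tot_disc_of_zero_dim.exists_subset_of_mem_open hxK isOpen_interior
    have hVK : V ⊆ K := hVsub.trans interior_subset
    refine ⟨V, hKc.of_isClosed_subset hVclopen.1 hVK, hVclopen.2, hVclopen.1, hxV, ?_, ?_⟩
    · intro a ha b hb hab
      have ha' : a ∈ e.source := (hKW (hVK ha)).1
      have hb' : b ∈ e.source := (hKW (hVK hb)).1
      apply e.injOn ha' hb'
      rw [← heq] at *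
      exact hab
    · intro u hu
      exact (hKW (hVK hu)).2
  choose V hVc hVo hVcl hVx hVinj hVg using hV
  have hgK : IsCompact (tsupport g) := hgc
  obtain ⟨t, _, htcov⟩ := hgK.elim_nhds_subcover V (fun x _ => (hVo x).mem_nhds (hVx x))
  set l : List X := t.toList with hl
  set n : ℕ := l.length with hn
  set pt : Fin n → X := fun i => l.get i with hpt
  set A : Fin n → Set X := fun i => V (pt i) \ ⋃ j ∈ {j : Fin n | j < i}, V (pt j) with hA
  have hUo : ∀ i : Fin n, IsOpen (⋃ j ∈ {j : Fin n | j < i}, V (pt j)) :=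
    fun i => isOpen_biUnion fun j _ => hVo (pt j)
  have hUcl : ∀ i : Fin n, IsClosed (⋃ j ∈ {j : Fin n | j < i}, V (pt j)) :=
    fun i => (Set.toFinite _).isClosed_biUnion fun j _ => hVcl (pt j)
  have hAsub : ∀ i, A i ⊆ V (pt i) := fun i => Set.diff_subset
  refine ⟨n, A, fun i => g (pt i), ?_, ?_, ?_, ?_, ?_, ?_⟩
  · intro i
    show IsCompact (V (pt i) \ ⋃ j ∈ {j : Fin n | j < i}, V (pt j))
    rw [Set.diff_eq]
    exact (hVc (pt i)).inter_right (hUo i).isClosed_compl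
  · intro i
    show IsOpen (V (pt i) \ ⋃ j ∈ {j : Fin n | j < i}, V (pt j))
    rw [Set.diff_eq]
    exact (hVo (pt i)).inter (hUcl i).isOpen_compl
  · intro i
    show IsClosed (V (pt i) \ ⋃ j ∈ {j : Fin n | j < i}, V (pt j))
    rw [Set.diff_eq]
    exact (hVcl (pt i)).inter (hUo i).isClosed_compl
  · exact fun i => (hVinj (pt i)).mono (hAsub i)
  · have key : ∀ i j : Fin n, i < j → A i ∩ A j = ∅ := by
      intro i j hij
      ext x
      simp only [Set.mem_inter_iff, Set.mem_empty_iff_false, iff_false, not_and]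
      intro hxi hxj
      exact hxj.2 (Set.mem_biUnion hij (hAsub i hxi))
    intro i j hij
    rcases lt_or_gt_of_ne hij with h | h
    · exact key i j h
    · rw [Set.inter_comm]; exact key j i h
  · intro u
    set s : Finset (Fin n) := Finset.univ.filter (fun j : Fin n => u ∈ V (pt j)) with hs
    by_cases hne : s.Nonempty
    · set i₀ : Fin n := s.min' hne with hi₀
      have hu0 : u ∈ V (pt i₀) := (Finset.mem_filter.1 (s.min'_mem hne)).2
      have huA : u ∈ A i₀ := by
        refine ⟨hu0, ?_⟩
        intro hmem
        simp only [Set.mem_iUnion, Set.mem_setOf_eq] at hmem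
        obtain ⟨j, hji, huj⟩ := hmem
        exact absurd (s.min'_le j (Finset.mem_filter.2 ⟨Finset.mem_univ _, huj⟩))
          (not_le.2 hji)
      rw [Finset.sum_eq_single_of_mem i₀ (Finset.mem_univ _)]
      · rw [if_pos huA, mul_one]
        exact hVg (pt i₀) u hu0
      · intro i _ hne'
        rw [if_neg, mul_zero]
        intro hiA
        have hiS : i ∈ s := Finset.mem_filter.2 ⟨Finset.mem_univ _, hAsub i hiA⟩
        have h1 : i₀ < i := lt_of_le_of_ne (s.min'_le i hiS) (Ne.symm hne')
        exact hiA.2 (Set.mem_biUnion h1 hu0)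
    · have hnotin : ∀ i : Fin n, u ∉ A i := by
        intro i hiA
        exact hne ⟨i, Finset.mem_filter.2 ⟨Finset.mem_univ _, hAsub i hiA⟩⟩
      have hg0 : g u = 0 := by
        apply image_eq_zero_of_notMem_tsupport
        intro hu
        have := htcov hu
        simp only [Set.mem_iUnion] at this
        obtain ⟨x, hxt, hux⟩ := this
        obtain ⟨i, hi⟩ := List.mem_iff_get.mp (Finset.mem_toList.mpr hxt)
        refine hne ⟨i, Finset.mem_filter.2 ⟨Finset.mem_univ _, ?_⟩⟩
        show u ∈ V (l.get i)
        rw [hi]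
        exact hux
      rw [hg0]
      symm
      apply Finset.sum_eq_zero
      intro i _
      rw [if_neg (hnotin i), mul_zero]


theorem IsCob.congr {g₁ g₂ : X → ℤ} (h : ∀ u, g₁ u = g₂ u) (hg : IsCob σ g₁) :
    IsCob σ g₂ := by
  have : g₁ = g₂ := funext h
  rwa [this] at hg

/-- Fiber sums of a decomposed function. -/
theorem fiberSum_decomp (hσ : IsLocalHomeomorph σ) {n : ℕ} {A : Fin n → Set X}
    {c : Fin n → ℤ} {g : X → ℤ}
    (hAc : ∀ i, IsCompact (A i)) (hAinj : ∀ i, Set.InjOn σ (A i))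
    (hgdef : ∀ u, g u = ∑ i, c i * (if u ∈ A i then 1 else 0)) (y : Y) :
    ∑ᶠ u ∈ {u | σ u = y}, g u = ∑ i, c i * (if y ∈ σ '' A i then 1 else 0) := by
  classical
  have hK : IsCompact (⋃ i, A i) := isCompact_iUnion hAc
  set t : Finset X := (fiber_inter_compact_finite hσ hK y).toFinset with htd
  have htmem : ∀ v, v ∈ t ↔ (v ∈ ⋃ i, A i ∧ σ v = y) := by
    intro v; rw [htd, Set.Finite.mem_toFinset]; rfl
  have h1 : ∑ᶠ u ∈ {u | σ u = y}, g u = ∑ u ∈ t, g u := by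
    apply fsum_eq_finset (fun v hv => ((htmem v).1 hv).2)
    intro u hu hne
    rw [hgdef] at hne
    obtain ⟨i, _, hi⟩ := Finset.exists_ne_zero_of_sum_ne_zero hne
    have : u ∈ A i := by
      by_contra h
      rw [if_neg h, mul_zero] at hi
      exact hi rfl
    exact (htmem u).2 ⟨Set.mem_iUnion.2 ⟨i, this⟩, hu⟩
  rw [h1]
  have h2 : ∑ u ∈ t, g u = ∑ i, ∑ u ∈ t, c i * (if u ∈ A i then 1 else 0) := by
    rw [← Finset.sum_comm]
    exact Finset.sum_congr rfl fun u _ => hgdef u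
  rw [h2]
  apply Finset.sum_congr rfl
  intro i _
  by_cases hy : y ∈ σ '' A i
  · obtain ⟨a, haA, ha⟩ := hy
    have h3 : (∑ u ∈ t, c i * (if u ∈ A i then 1 else 0)) =
        c i * (if a ∈ A i then 1 else 0) := by
      apply Finset.sum_eq_single_of_mem a ((htmem a).2 ⟨Set.mem_iUnion.2 ⟨i, haA⟩, ha⟩)
      intro v hv hne
      rw [if_neg, mul_zero]
      intro hvA
      exact hne (hAinj i hvA haA (((htmem v).1 hv).2.trans ha.symm))
    rw [h3, if_pos haA, if_pos ⟨a, haA, ha⟩]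
  · rw [if_neg hy, mul_zero]
    apply Finset.sum_eq_zero
    intro v hv
    rw [if_neg, mul_zero]
    intro hvA
    exact hy ⟨v, hvA, ((htmem v).1 hv).2⟩

/-- The hard direction: vanishing fiber sums imply being a coboundary. -/
theorem isCob_of_fiberSum_zero [LocallyCompactSpace X] [TotallyDisconnectedSpace X]
    (hσ : IsLocalHomeomorph σ) {g : X → ℤ}
    (hg : Continuous g) (hgc : HasCompactSupport g)
    (hz : ∀ y : Y, ∑ᶠ u ∈ {u | σ u = y}, g u = 0) : IsCob σ g := by
  classical
  obtain ⟨n, A, c, hAc, hAo, hAcl, hAinj, hAdisj, hgdef⟩ := exists_decomposition hσ hg hgc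
  -- images are compact open (hence clopen)
  have himgc : ∀ i, IsCompact (σ '' A i) := fun i => (hAc i).image hσ.continuous
  have himgo : ∀ i, IsOpen (σ '' A i) := fun i => hσ.isOpenMap _ (hAo i)
  have himgcl : ∀ i, IsClosed (σ '' A i) := fun i => (himgc i).isClosed
  -- atoms
  set C : Finset (Fin n) → Set Y := fun S =>
    (⋂ i ∈ S, σ '' A i) ∩ (⋂ i ∈ Sᶜ, (σ '' A i)ᶜ) with hC
  have hCmem : ∀ (S : Finset (Fin n)) (y : Y),
      y ∈ C S ↔ ∀ i : Fin n, (i ∈ S ↔ y ∈ σ '' A i) := by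
    intro S y
    rw [hC]
    simp only [Set.mem_inter_iff, Set.mem_iInter, Set.mem_compl_iff, Finset.mem_compl]
    constructor
    · rintro ⟨h1, h2⟩ i
      constructor
      · exact h1 i
      · intro hy
        by_contra hi
        exact h2 i hi hy
    · intro h
      exact ⟨fun i hi => (h i).1 hi, fun i hi hy => hi ((h i).2 hy)⟩
  have hCopen : ∀ S, IsOpen (C S) := by
    intro S
    apply IsOpen.inter
    · exact isOpen_biInter_finset fun i _ => himgo i
    · exact isOpen_biInter_finset fun i _ => (himgcl i).isOpen_compl
  have hCclosed : ∀ S, IsClosed (C S) := by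
    intro S
    apply IsClosed.inter
    · exact isClosed_biInter fun i _ => himgcl i
    · exact isClosed_biInter fun i _ => (himgo i).isClosed_compl
  -- refined pieces
  set B : Fin n → Finset (Fin n) → Set X := fun i S => A i ∩ σ ⁻¹' (C S) with hB
  have hBc : ∀ i S, IsCompact (B i S) :=
    fun i S => (hAc i).inter_right ((hCclosed S).preimage hσ.continuous)
  have hBo : ∀ i S, IsOpen (B i S) :=
    fun i S => (hAo i).inter ((hCopen S).preimage hσ.continuous)
  have hBinj : ∀ i S, Set.InjOn σ (B i S) := fun i S => (hAinj i).mono Set.inter_subset_left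
  have hBimg : ∀ (i : Fin n) (S : Finset (Fin n)), i ∈ S → σ '' B i S = C S := by
    intro i S hiS
    rw [hB]
    show σ '' (A i ∩ σ ⁻¹' C S) = C S
    rw [Set.image_inter_preimage]
    apply Set.inter_eq_self_of_subset_right
    intro y hy
    exact ((hCmem S y).1 hy i).1 hiS
  have hBempty : ∀ (i : Fin n) (S : Finset (Fin n)), i ∉ S → B i S = ∅ := by
    intro i S hiS
    rw [hB]
    ext u
    simp only [Set.mem_inter_iff, Set.mem_preimage, Set.mem_empty_iff_false, iff_false, not_and]
    intro huA hu
    exact hiS (((hCmem S (σ u)).1 hu i).2 ⟨u, huA, rfl⟩)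
  -- every u in A i lies in exactly one B i S
  have hsplit : ∀ (i : Fin n) (u : X),
      (if u ∈ A i then (1 : ℤ) else 0) =
      ∑ S : Finset (Fin n), (if u ∈ B i S then (1 : ℤ) else 0) := by
    intro i u
    by_cases hu : u ∈ A i
    · rw [if_pos hu]
      set S₀ : Finset (Fin n) := Finset.univ.filter (fun j => σ u ∈ σ '' A j) with hS₀
      have huB : u ∈ B i S₀ := by
        refine ⟨hu, ?_⟩
        show σ u ∈ C S₀
        rw [hCmem]
        intro j
        simp [hS₀]
      have hsingle : (∑ S : Finset (Fin n), (if u ∈ B i S then (1 : ℤ) else 0)) =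
          (if u ∈ B i S₀ then (1 : ℤ) else 0) := by
        apply Finset.sum_eq_single_of_mem S₀ (Finset.mem_univ _)
        intro S _ hne
        rw [if_neg]
        rintro ⟨-, huC⟩
        apply hne
        have h1 := (hCmem S (σ u)).1 huC
        ext j
        rw [h1 j]
        simp [hS₀]
      rw [hsingle, if_pos huB]
    · rw [if_neg hu]
      symm
      apply Finset.sum_eq_zero
      intro S _
      rw [if_neg]
      rintro ⟨h, -⟩
      exact hu h
  -- the coefficient sums vanish on nonempty atoms
  have hcoeff : ∀ S : Finset (Fin n), (C S).Nonempty → ∑ i ∈ S, c i = 0 := by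
    intro S ⟨y, hy⟩
    have h0 := hz y
    rw [fiberSum_decomp hσ hAc hAinj hgdef y] at h0
    have : ∑ i, c i * (if y ∈ σ '' A i then 1 else 0) = ∑ i ∈ S, c i := by
      rw [← Finset.sum_filter_add_sum_filter_not Finset.univ (· ∈ S)]
      have e1 : ∑ i ∈ Finset.univ.filter (· ∈ S), c i * (if y ∈ σ '' A i then 1 else 0)
          = ∑ i ∈ S, c i := by
        rw [show Finset.univ.filter (· ∈ S) = S by ext i; simp]
        apply Finset.sum_congr rfl
        intro i hi
        rw [if_pos (((hCmem S y).1 hy i).1 hi), mul_one]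
      have e2 : ∑ i ∈ Finset.univ.filter (¬ · ∈ S), c i * (if y ∈ σ '' A i then 1 else 0)
          = 0 := by
        apply Finset.sum_eq_zero
        intro i hi
        rw [if_neg, mul_zero]
        intro hyi
        exact (Finset.mem_filter.1 hi).2 (((hCmem S y).1 hy i).2 hyi)
      rw [e1, e2, add_zero]
    rw [this] at h0
    exact h0
  -- each atom piece is a coboundary
  have hpiece : ∀ S : Finset (Fin n),
      IsCob σ (fun u => ∑ i ∈ S, c i * (if u ∈ B i S then 1 else 0)) := by
    intro S
    by_cases hCS : (C S).Nonempty
    · rcases Finset.eq_empty_or_nonempty S with rfl | ⟨i₀, hi₀⟩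
      · exact IsCob.congr (fun u => by simp) (IsCob.zero (σ := σ))
      · have hm : ∑ i ∈ S, c i = 0 := hcoeff S hCS
        have key : ∀ u, (∑ i ∈ S, c i * (if u ∈ B i S then 1 else 0)) =
            ∑ i ∈ S, c i * ((if u ∈ B i S then (1:ℤ) else 0) - (if u ∈ B i₀ S then 1 else 0)) := by
          intro u
          rw [Finset.sum_congr rfl (fun i (_ : i ∈ S) => by ring_nf :
            ∀ i ∈ S, c i * ((if u ∈ B i S then (1:ℤ) else 0) - (if u ∈ B i₀ S then 1 else 0)) =
              c i * (if u ∈ B i S then (1:ℤ) else 0) - c i * (if u ∈ B i₀ S then 1 else 0))]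
          rw [Finset.sum_sub_distrib, ← Finset.sum_mul, hm, zero_mul, sub_zero]
        apply IsCob.congr (fun u => (key u).symm)
        apply IsCob.finsetSum hσ
        intro i hi
        have hpair := IsCob.zsmul hσ (c i) (isCob_pair hσ (hBc i S) (hBo i S) (hBinj i S)
          (hBc i₀ S) (hBo i₀ S) (hBinj i₀ S) ((hBimg i S hi).trans (hBimg i₀ S hi₀).symm))
        apply IsCob.congr ?_ hpair
        intro u
        by_cases h1 : u ∈ B i S <;> by_cases h2 : u ∈ B i₀ S <;> simp [h1, h2]
    · have hCe : C S = ∅ := Set.not_nonempty_iff_eq_empty.1 hCS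
      apply IsCob.congr (g₁ := fun _ => 0) ?_ (IsCob.zero (σ := σ))
      intro u
      symm
      apply Finset.sum_eq_zero
      intro i _
      rw [if_neg, mul_zero]
      rintro ⟨-, hu⟩
      rw [hCe] at hu
      exact hu
  -- assemble
  apply IsCob.congr (g₁ := fun u => ∑ S : Finset (Fin n),
    ∑ i ∈ S, c i * (if u ∈ B i S then 1 else 0))
  · intro u
    rw [hgdef u]
    show (∑ S : Finset (Fin n), ∑ i ∈ S, c i * (if u ∈ B i S then 1 else 0)) =
      ∑ i, c i * (if u ∈ A i then 1 else 0)
    have e1 : ∀ S : Finset (Fin n), (∑ i ∈ S, c i * (if u ∈ B i S then (1:ℤ) else 0))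
        = ∑ i : Fin n, c i * (if u ∈ B i S then 1 else 0) := by
      intro S
      apply Finset.sum_subset (Finset.subset_univ S)
      intro i _ hiS
      have hnot : u ∉ B i S := by
        rw [hBempty i S hiS]
        exact Set.notMem_empty u
      rw [if_neg hnot, mul_zero]
    calc (∑ S : Finset (Fin n), ∑ i ∈ S, c i * (if u ∈ B i S then (1:ℤ) else 0))
        = ∑ S : Finset (Fin n), ∑ i : Fin n, c i * (if u ∈ B i S then 1 else 0) :=
          Finset.sum_congr rfl (fun S _ => e1 S)
      _ = ∑ i : Fin n, ∑ S : Finset (Fin n), c i * (if u ∈ B i S then 1 else 0) :=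
          Finset.sum_comm
      _ = ∑ i, c i * (if u ∈ A i then 1 else 0) := by
          apply Finset.sum_congr rfl
          intro i _
          rw [hsplit i u, Finset.mul_sum]
  · exact IsCob.finsetSum hσ Finset.univ _ (fun S _ => hpiece S)

end H0Aux

/-- For `f₁, f₂ ∈ C_c(X, ℕ)`, equivalence in `H₀(R(σ))` (witnessed by some
`F ∈ C_c(R(σ), ℤ)`) is equivalent to having equal fiberwise sums. -/
theorem H0_Rsigma_equiv_iff_fiberSum_eq
    {X Y : Type*} [TopologicalSpace X] [TopologicalSpace Y]
    [LocallyCompactSpace X] [T2Space X] [SecondCountableTopology X]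
    [TotallyDisconnectedSpace X]
    [LocallyCompactSpace Y] [T2Space Y] [SecondCountableTopology Y]
    [TotallyDisconnectedSpace Y]
    (σ : X → Y) (hσ : IsLocalHomeomorph σ) (hsurj : Function.Surjective σ)
    (f₁ f₂ : X → ℤ)
    (hf₁ : Continuous f₁) (hf₁c : HasCompactSupport f₁) (hf₁0 : ∀ x, 0 ≤ f₁ x)
    (hf₂ : Continuous f₂) (hf₂c : HasCompactSupport f₂) (hf₂0 : ∀ x, 0 ≤ f₂ x) :
    (∃ F : {p : X × X // σ p.1 = σ p.2} → ℤ,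
        Continuous F ∧ HasCompactSupport F ∧
        ∀ u : X, f₁ u - f₂ u =
          ∑ᶠ (v : X) (h : σ v = σ u), (F ⟨(v, u), h⟩ - F ⟨(u, v), h.symm⟩)) ↔
      ∀ x : X,
        (∑ᶠ (u : X) (_ : σ u = σ x), f₁ u) = ∑ᶠ (u : X) (_ : σ u = σ x), f₂ u := by
  classical
  have hg : Continuous (fun u => f₁ u - f₂ u) := hf₁.sub hf₂
  have hgc : HasCompactSupport (fun u => f₁ u - f₂ u) := by
    apply HasCompactSupport.intro (hf₁c.union hf₂c)
    intro u hu
    rw [Set.mem_union] at hu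
    push_neg at hu
    rw [image_eq_zero_of_notMem_tsupport hu.1, image_eq_zero_of_notMem_tsupport hu.2, sub_zero]
  have hsplit : ∀ x : X, (∑ᶠ u ∈ {u | σ u = σ x}, (f₁ u - f₂ u)) =
      (∑ᶠ (u : X) (_ : σ u = σ x), f₁ u) - (∑ᶠ (u : X) (_ : σ u = σ x), f₂ u) := by
    intro x
    have hKc : IsCompact (tsupport f₁ ∪ tsupport f₂) := hf₁c.union hf₂c
    set t : Finset X := (fiber_inter_compact_finite hσ hKc (σ x)).toFinset with htd
    have htmem : ∀ v, v ∈ t ↔ (v ∈ tsupport f₁ ∪ tsupport f₂ ∧ σ v = σ x) := by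
      intro v; rw [htd, Set.Finite.mem_toFinset]; rfl
    have e0 : (∑ᶠ u ∈ {u | σ u = σ x}, (f₁ u - f₂ u)) = ∑ u ∈ t, (f₁ u - f₂ u) := by
      apply fsum_eq_finset (fun v hv => ((htmem v).1 hv).2)
      intro u hu hne
      refine (htmem u).2 ⟨?_, hu⟩
      by_cases h1 : f₁ u = 0
      · have h2 : f₂ u ≠ 0 := fun h2 => hne (by rw [h1, h2, sub_zero])
        exact Or.inr (subset_tsupport f₂ h2)
      · exact Or.inl (subset_tsupport f₁ h1)
    have e1 : (∑ᶠ u ∈ {u | σ u = σ x}, f₁ u) = ∑ u ∈ t, f₁ u := by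
      apply fsum_eq_finset (fun v hv => ((htmem v).1 hv).2)
      intro u hu hne
      exact (htmem u).2 ⟨Or.inl (subset_tsupport f₁ hne), hu⟩
    have e2 : (∑ᶠ u ∈ {u | σ u = σ x}, f₂ u) = ∑ u ∈ t, f₂ u := by
      apply fsum_eq_finset (fun v hv => ((htmem v).1 hv).2)
      intro u hu hne
      exact (htmem u).2 ⟨Or.inr (subset_tsupport f₂ hne), hu⟩
    calc (∑ᶠ u ∈ {u | σ u = σ x}, (f₁ u - f₂ u)) = ∑ u ∈ t, (f₁ u - f₂ u) := e0
      _ = (∑ u ∈ t, f₁ u) - ∑ u ∈ t, f₂ u := Finset.sum_sub_distrib _ _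
      _ = _ := by rw [← e1, ← e2]; rfl
  constructor
  · rintro ⟨F, hFcont, hFc, hF⟩ x
    have hcob : IsCob σ (fun u => f₁ u - f₂ u) := ⟨F, hFcont, hFc, hF⟩
    have h0 : (∑ᶠ u ∈ {u | σ u = σ x}, (f₁ u - f₂ u)) = 0 :=
      IsCob.fiberSum_eq_zero hσ hcob x
    have h0' : (∑ᶠ (u : X) (_ : σ u = σ x), f₁ u) - (∑ᶠ (u : X) (_ : σ u = σ x), f₂ u) = 0 :=
      (hsplit x).symm.trans h0
    exact sub_eq_zero.mp h0'
  · intro hb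
    have hz : ∀ y : Y, ∑ᶠ u ∈ {u | σ u = y}, (f₁ u - f₂ u) = 0 := by
      intro y
      obtain ⟨x, rfl⟩ := hsurj y
      rw [hsplit x, hb x, sub_self]
    obtain ⟨F, h1, h2, h3⟩ := isCob_of_fiberSum_zero hσ hg hgc hz
    exact ⟨F, h1, h2, h3⟩
end

section
/- Let X and Y be td-lcsc spaces and let σ : X → Y be a surjective local homeomorphism. Let f₁, f₂ ∈ C_c(X, ℕ) and suppose there exists F ∈ C_c(R(σ), ℤ) such that for every u ∈ X, f₁(u) + f₂(u) = Σ_{v : σ(v) = σ(u)} (F(v,u) − F(u,v)) (i.e. [f₁] = [−f₂] in H₀(R(σ))). Then f₁ = 0 and f₂ = 0. In particular H₀(R(σ))⁺ ∩ (−H₀(R(σ))⁺) = {0}, so H₀(R(σ)) is an ordered group. -/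
/-!
The fibres of a local homeomorphism are discrete and closed, so a fibre meets the compact
projections of `tsupport F` in a finite set `E`, and for `u` in the fibre the sum defining
`f₁ u + f₂ u` only involves `v ∈ E`. Summing the identity over `E`, the right-hand side is
`∑_{u,v ∈ E} (F(v,u) − F(u,v)) = 0`, while the left-hand side is a sum of nonnegative terms;
hence `f₁ + f₂` vanishes on `E`, which can be chosen to contain any given point.
-/

open Set

theorem IsLocalHomeomorph.finite_preimage_singleton_inter_of_isCompact
    {X Y : Type*} [TopologicalSpace X] [TopologicalSpace Y] [T1Space Y] {σ : X → Y}
    (hσ : IsLocalHomeomorph σ) (y : Y) {K : Set X} (hK : IsCompact K) :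
    (σ ⁻¹' {y} ∩ K).Finite := by
  refine (hK.inter_left (isClosed_singleton.preimage hσ.continuous)).finite ?_
  refine IsLocalHomeomorphOn.isDiscrete_of_image (hσ.isLocalHomeomorphOn (s := _)) ?_
  exact DiscreteTopology.isDiscrete.mono (image_subset_iff.2 inter_subset_left)

namespace Finset

variable {ι M : Type*}

theorem sum_sum_sub_swap_eq_zero [AddCommGroup M] (s : Finset ι) (G : ι → ι → M) :
    ∑ i ∈ s, ∑ j ∈ s, (G j i - G i j) = 0 := by
  simp only [sum_sub_distrib]
  rw [sum_comm, sub_self]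

theorem eq_zero_of_nonneg_of_eq_sum_sub_swap [AddCommGroup M] [PartialOrder M]
    [IsOrderedAddMonoid M] {s : Finset ι} {g : ι → M} {G : ι → ι → M}
    (hg : ∀ i ∈ s, 0 ≤ g i) (hgG : ∀ i ∈ s, g i = ∑ j ∈ s, (G j i - G i j)) :
    ∀ i ∈ s, g i = 0 :=
  (sum_eq_zero_iff_of_nonneg hg).1 <| by
    rw [sum_congr rfl hgG, sum_sum_sub_swap_eq_zero]

end Finset

theorem IsLocalHomeomorph.eq_zero_of_nonneg_of_eq_finsum_sub_swap
    {X Y M : Type*} [TopologicalSpace X] [TopologicalSpace Y] [T1Space Y]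
    [AddCommGroup M] [PartialOrder M] [IsOrderedAddMonoid M] {σ : X → Y}
    (hσ : IsLocalHomeomorph σ) {G : X → X → M} {K : Set X} (hK : IsCompact K)
    (hGsupp : ∀ v u, G v u ≠ 0 → σ v = σ u ∧ v ∈ K ∧ u ∈ K) {g : X → M} (hg : 0 ≤ g)
    (hgG : ∀ u, g u = ∑ᶠ v, (G v u - G u v)) : g = 0 := by
  funext u₀
  rw [Pi.zero_apply]
  set E := (hσ.finite_preimage_singleton_inter_of_isCompact (σ u₀) (hK.insert u₀)).toFinset
  have hmemE : ∀ {v}, v ∈ E ↔ σ v = σ u₀ ∧ (v = u₀ ∨ v ∈ K) := by simp [E]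
  refine Finset.eq_zero_of_nonneg_of_eq_sum_sub_swap (G := G) (fun u _ => hg u)
    (fun u hu => ?_) u₀ (hmemE.2 ⟨rfl, .inl rfl⟩)
  rw [hgG u]
  refine finsum_eq_sum_of_support_subset _ fun v hv => hmemE.2 ?_
  have hu := (hmemE.1 hu).1
  by_cases hvu : G v u = 0
  · obtain ⟨huv, -, hvK⟩ := hGsupp u v fun h => hv (by simp [hvu, h])
    exact ⟨huv.symm.trans hu, .inr hvK⟩
  · obtain ⟨hvu', hvK, -⟩ := hGsupp v u hvu
    exact ⟨hvu'.trans hu, .inr hvK⟩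

theorem IsLocalHomeomorph.eq_zero_of_nonneg_of_eq_finsum_sub_swap_of_hasCompactSupport
    {X Y M : Type*} [TopologicalSpace X] [TopologicalSpace Y] [T1Space Y]
    [AddCommGroup M] [PartialOrder M] [IsOrderedAddMonoid M] {σ : X → Y}
    (hσ : IsLocalHomeomorph σ) {F : {p : X × X // σ p.1 = σ p.2} → M}
    (hF : HasCompactSupport F) {g : X → M} (hg : 0 ≤ g)
    (hgF : ∀ u, g u = ∑ᶠ (v : X) (h : σ v = σ u), (F ⟨(v, u), h⟩ - F ⟨(u, v), h.symm⟩)) :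
    g = 0 := by
  classical
  set G : X → X → M := fun v u => if h : σ v = σ u then F ⟨(v, u), h⟩ else 0
  set K : Set X := (fun p => p.1.1) '' tsupport F ∪ (fun p => p.1.2) '' tsupport F
  have hK : IsCompact K := (hF.image (by fun_prop)).union (hF.image (by fun_prop))
  have hGsupp : ∀ v u, G v u ≠ 0 → σ v = σ u ∧ v ∈ K ∧ u ∈ K := by
    intro v u hvu
    by_cases h : σ v = σ u
    · have hmem : ⟨(v, u), h⟩ ∈ tsupport F := subset_tsupport F (by simpa [G, h] using hvu)
      exact ⟨h, .inl ⟨_, hmem, rfl⟩, .inr ⟨_, hmem, rfl⟩⟩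
    · simp [G, h] at hvu
  refine hσ.eq_zero_of_nonneg_of_eq_finsum_sub_swap hK hGsupp hg fun u => ?_
  rw [hgF u]
  refine finsum_congr fun v => ?_
  rw [finsum_eq_dif]
  by_cases h : σ v = σ u
  · simp only [G, dif_pos h, dif_pos h.symm]
  · simp only [G, dif_neg h, dif_neg (Ne.symm h), sub_zero]

theorem H0_Rsigma_positives_intersect_trivially_general
    {X Y : Type*} [TopologicalSpace X] [TopologicalSpace Y]
    [T2Space Y]
    (σ : X → Y) (hσ : IsLocalHomeomorph σ)
    (f₁ f₂ : X → ℤ)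
    (hf₁0 : ∀ x, 0 ≤ f₁ x)
    (hf₂0 : ∀ x, 0 ≤ f₂ x)
    (hF : ∃ F : {p : X × X // σ p.1 = σ p.2} → ℤ,
        Continuous F ∧ HasCompactSupport F ∧
        ∀ u : X, f₁ u + f₂ u =
          ∑ᶠ (v : X) (h : σ v = σ u), (F ⟨(v, u), h⟩ - F ⟨(u, v), h.symm⟩)) :
    f₁ = 0 ∧ f₂ = 0 := by
  obtain ⟨F, -, hFc, hFeq⟩ := hF
  have hf₁ : 0 ≤ f₁ := hf₁0
  have hf₂ : 0 ≤ f₂ := hf₂0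
  exact (add_eq_zero_iff_of_nonneg hf₁ hf₂).1 <|
    hσ.eq_zero_of_nonneg_of_eq_finsum_sub_swap_of_hasCompactSupport hFc (add_nonneg hf₁ hf₂) hFeq

/-- If `f₁, f₂ ∈ C_c(X, ℕ)` satisfy `[f₁] = [−f₂]` in `H₀(R(σ))`, then
`f₁ = 0` and `f₂ = 0`; hence `H₀(R(σ))⁺ ∩ (−H₀(R(σ))⁺) = {0}`. -/
theorem H0_Rsigma_positives_intersect_trivially
    {X Y : Type*} [TopologicalSpace X] [TopologicalSpace Y]
    [LocallyCompactSpace X] [T2Space X] [SecondCountableTopology X]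
    [TotallyDisconnectedSpace X]
    [LocallyCompactSpace Y] [T2Space Y] [SecondCountableTopology Y]
    [TotallyDisconnectedSpace Y]
    (σ : X → Y) (hσ : IsLocalHomeomorph σ) (hsurj : Function.Surjective σ)
    (f₁ f₂ : X → ℤ)
    (hf₁ : Continuous f₁) (hf₁c : HasCompactSupport f₁) (hf₁0 : ∀ x, 0 ≤ f₁ x)
    (hf₂ : Continuous f₂) (hf₂c : HasCompactSupport f₂) (hf₂0 : ∀ x, 0 ≤ f₂ x)
    (hF : ∃ F : {p : X × X // σ p.1 = σ p.2} → ℤ,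
        Continuous F ∧ HasCompactSupport F ∧
        ∀ u : X, f₁ u + f₂ u =
          ∑ᶠ (v : X) (h : σ v = σ u), (F ⟨(v, u), h⟩ - F ⟨(u, v), h.symm⟩)) :
    f₁ = 0 ∧ f₂ = 0 :=
  H0_Rsigma_positives_intersect_trivially_general σ hσ f₁ f₂ hf₁0 hf₂0 hF
end

section
/- Let X be a td-lcsc space, let σ : X → X be a surjective local homeomorphism, let n ≥ 1, and let F ∈ C_c(R(σⁿ), ℤ), extended by 0 off R(σⁿ). Let σ_*(F)(a,b) = Σ_{u : σ(u) = a} Σ_{w : σ(w) = b} F(u,w). Then for every x ∈ X, Σ_{y : σ(y) = x} Σ_{z : σⁿ(z) = σⁿ(y)} (F(z,y) − F(y,z)) = Σ_{v : σ^{n−1}(v) = σ^{n−1}(x)} (σ_*(F)(v,x) − σ_*(F)(x,v)); that is, σ_*(∂₁⁽ⁿ⁾F) = ∂₁⁽ⁿ⁻¹⁾(σ_*(F)). -/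
/-!
Both sides only involve values of `F` at pairs of points of the fibre `σ^[n] ⁻¹' {σ^[n-1] x}`, and
by compactness of the support and discreteness of the fibres of the local homeomorphism `σ^[n]`,
only finitely many of these values are nonzero. For finitely supported `F` the identity is a
regrouping of finite sums: a point `u` with `σ^[n] u = σ^[n-1] x` is the same as a point `v = σ u`
in the fibre of `σ^[n-1]` through `x` together with a point `u` of the fibre of `σ` over `v`.
-/

open Function Set Finset

section Topology

variable {X Y : Type*} [TopologicalSpace X] {f : X → Y}

theorem IsLocalHomeomorph.iterate {f : X → X} (hf : IsLocalHomeomorph f) :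
    ∀ k : ℕ, IsLocalHomeomorph f^[k]
  | 0 => (Homeomorph.refl X).isLocalHomeomorph
  | k + 1 => by rw [Function.iterate_succ]; exact (hf.iterate k).comp hf

theorem IsLocallyInjective.isDiscrete_preimage_singleton (hf : IsLocallyInjective f) (y : Y) :
    IsDiscrete (f ⁻¹' {y}) := by
  refine isDiscrete_iff_forall_mem_exists_isOpen.2 fun x hx => ?_
  obtain ⟨U, hU, hxU, hinj⟩ := hf x
  exact ⟨U, hU, eq_singleton_iff_unique_mem.2
    ⟨⟨hxU, hx⟩, fun z hz => hinj hz.1 hxU (hz.2.trans hx.symm)⟩⟩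

theorem IsLocalHomeomorph.finite_preimage_singleton_inter [TopologicalSpace Y] [T1Space Y]
    (hf : IsLocalHomeomorph f) (y : Y) {C : Set X} (hC : IsCompact C) :
    (f ⁻¹' {y} ∩ C).Finite :=
  (hC.inter_left (isClosed_singleton.preimage hf.continuous)).finite
    ((hf.isLocallyInjective.isDiscrete_preimage_singleton y).mono inter_subset_left)

end Topology

theorem finsum_cond_eq_sum_filter {α M : Type*} [AddCommMonoid M] {p : α → Prop}
    [DecidablePred p] {g : α → M} {T : Finset α} (hg : support g ⊆ T) :
    ∑ᶠ (a) (_ : p a), g a = ∑ a ∈ T with p a, g a :=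
  finsum_cond_eq_sum_of_cond_iff g fun ha => by simp [show _ ∈ T from hg ha]

section FiberSums

variable {X M : Type*} [AddCommGroup M] (σ : X → X)

/-- The paper's `σ_*(F)`. -/
noncomputable def fiberPushforward (F : X × X → M) (p : X × X) : M :=
  ∑ᶠ (u) (_ : σ u = p.1), ∑ᶠ (w) (_ : σ w = p.2), F (u, w)

/-- The paper's `∂₁⁽ᵏ⁾F`. -/
noncomputable def fiberBoundary (k : ℕ) (F : X × X → M) (u : X) : M :=
  ∑ᶠ (z) (_ : σ^[k] z = σ^[k] u), (F (z, u) - F (u, z))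

variable {σ}

theorem fiberBoundary_eqOn {F G : X × X → M} {k : ℕ} {c : X}
    (h : EqOn F G ((σ^[k] ⁻¹' {c}) ×ˢ (σ^[k] ⁻¹' {c}))) :
    EqOn (fiberBoundary σ k F) (fiberBoundary σ k G) (σ^[k] ⁻¹' {c}) := by
  intro u hu
  refine finsum_congr fun z => finsum_congr fun hz => ?_
  have hz' : z ∈ σ^[k] ⁻¹' {c} := hz.trans hu
  rw [h ⟨hz', hu⟩, h ⟨hu, hz'⟩]

theorem fiberPushforward_eqOn {F G : X × X → M} {S : Set X}
    (h : EqOn F G ((σ ⁻¹' S) ×ˢ (σ ⁻¹' S))) :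
    EqOn (fiberPushforward σ F) (fiberPushforward σ G) (S ×ˢ S) := by
  rintro ⟨a, b⟩ ⟨ha, hb⟩
  exact finsum_congr fun u => finsum_congr fun hu => finsum_congr fun w =>
    finsum_congr fun hw => h ⟨show σ u ∈ S from hu ▸ ha, show σ w ∈ S from hw ▸ hb⟩

section Finite

variable [DecidableEq X] {T : Finset X} {F : X × X → M}

theorem fiberBoundary_eq_sum (hF : support F ⊆ (T : Set X) ×ˢ T) (k : ℕ) (u : X) :
    fiberBoundary σ k F u = ∑ z ∈ T with σ^[k] z = σ^[k] u, (F (z, u) - F (u, z)) := by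
  refine finsum_cond_eq_sum_filter fun z hz => ?_
  rw [mem_support] at hz
  by_cases hzu : F (z, u) = 0
  · rw [hzu, zero_sub, neg_ne_zero] at hz
    exact (hF hz).2
  · exact (hF hzu).1

theorem support_fiberBoundary_subset (hF : support F ⊆ (T : Set X) ×ˢ T) (k : ℕ) :
    support (fiberBoundary σ k F) ⊆ T := by
  intro u hu
  by_contra huT
  refine hu ((fiberBoundary_eq_sum hF k u).trans (sum_eq_zero fun z _ => ?_))
  rw [notMem_support.1 fun h => huT (hF h).2, notMem_support.1 fun h => huT (hF h).1, sub_zero]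

theorem fiberPushforward_eq_sum (hF : support F ⊆ (T : Set X) ×ˢ T) (a b : X) :
    fiberPushforward σ F (a, b) =
      ∑ u ∈ T with σ u = a, ∑ w ∈ T with σ w = b, F (u, w) := by
  have inner : ∀ u, ∑ᶠ (w) (_ : σ w = b), F (u, w) = ∑ w ∈ T with σ w = b, F (u, w) :=
    fun u => finsum_cond_eq_sum_filter fun w hw => (hF hw).2
  simp only [fiberPushforward, inner]
  refine finsum_cond_eq_sum_filter fun u hu => ?_
  obtain ⟨w, -, hw⟩ := Finset.exists_ne_zero_of_sum_ne_zero hu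
  exact (hF hw).1

theorem support_fiberPushforward_subset (hF : support F ⊆ (T : Set X) ×ˢ T) :
    support (fiberPushforward σ F) ⊆ (T.image σ : Set X) ×ˢ (T.image σ) := by
  rintro ⟨a, b⟩ hab
  rw [mem_support, fiberPushforward_eq_sum hF] at hab
  obtain ⟨u, hu, hab⟩ := Finset.exists_ne_zero_of_sum_ne_zero hab
  obtain ⟨w, hw, -⟩ := Finset.exists_ne_zero_of_sum_ne_zero hab
  exact ⟨mem_image.2 ⟨u, mem_filter.1 hu⟩, mem_image.2 ⟨w, mem_filter.1 hw⟩⟩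

theorem sum_filter_image_sum_fiber {N : Type*} [AddCommMonoid N] (T : Finset X) (m : ℕ)
    (c : X) (g : X → N) :
    ∑ v ∈ T.image σ with σ^[m] v = c, ∑ u ∈ T with σ u = v, g u =
      ∑ u ∈ T with σ^[m] (σ u) = c, g u := by
  rw [sum_fiberwise_eq_sum_filter]
  exact sum_congr (filter_congr fun u hu => by simp [Finset.mem_image_of_mem σ hu]) fun _ _ => rfl

end Finite

theorem finsum_fiberBoundary_succ {F : X × X → M} (hF : (support F).Finite) (m : ℕ) (x : X) :
    ∑ᶠ (y) (_ : σ y = x), fiberBoundary σ (m + 1) F y =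
      fiberBoundary σ m (fiberPushforward σ F) x := by
  classical
  obtain ⟨T, hT⟩ : ∃ T : Finset X, support F ⊆ (T : Set X) ×ˢ T :=
    ⟨hF.toFinset.image Prod.fst ∪ hF.toFinset.image Prod.snd, fun p hp => by
      simp only [coe_union, coe_image, Set.Finite.coe_toFinset, mem_prod]
      exact ⟨Or.inl (mem_image_of_mem _ hp), Or.inr (mem_image_of_mem _ hp)⟩⟩
  rw [finsum_cond_eq_sum_filter (support_fiberBoundary_subset hT _),
    fiberBoundary_eq_sum (support_fiberPushforward_subset hT)]
  simp only [fiberBoundary_eq_sum hT, fiberPushforward_eq_sum hT, sum_sub_distrib,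
    Function.iterate_succ_apply]
  congr 1
  · rw [sum_filter_image_sum_fiber, sum_comm]
    refine sum_congr rfl fun y hy => ?_
    simp only [(mem_filter.1 hy).2]
  · rw [sum_comm]
    refine sum_congr rfl fun y hy => ?_
    simp only [sum_filter_image_sum_fiber, (mem_filter.1 hy).2]

end FiberSums

theorem sigmaAst_boundary_commutes_general
    {X : Type*} [TopologicalSpace X]
    [T2Space X]
    (σ : X → X) (hσ : IsLocalHomeomorph σ)
    (n : ℕ) (hn : 1 ≤ n)
    (F : X × X → ℤ)
    (hFsupp : HasCompactSupport
      fun p : {q : X × X // σ^[n] q.1 = σ^[n] q.2} => F p.val)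
    (hF0 : ∀ p : X × X, σ^[n] p.1 ≠ σ^[n] p.2 → F p = 0) :
    ∀ x : X,
      (∑ᶠ (y : X) (_ : σ y = x), ∑ᶠ (z : X) (_ : σ^[n] z = σ^[n] y),
          (F (z, y) - F (y, z))) =
        ∑ᶠ (v : X) (_ : σ^[n - 1] v = σ^[n - 1] x),
          ((∑ᶠ (u : X) (_ : σ u = v), ∑ᶠ (w : X) (_ : σ w = x), F (u, w)) -
            (∑ᶠ (u : X) (_ : σ u = x), ∑ᶠ (w : X) (_ : σ w = v), F (u, w))) := by
  obtain ⟨m, rfl⟩ : ∃ m, n = m + 1 := ⟨n - 1, by omega⟩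
  intro x
  set K := Subtype.val ''
    tsupport fun p : {q : X × X // σ^[m + 1] q.1 = σ^[m + 1] q.2} => F p.val
  have hK : IsCompact K := hFsupp.image continuous_subtype_val
  have hFK : support F ⊆ K := fun p hp =>
    ⟨⟨p, not_imp_comm.1 (hF0 p) hp⟩, subset_tsupport _ hp, rfl⟩
  set B := σ ⁻¹' (σ^[m] ⁻¹' {σ^[m] x})
  have hB : ∀ C : Set X, IsCompact C → (B ∩ C).Finite :=
    fun C hC => (hσ.iterate (m + 1)).finite_preimage_singleton_inter _ hC
  set G := (B ×ˢ B).indicator F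
  have hFG : EqOn F G (B ×ˢ B) := fun p hp => (indicator_of_mem hp F).symm
  have hG : (support G).Finite := by
    refine ((hB _ (hK.image continuous_fst)).prod (hB _ (hK.image continuous_snd))).subset ?_
    rw [support_indicator]
    exact fun p ⟨⟨h1, h2⟩, hp⟩ => ⟨⟨h1, p, hFK hp, rfl⟩, ⟨h2, p, hFK hp, rfl⟩⟩
  calc _ = ∑ᶠ (y) (_ : σ y = x), fiberBoundary σ (m + 1) G y :=
        finsum_congr fun y => finsum_congr fun hy =>
          fiberBoundary_eqOn hFG (show σ^[m] (σ y) = σ^[m] x by rw [hy])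
    _ = fiberBoundary σ m (fiberPushforward σ G) x := finsum_fiberBoundary_succ hG m x
    _ = fiberBoundary σ m (fiberPushforward σ F) x :=
        (fiberBoundary_eqOn (fiberPushforward_eqOn hFG) rfl).symm

/-- `σ_*(∂₁⁽ⁿ⁾F) = ∂₁⁽ⁿ⁻¹⁾(σ_*(F))` for `F ∈ C_c(R(σⁿ), ℤ)` extended by `0`
off `R(σⁿ)`. -/
theorem sigmaAst_boundary_commutes
    {X : Type*} [TopologicalSpace X]
    [LocallyCompactSpace X] [T2Space X] [SecondCountableTopology X]
    [TotallyDisconnectedSpace X]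
    (σ : X → X) (hσ : IsLocalHomeomorph σ) (hsurj : Function.Surjective σ)
    (n : ℕ) (hn : 1 ≤ n)
    (F : X × X → ℤ)
    (hFcont : Continuous fun p : {q : X × X // σ^[n] q.1 = σ^[n] q.2} => F p.val)
    (hFsupp : HasCompactSupport
      fun p : {q : X × X // σ^[n] q.1 = σ^[n] q.2} => F p.val)
    (hF0 : ∀ p : X × X, σ^[n] p.1 ≠ σ^[n] p.2 → F p = 0) :
    ∀ x : X,
      (∑ᶠ (y : X) (_ : σ y = x), ∑ᶠ (z : X) (_ : σ^[n] z = σ^[n] y),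
          (F (z, y) - F (y, z))) =
        ∑ᶠ (v : X) (_ : σ^[n - 1] v = σ^[n - 1] x),
          ((∑ᶠ (u : X) (_ : σ u = v), ∑ᶠ (w : X) (_ : σ w = x), F (u, w)) -
            (∑ᶠ (u : X) (_ : σ u = x), ∑ᶠ (w : X) (_ : σ w = v), F (u, w))) :=
  sigmaAst_boundary_commutes_general σ hσ n hn F hFsupp hF0
end

section
/- Let X be a td-lcsc space and let σ : X → X be a surjective local homeomorphism. Suppose there exist an integer m ≥ 1, a function f ∈ C_c(X, ℤ), and a nonzero function h ∈ C_c(X, ℕ) such that σ_*^m(f) − f = h. Then for every integer n ≥ 1 there exist F ∈ C_c(X, ℤ) and a nonzero H ∈ C_c(X, ℕ) such that σ_*ⁿ(F) − F = H. Equivalently: if Im(σ_*ⁿ − id) ∩ C_c(X, ℕ) = {0} holds for some n ≥ 1, then it holds for every n ≥ 1. -/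
/-- The fiberwise-sum operator `σ_*` on integer-valued functions. -/
noncomputable def starMap {X : Type*} (σ : X → X) : (X → ℤ) → (X → ℤ) :=
  fun f y => ∑ᶠ (x : X) (_ : σ x = y), f x

open Function Set Topology Filter

section aux

variable {X : Type*} [TopologicalSpace X] [T2Space X] {σ : X → X} {g : X → ℤ}

lemma starMap_apply (σ : X → X) (g : X → ℤ) (y : X) :
    starMap σ g y = ∑ᶠ z ∈ σ ⁻¹' {y}, g z := rfl

lemma fiber_inter_finite (hσ : IsLocalHomeomorph σ) (y : X) {K : Set X} (hK : IsCompact K) :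
    (σ ⁻¹' {y} ∩ K).Finite := by
  have hσ' := hσ
  choose e he hfe using hσ'
  obtain ⟨t, -, ht⟩ := hK.elim_nhds_subcover (fun x => (e x).source)
    (fun x _ => (e x).open_source.mem_nhds (he x))
  have hsub : σ ⁻¹' {y} ∩ K ⊆ ⋃ x ∈ t, (σ ⁻¹' {y} ∩ (e x).source) := by
    intro z hz
    obtain ⟨x, hxt, hzx⟩ := mem_iUnion₂.mp (ht hz.2)
    exact mem_iUnion₂.mpr ⟨x, hxt, hz.1, hzx⟩
  refine Set.Finite.subset (t.finite_toSet.biUnion fun x _ => ?_) hsub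
  apply Set.Subsingleton.finite
  intro a ha b hb
  refine (e x).injOn ha.2 hb.2 ?_
  rw [← congrFun (hfe x) a, ← congrFun (hfe x) b, ha.1, hb.1]

lemma support_fiber_finite (hσ : IsLocalHomeomorph σ) (hgc : HasCompactSupport g) (y : X) :
    (σ ⁻¹' {y} ∩ support g).Finite :=
  (fiber_inter_finite hσ y hgc).subset
    (inter_subset_inter_right _ (subset_tsupport g))

end aux

section aux2
set_option linter.unusedSectionVars false

variable {X : Type*} [TopologicalSpace X] [T2Space X] {σ : X → X} {g : X → ℤ}

lemma starMap_continuous (hσ : IsLocalHomeomorph σ) (hg : Continuous g)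
    (hgc : HasCompactSupport g) : Continuous (starMap σ g) := by
  rw [continuous_iff_continuousAt]
  intro y₀
  suffices key : ∀ᶠ y in 𝓝 y₀, starMap σ g y = starMap σ g y₀ by
    exact continuousAt_const.congr (key.mono fun y hy => hy.symm)
  classical
  have hσ' := hσ
  choose e he hfe using hσ'
  have hKc : IsCompact (tsupport g) := hgc
  have hsfin : (σ ⁻¹' {y₀} ∩ tsupport g).Finite := fiber_inter_finite hσ y₀ hKc
  obtain ⟨W, hW, hWd⟩ := hsfin.t2_separation
  set s : Finset X := hsfin.toFinset with hs
  have hmem_s : ∀ x, x ∈ s ↔ (σ x = y₀ ∧ x ∈ tsupport g) := by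
    intro x; rw [hs, Set.Finite.mem_toFinset]; rfl
  set U : X → Set X := fun x => (e x).source ∩ g ⁻¹' {g x} ∩ W x with hU
  have hUopen : ∀ x, IsOpen (U x) := fun x =>
    (((e x).open_source.inter (IsOpen.preimage hg (isOpen_discrete _))).inter (hW x).2)
  have hxU : ∀ x, x ∈ U x := fun x => ⟨⟨he x, rfl⟩, (hW x).1⟩
  have hUsrc : ∀ x, U x ⊆ (e x).source := fun x z hz => hz.1.1
  set K' : Set X := tsupport g \ ⋃ x ∈ s, U x with hK'
  have hK'c : IsCompact K' := hKc.diff (isOpen_biUnion fun x _ => hUopen x)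
  have hy₀K' : y₀ ∉ σ '' K' := by
    rintro ⟨z, ⟨hzK, hz2⟩, hzy⟩
    exact hz2 (mem_biUnion ((hmem_s z).mpr ⟨hzy, hzK⟩) (hxU z))
  set V : Set X := (⋂ x ∈ s, (e x) '' U x) ∩ (σ '' K')ᶜ with hV
  have hVopen : IsOpen V := by
    refine IsOpen.inter (isOpen_biInter_finset fun x _ => ?_)
      (IsCompact.isClosed (hK'c.image hσ.continuous)).isOpen_compl
    exact (e x).isOpen_image_of_subset_source (hUopen x) (hUsrc x)
  have hy₀V : y₀ ∈ V := by
    refine ⟨mem_biInter fun x hx => ?_, hy₀K'⟩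
    have hx' := (hmem_s x).mp hx
    exact ⟨x, hxU x, by rw [← congrFun (hfe x) x]; exact hx'.1⟩
  filter_upwards [hVopen.mem_nhds hy₀V] with y hy
  -- `c x` is the unique preimage of `y` near `x`
  set c : X → X := fun x => (e x).symm y with hc
  have hcU : ∀ x ∈ s, c x ∈ U x ∧ σ (c x) = y := by
    intro x hx
    obtain ⟨z, hzU, hzy⟩ := mem_iInter₂.mp hy.1 x hx
    have hzsrc := hUsrc x hzU
    have : c x = z := by show (e x).symm y = z; rw [← hzy]; exact (e x).left_inv hzsrc
    rw [this]
    exact ⟨hzU, by rw [congrFun (hfe x) z]; exact hzy⟩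
  have hfib : ∀ z, σ z = y → g z ≠ 0 → ∃ x ∈ s, z = c x := by
    intro z hzy hz0
    have hzK : z ∈ tsupport g := subset_tsupport g hz0
    have hzU : z ∈ ⋃ x ∈ s, U x := by
      by_contra hzn
      exact hy.2 ⟨z, ⟨hzK, hzn⟩, hzy⟩
    obtain ⟨x, hxs, hzUx⟩ := mem_iUnion₂.mp hzU
    refine ⟨x, hxs, ?_⟩
    have hzsrc := hUsrc x hzUx
    have hezy : (e x) z = y := by rw [← congrFun (hfe x) z]; exact hzy
    show z = (e x).symm y
    rw [← hezy]
    exact ((e x).left_inv hzsrc).symm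
  have hcinj : Set.InjOn c ↑s := by
    intro a ha b hb hab
    by_contra hne
    have hd := hWd ((Set.Finite.mem_toFinset hsfin).mp ha)
      ((Set.Finite.mem_toFinset hsfin).mp hb) hne
    exact hd.le_bot ⟨((hcU a ha).1).2, hab ▸ ((hcU b hb).1).2⟩
  have hgc' : ∀ x ∈ s, g (c x) = g x := fun x hx => ((hcU x hx).1).1.2
  -- compute both sides
  rw [starMap_apply, starMap_apply]
  rw [finsum_mem_eq_sum_of_inter_support_eq g
      (t := s.image c) ?heq1,
    finsum_mem_eq_sum_of_inter_support_eq g (t := s) ?heq2]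
  · rw [Finset.sum_image (fun a ha b hb => hcinj ha hb)]
    exact Finset.sum_congr rfl hgc'
  case heq1 =>
    ext z
    simp only [Set.mem_inter_iff, Set.mem_preimage, Set.mem_singleton_iff,
      Finset.coe_image, Set.mem_image, Finset.mem_coe, Function.mem_support]
    constructor
    · rintro ⟨hzy, hz0⟩
      obtain ⟨x, hxs, rfl⟩ := hfib z hzy hz0
      exact ⟨⟨x, hxs, rfl⟩, hz0⟩
    · rintro ⟨⟨x, hxs, rfl⟩, hz0⟩
      exact ⟨(hcU x hxs).2, hz0⟩
  case heq2 =>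
    ext z
    simp only [Set.mem_inter_iff, Set.mem_preimage, Set.mem_singleton_iff,
      Finset.mem_coe, Function.mem_support, hmem_s]
    exact ⟨fun hz => ⟨⟨hz.1, subset_tsupport g hz.2⟩, hz.2⟩, fun hz => ⟨hz.1.1, hz.2⟩⟩

end aux2

section aux3
set_option linter.unusedSectionVars false

variable {X : Type*} [TopologicalSpace X] [T2Space X] {σ : X → X} {g g₁ g₂ : X → ℤ}

lemma starMap_hcs (hσ : IsLocalHomeomorph σ) (hgc : HasCompactSupport g) :
    HasCompactSupport (starMap σ g) := by
  refine HasCompactSupport.intro (hgc.image hσ.continuous) fun y hy => ?_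
  rw [starMap_apply]
  refine finsum_mem_of_eqOn_zero fun z hz => ?_
  by_contra h0
  exact hy ⟨z, subset_tsupport g h0, hz⟩

lemma starMap_nonneg (hσ : IsLocalHomeomorph σ) (hgc : HasCompactSupport g)
    (hg0 : ∀ x, 0 ≤ g x) (y : X) : 0 ≤ starMap σ g y := by
  rw [starMap_apply, finsum_mem_eq_sum _ (support_fiber_finite hσ hgc y)]
  exact Finset.sum_nonneg fun i _ => hg0 i

lemma starMap_add (hσ : IsLocalHomeomorph σ) (h₁ : HasCompactSupport g₁)
    (h₂ : HasCompactSupport g₂) :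
    starMap σ (g₁ + g₂) = starMap σ g₁ + starMap σ g₂ := by
  funext y
  have : starMap σ (g₁ + g₂) y = ∑ᶠ z ∈ σ ⁻¹' {y}, (g₁ z + g₂ z) := rfl
  rw [Pi.add_apply, this, starMap_apply, starMap_apply]
  exact finsum_mem_add_distrib' (support_fiber_finite hσ h₁ y) (support_fiber_finite hσ h₂ y)

lemma hcs_sub (h₁ : HasCompactSupport g₁) (h₂ : HasCompactSupport g₂) :
    HasCompactSupport (g₁ - g₂) := by
  rw [sub_eq_add_neg]
  exact h₁.add (h₂.comp_left (g := Neg.neg) neg_zero)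

lemma starMap_sub (hσ : IsLocalHomeomorph σ) (h₁ : HasCompactSupport g₁)
    (h₂ : HasCompactSupport g₂) :
    starMap σ (g₁ - g₂) = starMap σ g₁ - starMap σ g₂ := by
  have h12 : HasCompactSupport (g₁ - g₂) := hcs_sub h₁ h₂
  have := starMap_add hσ h12 h₂
  rw [sub_add_cancel] at this
  rw [this]; abel

/-- `cc` bundles continuity and compact support. -/
def CCZ (g : X → ℤ) : Prop := Continuous g ∧ HasCompactSupport g

lemma ccz_starMap (hσ : IsLocalHomeomorph σ) (hg : CCZ g) : CCZ (starMap σ g) :=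
  ⟨starMap_continuous hσ hg.1 hg.2, starMap_hcs hσ hg.2⟩

lemma ccz_iterate (hσ : IsLocalHomeomorph σ) (hg : CCZ g) (k : ℕ) :
    CCZ ((starMap σ)^[k] g) := by
  induction k with
  | zero => exact hg
  | succ k ih => rw [Function.iterate_succ_apply']; exact ccz_starMap hσ ih

lemma ccz_sub (h₁ : CCZ g₁) (h₂ : CCZ g₂) : CCZ (g₁ - g₂) :=
  ⟨h₁.1.sub h₂.1, hcs_sub h₁.2 h₂.2⟩

lemma starMap_iterate_sub (hσ : IsLocalHomeomorph σ) (h₁ : CCZ g₁) (h₂ : CCZ g₂) (k : ℕ) :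
    (starMap σ)^[k] (g₁ - g₂) = (starMap σ)^[k] g₁ - (starMap σ)^[k] g₂ := by
  induction k with
  | zero => simp
  | succ k ih =>
      rw [Function.iterate_succ_apply', Function.iterate_succ_apply',
        Function.iterate_succ_apply', ih]
      exact starMap_sub hσ (ccz_iterate hσ h₁ k).2 (ccz_iterate hσ h₂ k).2

lemma ccz_sum {ι : Type*} (t : Finset ι) (G : ι → X → ℤ) (hG : ∀ i ∈ t, CCZ (G i)) :
    CCZ (∑ i ∈ t, G i) := by
  classical
  induction t using Finset.induction with
  | empty =>
      simp only [Finset.sum_empty]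
      exact ⟨continuous_zero, by simp [hasCompactSupport_def]⟩
  | insert _ _ hnot ih =>
      rename_i a t'
      rw [Finset.sum_insert hnot]
      have h1 := hG a (Finset.mem_insert_self a t')
      have h2 := ih fun i hi => hG i (Finset.mem_insert_of_mem hi)
      exact ⟨h1.1.add h2.1, h1.2.add h2.2⟩

lemma starMap_sum {ι : Type*} (hσ : IsLocalHomeomorph σ) (t : Finset ι) (G : ι → X → ℤ)
    (hG : ∀ i ∈ t, CCZ (G i)) :
    starMap σ (∑ i ∈ t, G i) = ∑ i ∈ t, starMap σ (G i) := by
  classical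
  induction t using Finset.induction with
  | empty =>
      simp only [Finset.sum_empty]
      funext y
      rw [starMap_apply]
      exact finsum_mem_of_eqOn_zero fun z _ => rfl
  | insert _ _ hnot ih =>
      rename_i a t'
      rw [Finset.sum_insert hnot, Finset.sum_insert hnot,
        starMap_add hσ (hG a (Finset.mem_insert_self a t')).2
          (ccz_sum t' G fun i hi => hG i (Finset.mem_insert_of_mem hi)).2,
        ih fun i hi => hG i (Finset.mem_insert_of_mem hi)]

lemma starMap_iterate_sum {ι : Type*} (hσ : IsLocalHomeomorph σ) (t : Finset ι) (G : ι → X → ℤ)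
    (hG : ∀ i ∈ t, CCZ (G i)) (k : ℕ) :
    (starMap σ)^[k] (∑ i ∈ t, G i) = ∑ i ∈ t, (starMap σ)^[k] (G i) := by
  induction k with
  | zero => simp
  | succ k ih =>
      rw [Function.iterate_succ_apply', ih]
      have : ∀ i ∈ t, CCZ ((starMap σ)^[k] (G i)) := fun i hi => ccz_iterate hσ (hG i hi) k
      rw [starMap_sum hσ t _ this]
      exact Finset.sum_congr rfl fun i _ => (Function.iterate_succ_apply' _ _ _).symm

end aux3

/-- If `σ_*^m(f) − f = h` for some `m ≥ 1`, `f ∈ C_c(X, ℤ)` and some nonzero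
`h ∈ C_c(X, ℕ)`, then for every `n ≥ 1` there are `F ∈ C_c(X, ℤ)` and a
nonzero `H ∈ C_c(X, ℕ)` with `σ_*ⁿ(F) − F = H`. -/
theorem sigmaAst_pow_image_meets_positives
    {X : Type*} [TopologicalSpace X]
    [LocallyCompactSpace X] [T2Space X] [SecondCountableTopology X]
    [TotallyDisconnectedSpace X]
    (σ : X → X) (hσ : IsLocalHomeomorph σ) (hsurj : Function.Surjective σ)
    (m : ℕ) (hm : 1 ≤ m)
    (f : X → ℤ) (hf : Continuous f) (hfc : HasCompactSupport f)
    (h : X → ℤ) (hh : Continuous h) (hhc : HasCompactSupport h)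
    (hh0 : ∀ x, 0 ≤ h x) (hhne : h ≠ 0)
    (heq : (starMap σ)^[m] f - f = h) :
    ∀ n : ℕ, 1 ≤ n →
      ∃ F H : X → ℤ,
        Continuous F ∧ HasCompactSupport F ∧
        Continuous H ∧ HasCompactSupport H ∧ (∀ x, 0 ≤ H x) ∧ H ≠ 0 ∧
        (starMap σ)^[n] F - F = H := by
  intro n hn
  classical
  set T := starMap σ with hT
  have ccf : CCZ f := ⟨hf, hfc⟩
  have cch : CCZ h := ⟨hh, hhc⟩
  set F : X → ℤ := ∑ k ∈ Finset.range m, T^[k*n] f with hF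
  set H : X → ℤ := ∑ j ∈ Finset.range n, T^[j*m] h with hHdef
  have ccF : CCZ F := ccz_sum _ _ fun k _ => ccz_iterate hσ ccf (k*n)
  have ccH : CCZ H := ccz_sum _ _ fun j _ => ccz_iterate hσ cch (j*m)
  have hiterh0 : ∀ k x, 0 ≤ T^[k] h x := by
    intro k
    induction k with
    | zero => exact hh0
    | succ k ih =>
        intro x
        rw [Function.iterate_succ_apply']
        exact starMap_nonneg hσ (ccz_iterate hσ cch k).2 ih x
  have hH0 : ∀ x, 0 ≤ H x := by
    intro x
    rw [hHdef, Finset.sum_apply]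
    exact Finset.sum_nonneg fun j _ => hiterh0 (j*m) x
  have hHne : H ≠ 0 := by
    obtain ⟨x₀, hx₀⟩ := Function.ne_iff.mp hhne
    have h1 : h x₀ ≤ H x₀ := by
      rw [hHdef, Finset.sum_apply]
      have h0mem : 0 ∈ Finset.range n := Finset.mem_range.mpr hn
      have := Finset.single_le_sum (f := fun j => T^[j*m] h x₀)
        (fun j _ => hiterh0 (j*m) x₀) h0mem
      simpa using this
    intro hH
    rw [hH, Pi.zero_apply] at h1
    exact hx₀ (le_antisymm h1 (hh0 x₀))
  have hTnF : T^[n] F = ∑ k ∈ Finset.range m, T^[(k+1)*n] f := by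
    rw [hF, starMap_iterate_sum hσ _ _ (fun k _ => ccz_iterate hσ ccf (k*n)) n]
    refine Finset.sum_congr rfl fun k _ => ?_
    rw [← Function.iterate_add_apply]
    congr 1
    ring
  have step1 : T^[n] F - F = T^[m*n] f - f := by
    rw [hTnF, hF, ← Finset.sum_sub_distrib,
      Finset.sum_range_sub (fun k => T^[k*n] f)]
    simp
  have tele : ∀ j, T^[(j+1)*m] f - T^[j*m] f = T^[j*m] h := by
    intro j
    have hjm : (j+1)*m = j*m + m := by ring
    rw [← heq, starMap_iterate_sub hσ (ccz_iterate hσ ccf m) ccf (j*m), hjm,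
      Function.iterate_add_apply]
  have step2 : T^[m*n] f - f = H := by
    calc T^[m*n] f - f = T^[n*m] f - T^[0*m] f := by rw [Nat.mul_comm m n]; simp
      _ = ∑ j ∈ Finset.range n, (T^[(j+1)*m] f - T^[j*m] f) :=
          (Finset.sum_range_sub (fun j => T^[j*m] f) n).symm
      _ = ∑ j ∈ Finset.range n, T^[j*m] h := Finset.sum_congr rfl fun j _ => tele j
      _ = H := hHdef.symm
  exact ⟨F, H, ccF.1, ccF.2, ccH.1, ccH.2, hH0, hHne, step1.trans step2⟩
end

section
/- Let X be a td-lcsc space, let σ : X → X be a surjective local homeomorphism, and let φ : X → X be a continuous section of σ (σ ∘ φ = id). For a ∈ ℤ define ψ_a : X → X by ψ_a = φ^a (the a-fold iterate of φ) if a ≥ 0, and ψ_a = σ^{−a} if a < 0. Then for all x, y ∈ X, all m, n ∈ ℕ with σ^m(x) = σ^n(y), and all a ∈ ℤ, there exists N ∈ ℕ such that σ^N(ψ_a(x)) = σ^N(ψ_{a+(m−n)}(y)). (This is the well-definedness of the map ρ_φ(x, m−n, y, a) = (ψ_a(x), ψ_{a+m−n}(y)) from the skew-product Deaconu–Renault groupoid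 𝒢(c) to the kernel groupoid c⁻¹(0).) -/
/-!
Since `φ` is a section of `σ`, applying `σ^[N]` to `ψ_a z` for `N ≥ a` just gives `σ^[N - a] z`:
for `a ≥ 0` the first `a` applications of `σ` undo `φ^[a]`. Taking `N = a + k + m` with `k = |a|`,
both sides of the claim become `σ^[k]` applied to `σ^[m] x = σ^[n] y`.
-/

/-- `ψ_a = φ^a` for `a ≥ 0` and `ψ_a = σ^{-a}` for `a < 0`. -/
noncomputable def psiMap {X : Type*} (σ φ : X → X) (a : ℤ) : X → X :=
  if 0 ≤ a then φ^[a.toNat] else σ^[(-a).toNat]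

theorem iterate_psiMap_of_leftInverse {X : Type*} {σ φ : X → X} (hsec : Function.LeftInverse σ φ)
    (a : ℤ) (j : ℕ) (z : X) (h : 0 ≤ a + j) :
    σ^[(a + j).toNat] (psiMap σ φ a z) = σ^[j] z := by
  unfold psiMap
  split_ifs with ha
  · rw [show (a + j).toNat = j + a.toNat by omega, Function.iterate_add_apply, hsec.iterate]
  · rw [← Function.iterate_add_apply]
    congr 1
    omega

theorem rho_phi_welldefined_general
    {X : Type*}
    (σ : X → X)
    (φ : X → X) (hsec : ∀ x : X, σ (φ x) = x) :
    ∀ (x y : X) (m n : ℕ) (a : ℤ),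
      σ^[m] x = σ^[n] y →
      ∃ N : ℕ,
        σ^[N] (psiMap σ φ a x) =
          σ^[N] (psiMap σ φ (a + ((m : ℤ) - (n : ℤ))) y) := by
  intro x y m n a hmn
  set k := a.natAbs
  refine ⟨(a + (k + m : ℕ)).toNat, ?_⟩
  have hN : a + (k + m : ℕ) = a + ((m : ℤ) - n) + (k + n : ℕ) := by push_cast; ring
  rw [iterate_psiMap_of_leftInverse hsec a _ x (by omega), hN,
    iterate_psiMap_of_leftInverse hsec _ _ y (by omega),
    Function.iterate_add_apply, Function.iterate_add_apply, hmn]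

/-- Well-definedness of the map
`ρ_φ(x, m−n, y, a) = (ψ_a(x), ψ_{a+(m−n)}(y))` from the skew product
`𝒢(c)` of the Deaconu–Renault groupoid to the kernel groupoid `c⁻¹(0)`. -/
theorem rho_phi_welldefined
    {X : Type*} [TopologicalSpace X]
    [LocallyCompactSpace X] [T2Space X] [SecondCountableTopology X]
    [TotallyDisconnectedSpace X]
    (σ : X → X) (hσ : IsLocalHomeomorph σ) (hsurj : Function.Surjective σ)
    (φ : X → X) (hφ : Continuous φ) (hsec : ∀ x : X, σ (φ x) = x) :
    ∀ (x y : X) (m n : ℕ) (a : ℤ),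
      σ^[m] x = σ^[n] y →
      ∃ N : ℕ,
        σ^[N] (psiMap σ φ a x) =
          σ^[N] (psiMap σ φ (a + ((m : ℤ) - (n : ℤ))) y) :=
  rho_phi_welldefined_general σ φ hsec
end

section
/- Let E be a directed graph in which no cycle has an entrance, and let x be an infinite path in E. Then either the edges x(0), x(1), x(2), … are pairwise distinct, or there exists a unique pair (n, p) ∈ ℕ × ℕ with p ≥ 1 such that x(n+p+i) = x(n+i) for all i ∈ ℕ and the edges x(0), …, x(n+p−1) are pairwise distinct. -/
/-!
If `x (n + p) = x n`, then `x n, …, x (n + p - 1)` is a cycle. Since it has no entrance, an edge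
whose range is that of one of its edges is that edge; this pushes the repetition one step
forward, so the path is periodic from `n` on. The pair `(n, p)` is then forced: `n + p` is the
first index at which an edge repeats, and `n` the index of the edge it repeats.
-/

/-- An infinite path in the directed graph with edge set `E` and
range/source maps `r, s : E → V`. -/
def IsInfinitePath {V E : Type*} (r s : E → V) (x : ℕ → E) : Prop :=
  ∀ i : ℕ, s (x i) = r (x (i + 1))

/-- `e 0, …, e (p-1)` is a cycle of length `p ≥ 1`. -/
def IsCycle {V E : Type*} (r s : E → V) (p : ℕ) (e : ℕ → E) : Prop :=
  1 ≤ p ∧ (∀ i : ℕ, i + 1 < p → s (e i) = r (e (i + 1))) ∧ s (e (p - 1)) = r (e 0)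

/-- The cycle `e 0, …, e (p-1)` has an entrance. -/
def CycleHasEntrance {V E : Type*} (r s : E → V) (p : ℕ) (e : ℕ → E) : Prop :=
  ∃ i < p, ∃ f : E, f ≠ e i ∧ r f = r (e i)

/-- No cycle in the graph has an entrance. -/
def NoCycleHasEntrance {V E : Type*} (r s : E → V) : Prop :=
  ∀ (p : ℕ) (e : ℕ → E), IsCycle r s p e → ¬ CycleHasEntrance r s p e

section Graph

variable {V E : Type*} {r s : E → V}

theorem NoCycleHasEntrance.eq_of_range_eq (h : NoCycleHasEntrance r s) {p : ℕ} {e : ℕ → E}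
    (hc : IsCycle r s p e) {i : ℕ} (hi : i < p) {f : E} (hf : r f = r (e i)) : f = e i := by
  by_contra hne
  exact h p e hc ⟨i, hi, f, hne, hf⟩

namespace IsInfinitePath

variable {x : ℕ → E}

theorem isCycle_shift (hx : IsInfinitePath r s x) {k p : ℕ} (hp : 0 < p)
    (h : r (x (k + p)) = r (x k)) : IsCycle r s p (fun m => x (k + m)) := by
  refine ⟨hp, fun i _ => hx (k + i), ?_⟩
  rw [hx, show k + (p - 1) + 1 = k + p by omega, h]
  rfl

theorem eq_of_range_eq (hnc : NoCycleHasEntrance r s) (hx : IsInfinitePath r s x) {k p : ℕ}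
    (hp : 0 < p) (h : r (x (k + p)) = r (x k)) : x (k + p) = x k :=
  hnc.eq_of_range_eq (hx.isCycle_shift hp h) hp h

theorem periodic_of_eq (hnc : NoCycleHasEntrance r s) (hx : IsInfinitePath r s x) {n p : ℕ}
    (hp : 0 < p) (h : x (n + p) = x n) (i : ℕ) : x (n + p + i) = x (n + i) := by
  induction i with
  | zero => exact h
  | succ i ih =>
    rw [show n + p + (i + 1) = n + (i + 1) + p by omega]
    refine hx.eq_of_range_eq hnc hp ?_
    calc r (x (n + (i + 1) + p)) = s (x (n + p + i)) := by
          rw [hx, show n + p + i + 1 = n + (i + 1) + p by omega]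
      _ = s (x (n + i)) := by rw [ih]
      _ = r (x (n + (i + 1))) := hx _

end IsInfinitePath

end Graph

section FirstRepeat

variable {α : Type*} {x : ℕ → α}

theorem exists_injOn_Iio_of_not_injective (hx : ¬ Function.Injective x) :
    ∃ n p, 0 < p ∧ x (n + p) = x n ∧ Set.InjOn x (Set.Iio (n + p)) := by
  classical
  have hrep : ∃ b, ∃ a < b, x b = x a := by
    simp only [Function.Injective, not_forall] at hx
    obtain ⟨a, b, hab, hne⟩ := hx
    rcases lt_or_gt_of_ne hne with h | h
    exacts [⟨b, a, h, hab.symm⟩, ⟨a, b, h, hab⟩]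
  obtain ⟨a, hab, hxab⟩ := Nat.find_spec hrep
  refine ⟨a, Nat.find hrep - a, by omega, by rwa [Nat.add_sub_cancel' hab.le], ?_⟩
  rw [Nat.add_sub_cancel' hab.le]
  intro u hu v hv huv
  by_contra hne
  rcases lt_or_gt_of_ne hne with h | h
  exacts [Nat.find_min hrep hv ⟨u, h, huv.symm⟩, Nat.find_min hrep hu ⟨v, h, huv⟩]

theorem le_add_of_injOn_Iio {n p m : ℕ} (hp : 0 < p) (h : x (n + p) = x n)
    (hinj : Set.InjOn x (Set.Iio m)) : m ≤ n + p := by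
  by_contra! hlt
  have := hinj (Set.mem_Iio.mpr hlt) (Set.mem_Iio.mpr (by omega)) h
  omega

theorem eq_of_injOn_Iio {n p n' p' : ℕ} (hp : 0 < p) (h : x (n + p) = x n)
    (hinj : Set.InjOn x (Set.Iio (n + p))) (hp' : 0 < p') (h' : x (n' + p') = x n')
    (hinj' : Set.InjOn x (Set.Iio (n' + p'))) : n = n' ∧ p = p' := by
  have hsum : n' + p' = n + p :=
    (le_add_of_injOn_Iio hp h hinj').antisymm (le_add_of_injOn_Iio hp' h' hinj)
  have hn : n = n' :=
    hinj (Set.mem_Iio.mpr (by omega)) (Set.mem_Iio.mpr (by omega)) (by rw [← h, ← hsum, h'])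
  omega

end FirstRepeat

/-- In a graph in which no cycle has an entrance, every infinite path either
has pairwise distinct edges, or is eventually periodic with unique data
`(n, p)`, `p ≥ 1`, such that the first `n + p` edges are pairwise distinct. -/
theorem infinitePath_injective_or_eventuallyPeriodic
    {V E : Type*} (r s : E → V) (hnc : NoCycleHasEntrance r s)
    (x : ℕ → E) (hx : IsInfinitePath r s x) :
    Function.Injective x ∨
      ∃! np : ℕ × ℕ, 1 ≤ np.2 ∧
        (∀ i : ℕ, x (np.1 + np.2 + i) = x (np.1 + i)) ∧
        Set.InjOn x (Set.Iio (np.1 + np.2)) := by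
  by_cases hinj : Function.Injective x
  · exact Or.inl hinj
  right
  obtain ⟨n, p, hp, hrep, hinjOn⟩ := exists_injOn_Iio_of_not_injective hinj
  refine ⟨(n, p), ⟨hp, hx.periodic_of_eq hnc hp hrep, hinjOn⟩, ?_⟩
  rintro ⟨n', p'⟩ ⟨hp', hper', hinjOn'⟩
  obtain ⟨rfl, rfl⟩ := eq_of_injOn_Iio hp' (hper' 0) hinjOn' hp hrep hinjOn
  rfl
end

section
/- Let E be a directed graph in which no cycle has an entrance. Let x be an infinite path that is eventually periodic with data (n, p), where n ≥ 1 and p ≥ 1. If y is an infinite path with σ(y) = x (i.e. y(i+1) = x(i) for all i), then y is eventually periodic with data (n+1, p). -/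
/-- `x` is eventually periodic with data `(n, p)`: `x (n+p+i) = x (n+i)` for
all `i`, and the edges `x 0, …, x (n+p-1)` are pairwise distinct. -/
def EventuallyPeriodicData {E : Type*} (x : ℕ → E) (n p : ℕ) : Prop :=
  (∀ i : ℕ, x (n + p + i) = x (n + i)) ∧ Set.InjOn x (Set.Iio (n + p))

/-! If `y 0 = x k` for some `k < n + p`, then `x 0, …, x k` is a cycle, since
`s (x k) = s (y 0) = r (x 0)`, and `x (k + 1)` ends at `r (x 0)`, so it must be `x 0` or the
cycle has an entrance. But `x (k + 1) ≠ x 0`: by injectivity if `k + 1 < n + p`, and because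
`x (n + p) = x n` with `n ≥ 1` otherwise. So `y 0` is a new edge, and prepending it to `x`
keeps the eventual periodicity, with `n` shifted by one. -/

theorem IsInfinitePath.isCycle_of_source_eq_range {V E : Type*} {r s : E → V} {x : ℕ → E}
    (hx : IsInfinitePath r s x) {k : ℕ} (hk : s (x k) = r (x 0)) : IsCycle r s (k + 1) x :=
  ⟨Nat.succ_pos k, fun i _ => hx i, hk⟩

theorem NoCycleHasEntrance.apply_succ_eq_apply_zero {V E : Type*} {r s : E → V}
    (hnc : NoCycleHasEntrance r s) {x : ℕ → E} (hx : IsInfinitePath r s x) {k : ℕ}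
    (hk : s (x k) = r (x 0)) : x (k + 1) = x 0 := by
  by_contra hne
  exact hnc (k + 1) x (hx.isCycle_of_source_eq_range hk)
    ⟨0, Nat.succ_pos k, x (k + 1), hne, (hx k).symm.trans hk⟩

namespace EventuallyPeriodicData

variable {E : Type*} {x : ℕ → E} {n p : ℕ}

theorem apply_ne_apply_zero (hx : EventuallyPeriodicData x n p) (hn : 1 ≤ n) (hp : 1 ≤ p)
    {j : ℕ} (hj₀ : 0 < j) (hj : j ≤ n + p) : x j ≠ x 0 := by
  obtain ⟨hper, hinj⟩ := hx
  rcases hj.lt_or_eq with hlt | rfl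
  · exact fun h => hj₀.ne' (hinj hlt (by simp; omega) h)
  · rw [← add_zero (n + p), hper 0, add_zero]
    exact fun h => (by omega : n ≠ 0) (hinj (by simp; omega) (by simp; omega) h)

theorem of_apply_succ_eq (hx : EventuallyPeriodicData x n p) {y : ℕ → E}
    (hshift : ∀ i, y (i + 1) = x i) (hy₀ : ∀ k < n + p, y 0 ≠ x k) :
    EventuallyPeriodicData y (n + 1) p := by
  obtain ⟨hper, hinj⟩ := hx
  refine ⟨fun i => ?_, ?_⟩
  · rw [show n + 1 + p + i = n + p + i + 1 by ring, show n + 1 + i = n + i + 1 by ring,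
      hshift, hshift, hper]
  · rintro (_ | a) ha (_ | b) hb hab <;> simp only [Set.mem_Iio] at ha hb
    · rfl
    · exact absurd (hab.trans (hshift b)) (hy₀ b (by omega))
    · exact absurd (hab.symm.trans (hshift a)) (hy₀ a (by omega))
    · rw [hshift, hshift] at hab
      exact congrArg (· + 1) (hinj (by simp; omega) (by simp; omega) hab)

end EventuallyPeriodicData

/-- If no cycle has an entrance, `x` is eventually periodic with data `(n, p)`
where `n, p ≥ 1`, and `σ(y) = x`, then `y` is eventually periodic with data
`(n+1, p)`. -/
theorem shift_preimage_eventuallyPeriodic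
    {V E : Type*} (r s : E → V) (hnc : NoCycleHasEntrance r s)
    (x : ℕ → E) (hx : IsInfinitePath r s x)
    (n p : ℕ) (hn : 1 ≤ n) (hp : 1 ≤ p)
    (hxper : EventuallyPeriodicData x n p)
    (y : ℕ → E) (hy : IsInfinitePath r s y)
    (hshift : ∀ i : ℕ, y (i + 1) = x i) :
    EventuallyPeriodicData y (n + 1) p := by
  refine hxper.of_apply_succ_eq hshift fun k hk hk₀ => ?_
  have hsource : s (x k) = r (x 0) := by rw [← hk₀, ← hshift 0]; exact hy 0
  exact hxper.apply_ne_apply_zero hn hp (Nat.succ_pos k) hk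
    (hnc.apply_succ_eq_apply_zero hx hsource)
end

section
/- Let E be a directed graph in which no cycle has an entrance. Let x be an infinite path that is eventually periodic with data (0, p) for some p ≥ 1 (so x(p+i) = x(i) for all i and x(0), …, x(p−1) are pairwise distinct). If y is an infinite path with σ^p(y) = x (i.e. y(p+i) = x(i) for all i) and y is eventually periodic with data (0, q) for some q ≥ 1, then y = x. -/
theorem EventuallyPeriodicData.periodic {E : Type*} {x : ℕ → E} {p : ℕ}
    (h : EventuallyPeriodicData x 0 p) : Function.Periodic x p := fun i => by
  simpa only [zero_add, add_comm i] using h.1 i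

/-- `p * q` is a period of `y`, and `p * q = p + (q - 1) * p`, so
`y i = y (p + ((q - 1) * p + i)) = x ((q - 1) * p + i) = x i`. -/
theorem Function.Periodic.eq_of_shift_eq {α : Type*} {x y : ℕ → α} {p q : ℕ}
    (hx : Function.Periodic x p) (hy : Function.Periodic y q) (hq : 1 ≤ q)
    (hshift : ∀ i, y (p + i) = x i) : y = x := by
  obtain ⟨k, rfl⟩ : ∃ k, q = k + 1 := ⟨q - 1, by omega⟩
  funext i
  calc y i = y (i + p * (k + 1)) := ((hy.nat_mul p) i).symm
    _ = y (p + (i + k * p)) := by ring_nf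
    _ = x i := (hshift _).trans (hx.nat_mul k i)

theorem periodic_shift_preimage_eq_general
    {E : Type*}
    (x : ℕ → E)
    (p : ℕ) (hxper : EventuallyPeriodicData x 0 p)
    (y : ℕ → E)
    (hshift : ∀ i : ℕ, y (p + i) = x i)
    (q : ℕ) (hq : 1 ≤ q) (hyper : EventuallyPeriodicData y 0 q) :
    y = x :=
  hxper.periodic.eq_of_shift_eq hyper.periodic hq hshift

/-- If no cycle has an entrance, `x` is periodic with data `(0, p)`,
`σ^p(y) = x`, and `y` is periodic with data `(0, q)`, then `y = x`. -/
theorem periodic_shift_preimage_eq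
    {V E : Type*} (r s : E → V) (hnc : NoCycleHasEntrance r s)
    (x : ℕ → E) (hx : IsInfinitePath r s x)
    (p : ℕ) (hp : 1 ≤ p) (hxper : EventuallyPeriodicData x 0 p)
    (y : ℕ → E) (hy : IsInfinitePath r s y)
    (hshift : ∀ i : ℕ, y (p + i) = x i)
    (q : ℕ) (hq : 1 ≤ q) (hyper : EventuallyPeriodicData y 0 q) :
    y = x :=
  periodic_shift_preimage_eq_general x p hxper y hshift q hq hyper
end

section
/- Let E be a directed graph in which no cycle has an entrance, let x ∈ E^∞ be an infinite path whose edges x(0), x(1), … are pairwise distinct, and let F : E^∞ → ℤ be continuous with compact support. Then there exists N ∈ ℕ such that F(σ^k(x)) = 0 for all k ≥ N. -/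
/-- The shift map on the infinite path space `E^∞`. -/
def shiftPath {V E : Type*} (r s : E → V)
    (x : {z : ℕ → E // IsInfinitePath r s z}) :
    {z : ℕ → E // IsInfinitePath r s z} :=
  ⟨fun i => x.val (i + 1), fun i => x.property (i + 1)⟩

lemma shiftPath_iterate_val {V E : Type*} (r s : E → V)
    (x : {z : ℕ → E // IsInfinitePath r s z}) (k i : ℕ) :
    ((shiftPath r s)^[k] x).val i = x.val (i + k) := by
  induction k generalizing x i with
  | zero => rfl
  | succ n ih =>
    rw [Function.iterate_succ_apply, ih]
    exact congrArg x.val (Nat.add_assoc i n 1).symm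

lemma IsCompact.finite_image_eval_subtype {E : Type*} [TopologicalSpace E] [DiscreteTopology E]
    {P : (ℕ → E) → Prop} {K : Set {z : ℕ → E // P z}} (hK : IsCompact K) (i : ℕ) :
    ((fun z : {z : ℕ → E // P z} => z.val i) '' K).Finite :=
  (hK.image ((continuous_apply i).comp continuous_subtype_val)).finite_of_discrete

theorem compactSupport_vanishes_along_injective_path_general
    {V E : Type*} [TopologicalSpace E] [DiscreteTopology E]
    (r s : E → V)
    (x : {z : ℕ → E // IsInfinitePath r s z})
    (hinj : Function.Injective x.val)
    (F : {z : ℕ → E // IsInfinitePath r s z} → ℤ)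
    (hFsupp : HasCompactSupport F) :
    ∃ N : ℕ, ∀ k : ℕ, N ≤ k → F ((shiftPath r s)^[k] x) = 0 := by
  set firstEdges := (fun z : {z : ℕ → E // IsInfinitePath r s z} => z.val 0) '' tsupport F
  have hfin : firstEdges.Finite := hFsupp.isCompact.finite_image_eval_subtype 0
  have hevent : ∀ᶠ k in Filter.atTop, x.val k ∉ firstEdges := by
    rw [← Nat.cofinite_eq_atTop]
    exact hinj.tendsto_cofinite.eventually hfin.eventually_cofinite_notMem
  obtain ⟨N, hN⟩ := Filter.eventually_atTop.mp hevent
  refine ⟨N, fun k hk => image_eq_zero_of_notMem_tsupport fun hmem => hN k hk ?_⟩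
  exact ⟨_, hmem, by simpa using shiftPath_iterate_val r s x k 0⟩

/-- If no cycle has an entrance and `x ∈ E^∞` has pairwise distinct edges,
then any `F ∈ C_c(E^∞, ℤ)` vanishes on `σ^k(x)` for all large `k`. -/
theorem compactSupport_vanishes_along_injective_path
    {V E : Type*} [TopologicalSpace E] [DiscreteTopology E]
    (r s : E → V) (hnc : NoCycleHasEntrance r s)
    (x : {z : ℕ → E // IsInfinitePath r s z})
    (hinj : Function.Injective x.val)
    (F : {z : ℕ → E // IsInfinitePath r s z} → ℤ)
    (hFcont : Continuous F) (hFsupp : HasCompactSupport F) :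
    ∃ N : ℕ, ∀ k : ℕ, N ≤ k → F ((shiftPath r s)^[k] x) = 0 :=
  compactSupport_vanishes_along_injective_path_general r s x hinj F hFsupp
end

section
/- Let E be a countable row-finite directed graph with no sources and no sinks, let E^∞ be its infinite path space with the cylinder topology, and let σ : E^∞ → E^∞ be the shift. Then the following are equivalent: (a) no cycle in E has an entrance; (b) for every continuous compactly supported f : E^∞ → ℤ and every continuous compactly supported h : E^∞ → ℤ with h ≥ 0, if σ_*(f)(x) − f(x) = h(x) for all x ∈ E^∞ (where σ_*(f)(x) = Σ_{y : σ(y) = x} f(y)), then h = 0. -/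
namespace GraphPos
open scoped Classical

open Set Function Topology

variable {V E : Type*} [TopologicalSpace E] [DiscreteTopology E] (r s : E → V)

abbrev PS := {z : ℕ → E // IsInfinitePath r s z}

/-- cylinder set -/
def Cyl (z : ℕ → E) (n : ℕ) : Set (PS r s) := {x | ∀ i < n, x.1 i = z i}

lemma continuous_eval (i : ℕ) : Continuous fun x : PS r s => x.1 i :=
  (continuous_apply i).comp continuous_subtype_val

lemma isOpen_cyl (z : ℕ → E) (n : ℕ) : IsOpen (Cyl r s z n) := by
  have : Cyl r s z n = ⋂ i ∈ Finset.range n, (fun x : PS r s => x.1 i) ⁻¹' {z i} := by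
    ext x; simp [Cyl]
  rw [this]
  exact isOpen_biInter_finset fun i _ =>
    (isOpen_discrete _).preimage (continuous_eval r s i)

lemma exists_cyl_subset {U : Set (PS r s)} (hU : IsOpen U) {x : PS r s} (hx : x ∈ U) :
    ∃ n, Cyl r s x.1 n ⊆ U := by
  rw [isOpen_induced_iff] at hU
  obtain ⟨U', hU', rfl⟩ := hU
  obtain ⟨I, u, h1, h2⟩ := (isOpen_pi_iff.1 hU') x.1 hx
  refine ⟨I.sup id + 1, fun y hy => ?_⟩
  refine h2 fun i hi => ?_
  have hiI : i < I.sup id + 1 := Nat.lt_succ_of_le (Finset.le_sup (f := id) hi)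
  rw [hy i hiI]
  exact (h1 i hi).2

/-- a function depending on finitely many coordinates is continuous -/
lemma continuous_of_local {D : ℕ} (f : PS r s → ℤ)
    (hf : ∀ x y : PS r s, (∀ i < D, x.1 i = y.1 i) → f x = f y) : Continuous f := by
  rw [continuous_discrete_rng]
  intro b
  rw [isOpen_iff_mem_nhds]
  intro x hx
  refine Filter.mem_of_superset ((isOpen_cyl r s x.1 D).mem_nhds ?_) ?_
  · intro i _; rfl
  · intro y hy
    have := hf y x fun i hi => hy i hi
    simp only [mem_preimage, mem_singleton_iff] at hx ⊢
    rw [this, hx]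

/-- locality of continuous compactly supported functions -/
lemma exists_local {f : PS r s → ℤ} (hf : Continuous f) (hcs : HasCompactSupport f) :
    ∃ D, 1 ≤ D ∧ ∀ x y : PS r s, (∀ i < D, x.1 i = y.1 i) → f x = f y := by
  classical
  have hloc : ∀ t : PS r s, ∃ n, ∀ y ∈ Cyl r s t.1 n, f y = f t := by
    intro t
    have : IsOpen (f ⁻¹' {f t}) := (isOpen_discrete _).preimage hf
    obtain ⟨n, hn⟩ := exists_cyl_subset r s this (x := t) rfl
    exact ⟨n, fun y hy => hn hy⟩
  choose n hn using hloc
  obtain ⟨T, hT⟩ := hcs.elim_finite_subcover (fun t : tsupport f => Cyl r s (t : PS r s).1 (n t))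
    (fun t => isOpen_cyl r s _ _) (fun x hx => mem_iUnion.2 ⟨⟨x, hx⟩, fun i _ => rfl⟩)
  set D := T.sup (fun t => n t) + 1 with hD
  refine ⟨D, Nat.le_add_left 1 _, fun x y hxy => ?_⟩
  have key : ∀ t ∈ T, ∀ z w : PS r s, (∀ i < D, z.1 i = w.1 i) →
      z ∈ Cyl r s (t : PS r s).1 (n t) → f z = f w := by
    intro t ht z w hzw hz
    have hw : w ∈ Cyl r s (t : PS r s).1 (n t) := by
      intro i hi
      have hiD : i < D := lt_of_lt_of_le hi (Nat.le_succ_of_le (Finset.le_sup (f := fun t : ↥(tsupport f) => n ↑t) ht))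
      rw [← hzw i hiD]; exact hz i hi
    rw [hn t z hz, hn t w hw]
  by_cases hx : x ∈ tsupport f
  · obtain ⟨t, ht, hxt⟩ := mem_iUnion₂.1 (hT hx)
    exact key t ht x y hxy hxt
  · by_cases hy : y ∈ tsupport f
    · obtain ⟨t, ht, hyt⟩ := mem_iUnion₂.1 (hT hy)
      exact (key t ht y x (fun i hi => (hxy i hi).symm) hyt).symm
    · rw [image_eq_zero_of_notMem_tsupport hx, image_eq_zero_of_notMem_tsupport hy]

/-- cylinders are compact -/
lemma isCompact_cyl (hrow : ∀ v : V, {e : E | r e = v}.Finite)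
    (z : ℕ → E) {n : ℕ} (hn : 1 ≤ n) : IsCompact (Cyl r s z n) := by
  rw [Topology.IsEmbedding.subtypeVal.isCompact_iff]
  have himg : (Subtype.val '' Cyl r s z n)
      = {w : ℕ → E | IsInfinitePath r s w ∧ ∀ i < n, w i = z i} := by
    ext w
    constructor
    · rintro ⟨x, hx, rfl⟩; exact ⟨x.2, hx⟩
    · rintro ⟨hw, hw2⟩; exact ⟨⟨w, hw⟩, hw2, rfl⟩
  rw [himg]
  set C := {w : ℕ → E | IsInfinitePath r s w ∧ ∀ i < n, w i = z i} with hC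
  have hSfin : ∀ j : ℕ, ((fun w : ℕ → E => w j) '' C).Finite := by
    intro j
    induction j with
    | zero =>
      refine Finite.subset (finite_singleton (z 0)) ?_
      rintro _ ⟨w, hw, rfl⟩
      exact hw.2 0 hn
    | succ j ih =>
      refine Finite.subset (ih.biUnion (fun e _ => hrow (s e))) ?_
      rintro _ ⟨w, hw, rfl⟩
      exact mem_biUnion ⟨w, hw, rfl⟩ (hw.1 j).symm
  have hclosed : IsClosed C := by
    have : C = (⋂ i, (fun w : ℕ → E => (w i, w (i+1))) ⁻¹' {p : E × E | s p.1 = r p.2})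
        ∩ ⋂ i ∈ Finset.range n, (fun w : ℕ → E => w i) ⁻¹' {z i} := by
      ext w; simp [hC, IsInfinitePath]
    rw [this]
    refine IsClosed.inter (isClosed_iInter fun i => IsClosed.preimage
      (by continuity) (isClosed_discrete _)) ?_
    exact isClosed_biInter fun i _ => IsClosed.preimage (continuous_apply i) (isClosed_discrete _)
  refine IsCompact.of_isClosed_subset (isCompact_univ_pi fun j => (hSfin j).isCompact)
    hclosed ?_
  intro w hw
  simp only [mem_univ_pi]
  exact fun j => ⟨w, hw, rfl⟩



section Paths

variable (hnosource : ∀ v : V, ∃ e : E, r e = v)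

/-- a canonical infinite path starting at a vertex -/
noncomputable def fvSeq (v : V) : ℕ → E
  | 0 => (hnosource v).choose
  | n+1 => (hnosource (s (fvSeq v n))).choose

lemma fvSeq_root (v : V) : r (fvSeq r s hnosource v 0) = v := (hnosource v).choose_spec

lemma fvSeq_chain (v : V) (n : ℕ) :
    s (fvSeq r s hnosource v n) = r (fvSeq r s hnosource v (n+1)) :=
  ((hnosource (s (fvSeq r s hnosource v n))).choose_spec).symm

/-- prepend an edge to an infinite path -/
def consP (e : E) (x : PS r s) (he : s e = r (x.1 0)) : PS r s :=
  ⟨fun i => Nat.casesOn i e (fun n => x.1 n), by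
    intro i
    cases i with
    | zero => exact he
    | succ n => exact x.2 n⟩

@[simp] lemma consP_zero (e : E) (x : PS r s) (he) : (consP r s e x he).1 0 = e := rfl
@[simp] lemma consP_succ (e : E) (x : PS r s) (he) (i : ℕ) :
    (consP r s e x he).1 (i+1) = x.1 i := rfl

lemma shift_consP (e : E) (x : PS r s) (he) : shiftPath r s (consP r s e x he) = x := by
  apply Subtype.ext; funext i; rfl

/-- total version of consP -/
noncomputable def consP' (e : E) (x : PS r s) : PS r s :=
  if he : s e = r (x.1 0) then consP r s e x he else x

lemma consP'_of (e : E) (x : PS r s) (he : s e = r (x.1 0)) :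
    consP' r s e x = consP r s e x he := dif_pos he

/-- extend a finite valid prefix to an infinite path -/
noncomputable def extSeq (q : ℕ → E) (D : ℕ) : ℕ → E :=
  fun i => if i < D then q i else fvSeq r s hnosource (s (q (D-1))) (i - D)

lemma extSeq_lt (q : ℕ → E) {D i : ℕ} (h : i < D) :
    extSeq r s hnosource q D i = q i := if_pos h

noncomputable def extP (q : ℕ → E) (D : ℕ) (hD : 1 ≤ D)
    (hq : ∀ i, i + 1 < D → s (q i) = r (q (i+1))) : PS r s := by
  refine ⟨extSeq r s hnosource q D, fun i => ?_⟩
  rcases lt_trichotomy (i+1) D with h | h | h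
  · rw [extSeq_lt r s hnosource q (Nat.lt_of_succ_lt h), extSeq_lt r s hnosource q h]
    exact hq i h
  · have hi : i < D := by omega
    have hiD : i = D - 1 := by omega
    rw [extSeq_lt r s hnosource q hi]
    have : ¬ (i + 1 < D) := by omega
    simp only [extSeq, if_neg this]
    have h2 : i + 1 - D = 0 := by omega
    rw [h2, fvSeq_root r s hnosource (s (q (D-1))), hiD]
  · have h1 : ¬ (i < D) := by omega
    have h2 : ¬ (i + 1 < D) := by omega
    simp only [extSeq, if_neg h1, if_neg h2]
    have h3 : i + 1 - D = (i - D) + 1 := by omega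
    rw [h3]
    exact fvSeq_chain r s hnosource _ _

noncomputable def fromV (v : V) : PS r s :=
  ⟨fvSeq r s hnosource v, fun i => fvSeq_chain r s hnosource v i⟩

lemma fromV_root (v : V) : r ((fromV r s hnosource v).1 0) = v := fvSeq_root r s hnosource v

lemma extP_lt (q : ℕ → E) (D : ℕ) (hD) (hq) {i : ℕ} (h : i < D) :
    (extP r s hnosource q D hD hq).1 i = q i := extSeq_lt r s hnosource q h

end Paths

section FiberSum

variable (hnosource : ∀ v : V, ∃ e : E, r e = v)

lemma fiber_eq_image (x : PS r s) :
    {y : PS r s | shiftPath r s y = x} = (fun e => consP' r s e x) '' {e | s e = r (x.1 0)} := by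
  ext y
  constructor
  · intro hy
    have hy' : ∀ i, y.1 (i+1) = x.1 i := fun i => congrFun (congrArg Subtype.val hy) i
    have he : s (y.1 0) = r (x.1 0) := by rw [← hy' 0]; exact y.2 0
    refine ⟨y.1 0, he, ?_⟩
    show consP' r s (y.1 0) x = y
    rw [consP'_of r s _ x he]
    apply Subtype.ext; funext i
    cases i with
    | zero => rfl
    | succ n => exact (hy' n).symm
  · rintro ⟨e, he, rfl⟩
    show shiftPath r s (consP' r s e x) = x
    rw [consP'_of r s e x he]
    exact shift_consP r s e x he

lemma consP'_injOn (x : PS r s) : Set.InjOn (fun e => consP' r s e x) {e | s e = r (x.1 0)} := by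
  intro a ha b hb hab
  have hab' : consP' r s a x = consP' r s b x := hab
  have : (consP' r s a x).1 0 = (consP' r s b x).1 0 := by rw [hab']
  rwa [consP'_of r s a x ha, consP'_of r s b x hb] at this

/-- The master fiber-sum lemma -/
lemma fiber_sum (F : PS r s → ℤ) (x : PS r s) (T : Finset E)
    (hT1 : ∀ e ∈ T, s e = r (x.1 0))
    (hT2 : ∀ e, s e = r (x.1 0) → F (consP' r s e x) ≠ 0 → e ∈ T) :
    (∑ᶠ (y) (_ : shiftPath r s y = x), F y) = ∑ e ∈ T, F (consP' r s e x) := by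
  have h1 : (∑ᶠ (y) (_ : shiftPath r s y = x), F y)
      = ∑ᶠ y ∈ {y : PS r s | shiftPath r s y = x}, F y := rfl
  rw [h1, fiber_eq_image r s x, finsum_mem_image (consP'_injOn r s x)]
  apply finsum_mem_eq_sum_of_inter_support_eq
  ext e
  simp only [Set.mem_inter_iff, Set.mem_setOf_eq, Function.mem_support, Finset.coe_sort_coe,
    Finset.mem_coe]
  exact ⟨fun ⟨he, hne⟩ => ⟨hT2 e he hne, hne⟩, fun ⟨heT, hne⟩ => ⟨hT1 e heT, hne⟩⟩

end FiberSum


section PartA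

variable (hrow : ∀ v : V, {e : E | r e = v}.Finite)
variable (hnosource : ∀ v : V, ∃ e : E, r e = v)

variable (p : ℕ) (c : ℕ → E)

/-- the condition `x ∈ Z(c_k, ..., c_{p-1})` -/
def Pcond (k : ℕ) (x : PS r s) : Prop := ∀ j, j + k < p → x.1 j = c (j + k)

noncomputable def Fc (x : PS r s) : ℤ :=
  ∑ k ∈ Finset.range p, if Pcond r s p c k x then 1 else 0

noncomputable def Hc (x : PS r s) : ℤ :=
  (if r (x.1 0) = r (c 0) then 1 else 0) - (if Pcond r s p c 0 x then 1 else 0)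

include hrow hnosource in
lemma partA (hcyc : IsCycle r s p c) (g : E) (hg : g ≠ c 0) (hgr : r g = r (c 0)) :
    ∃ F H : PS r s → ℤ, Continuous F ∧ HasCompactSupport F ∧ Continuous H ∧
      HasCompactSupport H ∧ (∀ x, 0 ≤ H x) ∧
      (∀ x, (∑ᶠ (y) (_ : shiftPath r s y = x), F y) - F x = H x) ∧ H ≠ 0 := by
  obtain ⟨hp, hchain, hwrap⟩ := hcyc
  set F := Fc r s p c with hF
  set H := Hc r s p c with hH
  -- locality of conditions
  have hPloc : ∀ k, ∀ x y : PS r s, (∀ i < p, x.1 i = y.1 i) →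
      (Pcond r s p c k x ↔ Pcond r s p c k y) := by
    intro k x y hxy
    constructor <;> intro hP j hj
    · rw [← hxy j (by omega)]; exact hP j hj
    · rw [hxy j (by omega)]; exact hP j hj
  have hFloc : ∀ x y : PS r s, (∀ i < p, x.1 i = y.1 i) → F x = F y := by
    intro x y hxy
    refine Finset.sum_congr rfl fun k _ => ?_
    by_cases hP : Pcond r s p c k x
    · rw [if_pos hP, if_pos ((hPloc k x y hxy).1 hP)]
    · rw [if_neg hP, if_neg (fun hq => hP ((hPloc k x y hxy).2 hq))]
  have hHloc : ∀ x y : PS r s, (∀ i < p, x.1 i = y.1 i) → H x = H y := by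
    intro x y hxy
    have h0 : r (x.1 0) = r (y.1 0) := by rw [hxy 0 hp]
    rw [hH, Hc, Hc, h0]
    by_cases hP : Pcond r s p c 0 x
    · rw [if_pos hP, if_pos ((hPloc 0 x y hxy).1 hP)]
    · rw [if_neg hP, if_neg (fun hq => hP ((hPloc 0 x y hxy).2 hq))]
  refine ⟨F, H, continuous_of_local r s F hFloc, ?_, continuous_of_local r s H hHloc, ?_,
    ?_, ?_, ?_⟩
  -- compact support of F
  · refine HasCompactSupport.intro (K := ⋃ k ∈ Finset.range p,
      Cyl r s (fun j => c (j + k)) (p - k)) ?_ ?_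
    · exact (Finset.range p).finite_toSet.isCompact_biUnion
        (fun k hk => isCompact_cyl r s hrow _ (by simp at hk; omega))
    · intro x hx
      by_contra hne
      have : ∃ k ∈ Finset.range p, ¬ ((if Pcond r s p c k x then (1:ℤ) else 0) = 0) := by
        by_contra hall
        push_neg at hall
        exact hne (Finset.sum_eq_zero hall)
      obtain ⟨k, hk, hne2⟩ := this
      have hP : Pcond r s p c k x := by by_contra hq; exact hne2 (if_neg hq)
      exact hx (Set.mem_biUnion hk (fun i hi => hP i (by omega)))
  -- compact support of H
  · refine HasCompactSupport.intro (K := ⋃ e ∈ (hrow (r (c 0))).toFinset,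
      Cyl r s (fun _ => e) 1) ?_ ?_
    · exact (hrow (r (c 0))).toFinset.finite_toSet.isCompact_biUnion
        (fun e _ => isCompact_cyl r s hrow _ le_rfl)
    · intro x hx
      by_cases hr : r (x.1 0) = r (c 0)
      · have hmem : x ∈ ⋃ e ∈ (hrow (r (c 0))).toFinset, Cyl r s (fun _ => e) 1 := by
          refine Set.mem_biUnion ((Set.Finite.mem_toFinset _).2 hr) ?_
          intro i hi
          have hi0 : i = 0 := by omega
          rw [hi0]
        exact absurd hmem hx
      · have hP : ¬ Pcond r s p c 0 x := fun hP => hr (by rw [hP 0 (by omega)])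
        simp [hH, Hc, hr, hP]
  -- nonnegativity
  · intro x
    rw [hH, Hc]
    by_cases hP : Pcond r s p c 0 x
    · have : r (x.1 0) = r (c 0) := by rw [hP 0 (by omega)]
      simp [this, hP]
    · rw [if_neg hP, sub_zero]
      by_cases hr : r (x.1 0) = r (c 0) <;> simp [hr]
  -- the functional equation
  · intro x
    have hfib : (∑ᶠ (y) (_ : shiftPath r s y = x), F y)
        = ∑ e ∈ ((Finset.range p).image c).filter (fun e => s e = r (x.1 0)),
            F (consP' r s e x) := by
      refine fiber_sum r s F x _ (fun e he => (Finset.mem_filter.1 he).2) ?_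
      intro e he hne
      rw [hF, Fc, consP'_of r s e x he] at hne
      have : ∃ k ∈ Finset.range p,
          ¬ ((if Pcond r s p c k (consP r s e x he) then (1:ℤ) else 0) = 0) := by
        by_contra hall
        push_neg at hall
        exact hne (Finset.sum_eq_zero hall)
      obtain ⟨k, hk, hne2⟩ := this
      have hP : Pcond r s p c k (consP r s e x he) := by
        by_contra hq; exact hne2 (if_neg hq)
      have he2 : e = c k := by
        have := hP 0 (by simp at hk; omega)
        simpa using this
      refine Finset.mem_filter.2 ⟨Finset.mem_image.2 ⟨k, hk, he2.symm⟩, he⟩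
    rw [hfib]
    -- rewrite each summand
    have hsummand : ∀ e ∈ ((Finset.range p).image c).filter (fun e => s e = r (x.1 0)),
        F (consP' r s e x) = ∑ k ∈ Finset.range p,
          if (e = c k ∧ Pcond r s p c (k+1) x) then (1:ℤ) else 0 := by
      intro e he
      have hse : s e = r (x.1 0) := (Finset.mem_filter.1 he).2
      rw [hF, Fc, consP'_of r s e x hse]
      refine Finset.sum_congr rfl fun k hk => ?_
      simp only [Finset.mem_range] at hk
      have hiff : Pcond r s p c k (consP r s e x hse) ↔ (e = c k ∧ Pcond r s p c (k+1) x) := by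
        constructor
        · intro hP
          refine ⟨by simpa using hP 0 (by omega), fun j hj => ?_⟩
          have := hP (j+1) (by omega)
          rw [consP_succ] at this
          rw [this]
          congr 1
          omega
        · rintro ⟨rfl, hP⟩
          intro j hj
          cases j with
          | zero => simp
          | succ n =>
            rw [consP_succ, hP n (by omega)]
            congr 1
            omega
      by_cases hP : Pcond r s p c k (consP r s e x hse)
      · rw [if_pos hP, if_pos (hiff.1 hP)]
      · rw [if_neg hP, if_neg (fun hq => hP (hiff.2 hq))]
    rw [Finset.sum_congr rfl hsummand, Finset.sum_comm]
    -- inner sums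
    have hinner : ∀ k ∈ Finset.range p,
        (∑ e ∈ ((Finset.range p).image c).filter (fun e => s e = r (x.1 0)),
          if (e = c k ∧ Pcond r s p c (k+1) x) then (1:ℤ) else 0)
        = if (Pcond r s p c (k+1) x ∧ s (c k) = r (x.1 0)) then 1 else 0 := by
      intro k hk
      simp only [Finset.mem_range] at hk
      by_cases hQ : Pcond r s p c (k+1) x
      · simp only [hQ, and_true, true_and]
        rw [Finset.sum_ite_eq' _ (c k) (fun _ => (1:ℤ))]
        congr 1
        simp only [Finset.mem_filter, Finset.mem_image, eq_iff_iff]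
        constructor
        · rintro ⟨_, hs⟩; exact hs
        · intro hs; exact ⟨⟨k, Finset.mem_range.2 hk, rfl⟩, hs⟩
      · simp [hQ]
    rw [Finset.sum_congr rfl hinner]
    -- split the last term
    obtain ⟨p', rfl⟩ : ∃ p', p = p' + 1 := ⟨p - 1, by omega⟩
    rw [Finset.sum_range_succ]
    have hlast : (if (Pcond r s (p'+1) c (p'+1) x ∧ s (c p') = r (x.1 0)) then (1:ℤ) else 0)
        = if r (x.1 0) = r (c 0) then 1 else 0 := by
      have hPvac : Pcond r s (p'+1) c (p'+1) x := fun j hj => by omega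
      have hw : s (c p') = r (c 0) := by simpa using hwrap
      by_cases hr : r (x.1 0) = r (c 0)
      · rw [if_pos ⟨hPvac, by rw [hw, hr]⟩, if_pos hr]
      · rw [if_neg (fun hand => hr (by rw [← hand.2, hw])), if_neg hr]
    rw [hlast]
    have hmid : ∀ k ∈ Finset.range p',
        (if (Pcond r s (p'+1) c (k+1) x ∧ s (c k) = r (x.1 0)) then (1:ℤ) else 0)
        = if Pcond r s (p'+1) c (k+1) x then 1 else 0 := by
      intro k hk
      simp only [Finset.mem_range] at hk
      by_cases hQ : Pcond r s (p'+1) c (k+1) x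
      · rw [if_pos hQ]
        refine if_pos ⟨hQ, ?_⟩
        have h0 : x.1 0 = c (k+1) := by simpa using hQ 0 (by omega)
        rw [h0, ← hchain k (by omega)]
      · rw [if_neg (fun hand => hQ hand.1), if_neg hQ]
    rw [Finset.sum_congr rfl hmid]
    -- now the left side is ∑_{k<p'} [P (k+1)] + [r x0 = r c0]; F x = [P 0] + ∑_{k<p'} [P(k+1)]
    have hFx : F x = (if Pcond r s (p'+1) c 0 x then (1:ℤ) else 0)
        + ∑ k ∈ Finset.range p', (if Pcond r s (p'+1) c (k+1) x then (1:ℤ) else 0) := by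
      rw [hF, Fc, Finset.sum_range_succ']
      ring
    rw [hFx, hH, Hc]
    ring
  -- H ≠ 0
  · intro h0
    have hroot : s g = r ((fromV r s hnosource (s g)).1 0) := (fromV_root r s hnosource (s g)).symm
    set xg := consP r s g (fromV r s hnosource (s g)) hroot with hxg
    have h1 : H xg = 1 := by
      rw [hH, Hc]
      have hr1 : r (xg.1 0) = r (c 0) := by rw [hxg, consP_zero, hgr]
      have hP : ¬ Pcond r s p c 0 xg := by
        intro hP
        have := hP 0 (by omega)
        rw [hxg, consP_zero] at this
        exact hg (by simpa using this)
      rw [if_pos hr1, if_neg hP]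
      ring
    rw [h0] at h1
    simp at h1

end PartA


section PartM

variable (hrow : ∀ v : V, {e : E | r e = v}.Finite)
variable (hnosource : ∀ v : V, ∃ e : E, r e = v)

/-- admissible descending paths: from `u`, staying in `V₀ \ B`, ending in `B` -/
def okP (B V₀ : Finset V) : V → List E → Prop
  | u, [] => u ∈ B
  | u, g :: l => u ∈ V₀ ∧ u ∉ B ∧ r g = u ∧ okP B V₀ (s g) l

/-- vertex visited at position `k` -/
def vertAt (u : V) : List E → ℕ → V
  | _, 0 => u
  | [], _+1 => u
  | g :: l, k+1 => vertAt (s g) l k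

@[simp] lemma vertAt_zero (u : V) (l : List E) : vertAt s u l 0 = u := by
  cases l <;> rfl

@[simp] lemma vertAt_cons (u : V) (g : E) (l : List E) (k : ℕ) :
    vertAt s u (g :: l) (k+1) = vertAt s (s g) l k := rfl

lemma okP_props (B V₀ : Finset V) (d : E) :
    ∀ (l : List E) (u : V), okP r s B V₀ u l →
      (∀ k < l.length, vertAt s u l k ∈ V₀ ∧ vertAt s u l k ∉ B ∧
        r (l.getD k d) = vertAt s u l k ∧ s (l.getD k d) = vertAt s u l (k+1))
      ∧ vertAt s u l l.length ∈ B := by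
  intro l
  induction l with
  | nil => intro u hok; exact ⟨fun k hk => absurd hk (by simp), hok⟩
  | cons g t ih =>
    intro u hok
    obtain ⟨hu1, hu2, hu3, hok'⟩ := hok
    obtain ⟨ih1, ih2⟩ := ih (s g) hok'
    constructor
    · intro k hk
      cases k with
      | zero => exact ⟨hu1, hu2, hu3, by simp⟩
      | succ n =>
        have hn : n < t.length := by simpa using hk
        exact ih1 n hn
    · exact ih2

lemma okP_edges (B V₀ : Finset V) :
    ∀ (l : List E) (u : V), okP r s B V₀ u l → ∀ g ∈ l, r g ∈ V₀ := by
  intro l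
  induction l with
  | nil => intro u _ g hg; simp at hg
  | cons g t ih =>
    intro u hok g' hg'
    obtain ⟨hu1, _, hu3, hok'⟩ := hok
    rcases List.mem_cons.1 hg' with rfl | hmem
    · rwa [hu3]
    · exact ih (s g) hok' g' hmem

lemma okP_length (hNC : NoCycleHasEntrance r s) (B V₀ : Finset V) :
    ∀ (l : List E) (u : V), okP r s B V₀ u l → l.length ≤ V₀.card := by
  intro l u hok
  by_contra hlen
  push_neg at hlen
  -- get a default edge
  obtain ⟨d, l', rfl⟩ : ∃ d l', l = d :: l' := by
    cases l with
    | nil => simp at hlen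
    | cons a t => exact ⟨a, t, rfl⟩
  set L := d :: l' with hL
  set n := L.length with hn
  obtain ⟨props, hend⟩ := okP_props r s B V₀ d L u hok
  -- pigeonhole
  have hmaps : ∀ k ∈ Finset.range n, vertAt s u L k ∈ V₀ := fun k hk =>
    (props k (Finset.mem_range.1 hk)).1
  have hcard : V₀.card < (Finset.range n).card := by simpa using hlen
  obtain ⟨i, j, hi, hj, hlt, heq⟩ : ∃ i j, i < n ∧ j < n ∧ i < j ∧
      vertAt s u L i = vertAt s u L j := by
    obtain ⟨a, ha, b, hb, hab, h⟩ :=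
      Finset.exists_ne_map_eq_of_card_lt_of_maps_to hcard hmaps
    simp only [Finset.mem_range] at ha hb
    rcases Nat.lt_or_ge a b with hl | hl
    · exact ⟨a, b, ha, hb, hl, h⟩
    · exact ⟨b, a, hb, ha, by omega, h.symm⟩
  set p := j - i with hp
  have hp1 : 1 ≤ p := by omega
  -- forced periodicity
  have CL : ∀ k, i ≤ k → k + p ≤ n → vertAt s u L k = vertAt s u L (k + p) := by
    intro k hk hkp
    induction k, hk using Nat.le_induction with
    | base =>
      have : i + p = j := by omega
      rw [this]; exact heq
    | succ m hm ihm =>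
      have hmp : m + p ≤ n := by omega
      have ih := ihm hmp
      -- the closed walk from m to m+p is a cycle
      set e' : ℕ → E := fun t => L.getD (m + t) d with he'
      have hcyc : IsCycle r s p e' := by
        refine ⟨hp1, fun t ht => ?_, ?_⟩
        · have h1 : m + t < n := by omega
          have h2 : m + t + 1 < n := by omega
          have := (props (m + t) h1).2.2.2
          rw [he']
          simp only []
          rw [this]
          have := (props (m + t + 1) h2).2.2.1
          rw [show m + (t+1) = m + t + 1 by omega, this]
        · have h1 : m + (p - 1) < n := by omega
          have h2 : m < n := by omega
          rw [he']
          simp only []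
          rw [(props (m + (p-1)) h1).2.2.2, show m + (p-1) + 1 = m + p by omega, ← ih,
            show m + 0 = m by omega, (props m h2).2.2.1]
      have hne := hNC p e' hcyc
      have huniq : ∀ f : E, r f = r (e' 0) → f = e' 0 := by
        intro f hf
        by_contra hfne
        exact hne ⟨0, by omega, f, hfne, hf⟩
      have hidx : m + p < n := by omega
      have hr1 : r (L.getD (m + p) d) = r (e' 0) := by
        rw [(props (m+p) hidx).2.2.1, ← ih, he']
        simp only []
        rw [show m + 0 = m by omega, (props m (by omega)).2.2.1]
      have hedge : L.getD (m + p) d = L.getD m d := by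
        have := huniq _ hr1
        rw [this, he']
        simp only []
        rw [show m + 0 = m by omega]
      have hs1 := (props (m+p) hidx).2.2.2
      have hs2 := (props m (by omega)).2.2.2
      rw [hedge, hs2] at hs1
      rw [show m + 1 + p = m + p + 1 by omega, ← hs1]
  have hfin := CL (n - p) (by omega) (by omega)
  rw [show n - p + p = n by omega] at hfin
  have h1 := (props (n - p) (by omega)).2.1
  rw [hfin] at h1
  exact h1 hend

lemma lists_finite : ∀ (N : ℕ) (S : Set E), S.Finite →
    {l : List E | l.length ≤ N ∧ ∀ g ∈ l, g ∈ S}.Finite := by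
  intro N
  induction N with
  | zero =>
    intro S _
    refine Set.Finite.subset (Set.finite_singleton []) ?_
    rintro l ⟨hl, -⟩
    have h0 : l = [] := List.length_eq_zero_iff.1 (by omega)
    simp [h0]
  | succ N ih =>
    intro S hS
    refine Set.Finite.subset ((hS.image2 List.cons (ih S hS)).insert []) ?_
    rintro l ⟨hl, hmem⟩
    cases l with
    | nil => exact Set.mem_insert _ _
    | cons g t =>
      refine Set.mem_insert_of_mem _ ?_
      refine Set.mem_image2.2 ⟨g, hmem g (by simp), t, ⟨by simpa using hl,
        fun g' hg' => hmem g' (by simp [hg'])⟩, rfl⟩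

include hrow in
lemma okP_finite (hNC : NoCycleHasEntrance r s) (B V₀ : Finset V) (u : V) :
    {l : List E | okP r s B V₀ u l}.Finite := by
  refine Set.Finite.subset (lists_finite V₀.card
    (⋃ v ∈ (V₀ : Set V), {e : E | r e = v}) ?_) ?_
  · exact V₀.finite_toSet.biUnion fun v _ => hrow v
  · intro l hok
    exact ⟨okP_length r s hNC B V₀ l u hok,
      fun g hg => Set.mem_biUnion (okP_edges r s B V₀ l u hok g hg) rfl⟩

/-- the weight function -/
noncomputable def Mw (hNC : NoCycleHasEntrance r s) (B V₀ : Finset V) (u : V) : ℕ :=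
  (okP_finite r s hrow hNC B V₀ u).toFinset.card

lemma Mw_of_B (hNC : NoCycleHasEntrance r s) (B V₀ : Finset V) (u : V) (hu : u ∈ B) :
    Mw r s hrow hNC B V₀ u = 1 := by
  have : (okP_finite r s hrow hNC B V₀ u).toFinset = {[]} := by
    ext l
    simp only [Set.Finite.mem_toFinset, Set.mem_setOf_eq, Finset.mem_singleton]
    constructor
    · intro hok
      cases l with
      | nil => rfl
      | cons g t => exact absurd hu hok.2.1
    · rintro rfl; exact hu
  rw [Mw, this, Finset.card_singleton]

lemma Mw_rec (hNC : NoCycleHasEntrance r s) (B V₀ : Finset V) (u : V)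
    (hu : u ∈ V₀) (hub : u ∉ B) :
    Mw r s hrow hNC B V₀ u = ∑ g ∈ (hrow u).toFinset, Mw r s hrow hNC B V₀ (s g) := by
  classical
  have hset : (okP_finite r s hrow hNC B V₀ u).toFinset
      = (hrow u).toFinset.biUnion
        (fun g => ((okP_finite r s hrow hNC B V₀ (s g)).toFinset).image (List.cons g)) := by
    ext l
    simp only [Set.Finite.mem_toFinset, Set.mem_setOf_eq, Finset.mem_biUnion,
      Finset.mem_image]
    constructor
    · intro hok
      cases l with
      | nil => exact absurd hok hub
      | cons g t =>
        obtain ⟨_, _, hg, hok'⟩ := hok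
        exact ⟨g, hg, t, hok', rfl⟩
    · rintro ⟨g, hg, t, ht, rfl⟩
      exact ⟨hu, hub, hg, ht⟩
  rw [Mw, hset, Finset.card_biUnion]
  · refine Finset.sum_congr rfl fun g _ => ?_
    exact Finset.card_image_of_injective _ (fun a b hab => by simpa using hab)
  · intro g _ g' _ hgg'
    rw [Function.onFun, Finset.disjoint_left]
    rintro l hl hl'
    obtain ⟨t, -, rfl⟩ := Finset.mem_image.1 hl
    obtain ⟨t', -, habs⟩ := Finset.mem_image.1 hl'
    simp only [List.cons.injEq] at habs
    exact hgg' habs.1.symm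

/-- descending chain from a vertex -/
noncomputable def chv (vstar : V) : ℕ → V
  | 0 => vstar
  | k+1 => s ((hnosource (chv vstar k)).choose)

noncomputable def che (vstar : V) (k : ℕ) : E := (hnosource (chv r s hnosource vstar k)).choose

lemma che_r (vstar : V) (k : ℕ) : r (che r s hnosource vstar k) = chv r s hnosource vstar k :=
  (hnosource _).choose_spec

lemma che_s (vstar : V) (k : ℕ) :
    s (che r s hnosource vstar k) = chv r s hnosource vstar (k+1) := rfl

include hrow hnosource in
/-- THE key construction: existence of an invariant weight. -/
lemma exists_M (hNC : NoCycleHasEntrance r s) (V₀ : Finset V) (vstar : V) :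
    ∃ M : V → ℕ, 1 ≤ M vstar ∧
      ∀ v ∈ V₀, M v = ∑ g ∈ (hrow v).toFinset, M (s g) := by
  classical
  set ch := chv r s hnosource vstar with hch
  set ce := che r s hnosource vstar with hce
  -- produce B with the needed properties
  obtain ⟨B, hB2, hBhit⟩ :
      ∃ B : Finset V,
        (∀ v ∈ B, v ∈ V₀ → ∃ g, r g = v ∧ (∀ g', r g' = v → g' = g) ∧ s g ∈ B) ∧
        (∃ m, ch m ∈ B ∧ ∀ k < m, ch k ∈ V₀ ∧ ch k ∉ B) := by
    by_cases hcase : ∃ m, ch m ∉ V₀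
    · -- case 1 : the chain exits V₀
      set m := Nat.find hcase with hm
      have hmspec : ch m ∉ V₀ := Nat.find_spec hcase
      refine ⟨{ch m}, ?_, m, Finset.mem_singleton_self _, ?_⟩
      · intro v hv hvV
        rw [Finset.mem_singleton] at hv
        exact absurd (hv ▸ hvV) hmspec
      · intro k hk
        have hkV : ch k ∈ V₀ := by
          by_contra hkV
          have : m ≤ k := Nat.find_le hkV
          omega
        refine ⟨hkV, ?_⟩
        rw [Finset.mem_singleton]
        intro habs
        exact hmspec (habs ▸ hkV)
    · -- case 2 : the chain stays in V₀, hence loops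
      push_neg at hcase
      have hmaps : ∀ k ∈ Finset.range (V₀.card + 1), ch k ∈ V₀ := fun k _ => hcase k
      obtain ⟨i, j, hlt, heq⟩ : ∃ i j, i < j ∧ ch i = ch j := by
        obtain ⟨a, ha, b, hb, hab, h⟩ := Finset.exists_ne_map_eq_of_card_lt_of_maps_to
          (t := V₀) (by simp) hmaps
        rcases Nat.lt_or_ge a b with hl | hl
        · exact ⟨a, b, hl, h⟩
        · exact ⟨b, a, by omega, h.symm⟩
      have heq' : chv r s hnosource vstar i = chv r s hnosource vstar j := heq
      set B : Finset V := (Finset.Ico i j).image ch with hB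
      have hchB : ∀ k, i ≤ k → k < j → ch k ∈ B := fun k h1 h2 =>
        Finset.mem_image.2 ⟨k, Finset.mem_Ico.2 ⟨h1, h2⟩, rfl⟩
      refine ⟨B, ?_, ?_⟩
      · intro v hv hvV
        obtain ⟨k, hk, rfl⟩ := Finset.mem_image.1 hv
        rw [Finset.mem_Ico] at hk
        set p := j - i with hp
        have hp1 : 1 ≤ p := by omega
        set e' : ℕ → E := fun t => ce (i + t) with he'
        have hcyc : IsCycle r s p e' := by
          refine ⟨hp1, fun t ht => ?_, ?_⟩
          · rw [he']
            simp only []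
            rw [hce, che_s r s hnosource, che_r r s hnosource, show i + t + 1 = i + (t+1) by omega]
          · rw [he']
            simp only []
            rw [hce, che_s r s hnosource, che_r r s hnosource, show i + (p-1) + 1 = j by omega, ← heq',
              show i + 0 = i by omega]
        have hne := hNC p e' hcyc
        have huniq : ∀ t < p, ∀ f : E, r f = r (e' t) → f = e' t := by
          intro t ht f hf
          by_contra hfne
          exact hne ⟨t, ht, f, hfne, hf⟩
        refine ⟨ce k, by rw [hce, che_r r s hnosource], ?_, ?_⟩
        · intro g' hg'
          have ht : k - i < p := by omega
          have hre : r (e' (k - i)) = ch k := by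
            rw [he']
            simp only []
            rw [hce, che_r r s hnosource, show i + (k - i) = k by omega]
          have := huniq (k - i) ht g' (by rw [hg', ← hre])
          rw [this, he']
          simp only []
          rw [show i + (k - i) = k by omega]
        · rw [hce, che_s r s hnosource]
          rcases Nat.lt_or_ge (k+1) j with h | h
          · exact hchB (k+1) (by omega) h
          · have : k + 1 = j := by omega
            rw [this, ← heq']
            exact hchB i le_rfl hlt
      · -- the chain hits B
        have hex : ∃ m, ch m ∈ B := ⟨i, hchB i le_rfl hlt⟩
        set m := Nat.find hex with hm
        refine ⟨m, Nat.find_spec hex, fun k hk => ⟨hcase k, Nat.find_min hex hk⟩⟩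
  -- now build M
  refine ⟨Mw r s hrow hNC B V₀, ?_, ?_⟩
  · -- positivity at vstar via the hitting path
    obtain ⟨m, hmB, hpre⟩ := hBhit
    have hok : ∀ dk k, k + dk = m →
        okP r s B V₀ (ch k) (List.ofFn fun t : Fin dk => ce (k + t)) := by
      intro dk
      induction dk with
      | zero =>
        intro k hk
        simp only [List.ofFn_zero]
        show ch k ∈ B
        rw [show k = m by omega]
        exact hmB
      | succ d ihd =>
        intro k hk
        rw [List.ofFn_succ]
        refine ⟨(hpre k (by omega)).1, (hpre k (by omega)).2, ?_, ?_⟩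
        · show r (ce (k + 0)) = ch k
          rw [show k + (0:ℕ) = k by omega, hce, che_r r s hnosource]
        · show okP r s B V₀ (s (ce (k + (0:Fin (d+1))))) _
          have hs : s (ce (k + ((0:Fin (d+1)) : ℕ))) = ch (k+1) := by
            rw [show k + ((0:Fin (d+1)) : ℕ) = k by simp, hce, che_s r s hnosource]
          rw [hs]
          have := ihd (k+1) (by omega)
          convert this using 2
          funext t
          congr 1
          simp
          omega
    have hok0 := hok m 0 (by omega)
    rw [show ch 0 = vstar by rw [hch]; rfl] at hok0
    rw [Mw]
    refine Nat.one_le_iff_ne_zero.2 (Finset.card_ne_zero_of_mem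
      ((Set.Finite.mem_toFinset _).2 hok0))
  · -- the recursion
    intro v hv
    by_cases hvB : v ∈ B
    · obtain ⟨g, hgr, hguniq, hgB⟩ := hB2 v hvB hv
      rw [Mw_of_B r s hrow hNC B V₀ v hvB]
      have hRf : (hrow v).toFinset = {g} := by
        ext g'
        simp only [Set.Finite.mem_toFinset, Set.mem_setOf_eq, Finset.mem_singleton]
        exact ⟨fun h => hguniq g' h, fun h => h ▸ hgr⟩
      rw [hRf, Finset.sum_singleton, Mw_of_B r s hrow hNC B V₀ _ hgB]
    · exact Mw_rec r s hrow hNC B V₀ v hv hvB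

end PartM


section PartB

variable (hrow : ∀ v : V, {e : E | r e = v}.Finite)
variable (hnosource : ∀ v : V, ∃ e : E, r e = v)

include hrow hnosource in
lemma partB (hNC : NoCycleHasEntrance r s) (f h : PS r s → ℤ)
    (hf : Continuous f) (hcf : HasCompactSupport f)
    (hh : Continuous h) (hch2 : HasCompactSupport h)
    (hpos : ∀ x, 0 ≤ h x)
    (heq : ∀ x, (∑ᶠ (y) (_ : shiftPath r s y = x), f y) - f x = h x) :
    h = 0 := by
  classical
  by_contra hne
  obtain ⟨x₀, hx₀⟩ : ∃ x₀, h x₀ ≠ 0 := by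
    by_contra hall
    push_neg at hall
    exact hne (funext hall)
  have hx₀pos : 0 < h x₀ := lt_of_le_of_ne (hpos x₀) (Ne.symm hx₀)
  obtain ⟨Df, hDf1, hDfloc⟩ := exists_local r s hf hcf
  obtain ⟨Dh, hDh1, hDhloc⟩ := exists_local r s hh hch2
  set D := max Df Dh with hDdef
  have hD1 : 1 ≤ D := le_trans hDf1 (le_max_left _ _)
  have hfloc : ∀ x y : PS r s, (∀ i < D, x.1 i = y.1 i) → f x = f y :=
    fun x y hxy => hDfloc x y fun i hi => hxy i (lt_of_lt_of_le hi (le_max_left _ _))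
  have hhloc : ∀ x y : PS r s, (∀ i < D, x.1 i = y.1 i) → h x = h y :=
    fun x y hxy => hDhloc x y fun i hi => hxy i (lt_of_lt_of_le hi (le_max_right _ _))
  set e₀ : E := x₀.1 0 with he₀
  set nrm : (ℕ → E) → (ℕ → E) := fun q i => if i < D then q i else e₀ with hnrm
  set π : PS r s → (ℕ → E) := fun x => nrm x.1 with hπ
  set Valid : (ℕ → E) → Prop := fun q => ∀ i, i + 1 < D → s (q i) = r (q (i+1)) with hValid
  have hπlt : ∀ (x : PS r s) (i : ℕ), i < D → π x i = x.1 i := fun x i hi => if_pos hi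
  have hπge : ∀ (x : PS r s) (i : ℕ), ¬ (i < D) → π x i = e₀ := fun x i hi => if_neg hi
  have hπval : ∀ x : PS r s, Valid (π x) := by
    intro x i hi
    rw [hπlt x i (by omega), hπlt x (i+1) hi]
    exact x.2 i
  have hπnrm : ∀ x : PS r s, nrm (π x) = π x := by
    intro x; funext i
    by_cases hi : i < D
    · show (if i < D then π x i else e₀) = π x i
      rw [if_pos hi]
    · show (if i < D then π x i else e₀) = π x i
      rw [if_neg hi, hπge x i hi]
  -- the "value on a prefix" functions
  set fhat : (ℕ → E) → ℤ := fun q =>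
    if hq : Valid q then f (extP r s hnosource q D hD1 hq) else 0 with hfhat
  set hhat : (ℕ → E) → ℤ := fun q =>
    if hq : Valid q then h (extP r s hnosource q D hD1 hq) else 0 with hhhat
  have hfhat_eq : ∀ (x : PS r s) (q : ℕ → E) (hq : Valid q),
      (∀ i < D, x.1 i = q i) → fhat q = f x := by
    intro x q hq hagree
    rw [hfhat]
    simp only [dif_pos hq]
    refine hfloc _ x fun i hi => ?_
    rw [extP_lt r s hnosource q D hD1 hq hi, hagree i hi]
  have hhhat_eq : ∀ (x : PS r s) (q : ℕ → E) (hq : Valid q),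
      (∀ i < D, x.1 i = q i) → hhat q = h x := by
    intro x q hq hagree
    rw [hhhat]
    simp only [dif_pos hq]
    refine hhloc _ x fun i hi => ?_
    rw [extP_lt r s hnosource q D hD1 hq hi, hagree i hi]
  have hfhatπ : ∀ x : PS r s, fhat (π x) = f x := fun x =>
    hfhat_eq x (π x) (hπval x) (fun i hi => (hπlt x i hi).symm)
  have hhhatπ : ∀ x : PS r s, hhat (π x) = h x := fun x =>
    hhhat_eq x (π x) (hπval x) (fun i hi => (hπlt x i hi).symm)
  have hπext : ∀ (q : ℕ → E) (hq : Valid q), nrm q = q →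
      π (extP r s hnosource q D hD1 hq) = q := by
    intro q hq hn
    funext i
    by_cases hi : i < D
    · rw [hπlt _ i hi, extP_lt r s hnosource q D hD1 hq hi]
    · rw [hπge _ i hi, ← congrFun hn i]
      show e₀ = if i < D then q i else e₀
      rw [if_neg hi]
  -- finiteness of prefix sets
  have hSfin : ∀ (K : Set (PS r s)), IsCompact K → (π '' K).Finite := by
    intro K hK
    set π' : PS r s → (Fin D → E) := fun x i => x.1 i with hπ'
    set ρ : (Fin D → E) → (ℕ → E) := fun v i => if hi : i < D then v ⟨i, hi⟩ else e₀ with hρ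
    have hcomp : ∀ x, π x = ρ (π' x) := by
      intro x; funext i
      by_cases hi : i < D
      · rw [hπlt x i hi]
        show x.1 i = if hi : i < D then x.1 i else e₀
        rw [dif_pos hi]
      · rw [hπge x i hi]
        show e₀ = if hi : i < D then x.1 i else e₀
        rw [dif_neg hi]
    have hπ'cont : Continuous π' := continuous_pi fun i => continuous_eval r s i
    have hfin' : (π' '' K).Finite := (hK.image hπ'cont).finite_of_discrete
    have : π '' K = ρ '' (π' '' K) := by
      rw [← Set.image_comp]
      exact Set.image_congr fun x _ => hcomp x
    rw [this]
    exact hfin'.image ρ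
  set Sf : Finset (ℕ → E) := (hSfin (tsupport f) hcf).toFinset with hSf
  set Sh : Finset (ℕ → E) := (hSfin (tsupport h) hch2).toFinset with hSh
  have hSf_mem : ∀ x ∈ tsupport f, π x ∈ Sf := fun x hx =>
    (Set.Finite.mem_toFinset _).2 ⟨x, hx, rfl⟩
  have hSh_mem : ∀ x ∈ tsupport h, π x ∈ Sh := fun x hx =>
    (Set.Finite.mem_toFinset _).2 ⟨x, hx, rfl⟩
  have hSf_val : ∀ q ∈ Sf, Valid q ∧ nrm q = q := by
    intro q hq
    obtain ⟨x, -, rfl⟩ := (Set.Finite.mem_toFinset _).1 hq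
    exact ⟨hπval x, hπnrm x⟩
  have hSh_val : ∀ q ∈ Sh, Valid q ∧ nrm q = q := by
    intro q hq
    obtain ⟨x, -, rfl⟩ := (Set.Finite.mem_toFinset _).1 hq
    exact ⟨hπval x, hπnrm x⟩
  have hSf_of : ∀ (q : ℕ → E) (hq : Valid q), nrm q = q → fhat q ≠ 0 → q ∈ Sf := by
    intro q hq hn hne0
    rw [hfhat] at hne0
    simp only [dif_pos hq] at hne0
    have := hSf_mem _ (subset_tsupport f hne0)
    rwa [hπext q hq hn] at this
  have hSh_of : ∀ (q : ℕ → E) (hq : Valid q), nrm q = q → hhat q ≠ 0 → q ∈ Sh := by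
    intro q hq hn hne0
    rw [hhhat] at hne0
    simp only [dif_pos hq] at hne0
    have := hSh_mem _ (subset_tsupport h hne0)
    rwa [hπext q hq hn] at this
  -- extensions
  set Rfin : V → Finset E := fun v => (hrow v).toFinset with hRfin
  have hRmem : ∀ (v : V) (g' : E), g' ∈ Rfin v ↔ r g' = v := fun v g' =>
    Set.Finite.mem_toFinset _
  set extq : (ℕ → E) → E → (ℕ → E) := fun μ g' i =>
    if i + 1 < D then μ (i+1) else if i = D - 1 then g' else e₀ with hextq
  have hextq_last : ∀ μ g', extq μ g' (D-1) = g' := by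
    intro μ g'
    show (if (D-1) + 1 < D then μ ((D-1)+1) else if (D-1) = D - 1 then g' else e₀) = g'
    rw [if_neg (by omega), if_pos rfl]
  have hextq_nrm : ∀ μ g', nrm (extq μ g') = extq μ g' := by
    intro μ g'
    funext i
    by_cases hi : i < D
    · exact if_pos hi
    · show (if i < D then extq μ g' i else e₀)
        = (if i + 1 < D then μ (i+1) else if i = D - 1 then g' else e₀)
      rw [if_neg hi, if_neg (by omega), if_neg (by omega)]
  have hextq_valid : ∀ μ g', Valid μ → r g' = s (μ (D-1)) → Valid (extq μ g') := by
    intro μ g' hv hr i hi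
    show s (if i + 1 < D then μ (i+1) else _) = r (if (i+1) + 1 < D then μ (i+2) else
      if i + 1 = D - 1 then g' else e₀)
    rw [if_pos hi]
    by_cases hi2 : i + 2 < D
    · rw [if_pos (by omega)]
      exact hv (i+1) (by omega)
    · rw [if_neg (by omega), if_pos (by omega : i + 1 = D - 1), hr,
        show D - 1 = i + 1 by omega]
  -- the relation "q extends the shift of μ"
  set Crel : (ℕ → E) → (ℕ → E) → Prop := fun q μ =>
    s (μ 0) = r (q 0) ∧ ∀ i, i + 1 < D → μ (i+1) = q i with hCrel
  set E1 : Finset (ℕ → E) := Sf.biUnion (fun μ => (Rfin (s (μ (D-1)))).image (extq μ))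
    with hE1
  set U : Finset (ℕ → E) := (Sf ∪ Sh) ∪ E1 with hU
  have hU_val : ∀ q ∈ U, Valid q ∧ nrm q = q := by
    intro q hq
    rcases Finset.mem_union.1 hq with hq' | hq'
    · rcases Finset.mem_union.1 hq' with hq'' | hq''
      · exact hSf_val q hq''
      · exact hSh_val q hq''
    · obtain ⟨μ, hμ, hq''⟩ := Finset.mem_biUnion.1 hq'
      obtain ⟨g', hg', rfl⟩ := Finset.mem_image.1 hq''
      have hrg : r g' = s (μ (D-1)) := (hRmem _ _).1 hg'
      exact ⟨hextq_valid μ g' (hSf_val μ hμ).1 hrg, hextq_nrm μ g'⟩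
  -- classification of Crel-extensions
  have hclass : ∀ μ, Valid μ → nrm μ = μ → ∀ q, Valid q → nrm q = q →
      (Crel q μ ↔ ∃ g' ∈ Rfin (s (μ (D-1))), q = extq μ g') := by
    intro μ hμv hμn q hqv hqn
    constructor
    · rintro ⟨h1, h2⟩
      refine ⟨q (D-1), ?_, ?_⟩
      · refine (hRmem _ _).2 ?_
        show r (q (D-1)) = s (μ (D-1))
        rcases Nat.lt_or_ge 1 D with hD2 | hD2
        · have := hqv (D-2) (by omega)
          rw [show D - 2 + 1 = D - 1 by omega] at this
          rw [← this]
          congr 1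
          have := h2 (D-2) (by omega)
          rw [show D - 2 + 1 = D - 1 by omega] at this
          exact this.symm
        · have hD1' : D = 1 := by omega
          rw [show D - 1 = 0 by omega]
          exact h1.symm
      · funext i
        show q i = if i + 1 < D then μ (i+1) else if i = D - 1 then q (D-1) else e₀
        by_cases hi : i + 1 < D
        · rw [if_pos hi]; exact (h2 i hi).symm
        · rw [if_neg hi]
          by_cases hi2 : i = D - 1
          · rw [if_pos hi2, hi2]
          · rw [if_neg hi2, ← congrFun hqn i]
            show (if i < D then q i else e₀) = e₀
            rw [if_neg (by omega)]
    · rintro ⟨g', hg', rfl⟩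
      have hrg : r g' = s (μ (D-1)) := (hRmem _ _).1 hg'
      constructor
      · show s (μ 0) = r (if 0 + 1 < D then μ 1 else if 0 = D - 1 then g' else e₀)
        by_cases hD2 : 1 < D
        · rw [if_pos hD2]
          exact hμv 0 (by omega)
        · rw [if_neg hD2, if_pos (by omega : 0 = D - 1), hrg, show D - 1 = 0 by omega]
      · intro i hi
        show μ (i+1) = if i + 1 < D then μ (i+1) else _
        rw [if_pos hi]
  -- the fiber sum identity
  have hfiber : ∀ x : PS r s, (∑ᶠ (y) (_ : shiftPath r s y = x), f y)
      = ∑ μ ∈ Sf.filter (fun μ => Crel (π x) μ), fhat μ := by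
    intro x
    set T : Finset E := (Sf.filter (fun μ => Crel (π x) μ)).image (fun μ => μ 0) with hT
    have hT1 : ∀ e ∈ T, s e = r (x.1 0) := by
      intro e he
      obtain ⟨μ, hμ, rfl⟩ := Finset.mem_image.1 he
      have hC : Crel (π x) μ := (Finset.mem_filter.1 hμ).2
      have := hC.1
      rwa [hπlt x 0 (by omega)] at this
    have hT2 : ∀ e, s e = r (x.1 0) → f (consP' r s e x) ≠ 0 → e ∈ T := by
      intro e he hne0
      rw [consP'_of r s e x he] at hne0
      set y := consP r s e x he with hy
      have hyS : π y ∈ Sf := hSf_mem y (subset_tsupport f hne0)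
      have hC : Crel (π x) (π y) := by
        constructor
        · rw [hπlt y 0 (by omega), hπlt x 0 (by omega)]
          show s (y.1 0) = r (x.1 0)
          rw [hy, consP_zero]
          exact he
        · intro i hi
          rw [hπlt y (i+1) hi, hπlt x i (by omega), hy, consP_succ]
      refine Finset.mem_image.2 ⟨π y, Finset.mem_filter.2 ⟨hyS, hC⟩, ?_⟩
      rw [hπlt y 0 (by omega), hy, consP_zero]
    rw [fiber_sum r s f x T hT1 hT2, hT]
    rw [Finset.sum_image]
    · refine Finset.sum_congr rfl fun μ hμ => ?_
      have hC : Crel (π x) μ := (Finset.mem_filter.1 hμ).2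
      have hv : Valid μ := (hSf_val μ (Finset.mem_filter.1 hμ).1).1
      have he : s (μ 0) = r (x.1 0) := by
        have := hC.1; rwa [hπlt x 0 (by omega)] at this
      rw [consP'_of r s (μ 0) x he]
      refine (hfhat_eq (consP r s (μ 0) x he) μ hv ?_).symm
      intro i hi
      cases i with
      | zero => rw [consP_zero]
      | succ n =>
        rw [consP_succ]
        have := hC.2 n hi
        rw [this, hπlt x n (by omega)]
    · intro μ1 hμ1 μ2 hμ2 h012
      have hn1 := (hSf_val μ1 (Finset.mem_filter.1 hμ1).1).2
      have hn2 := (hSf_val μ2 (Finset.mem_filter.1 hμ2).1).2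
      have hC1 := (Finset.mem_filter.1 hμ1).2
      have hC2 := (Finset.mem_filter.1 hμ2).2
      funext i
      cases i with
      | zero => exact h012
      | succ n =>
        by_cases hi : n + 1 < D
        · rw [hC1.2 n hi, hC2.2 n hi]
        · rw [← congrFun hn1 (n+1), ← congrFun hn2 (n+1)]
          show (if n+1 < D then μ1 (n+1) else e₀) = (if n+1 < D then μ2 (n+1) else e₀)
          rw [if_neg hi, if_neg hi]
  -- the equation on prefixes
  have heqq : ∀ q ∈ U, hhat q
      = (∑ μ ∈ Sf.filter (fun μ => Crel q μ), fhat μ) - fhat q := by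
    intro q hq
    obtain ⟨hqv, hqn⟩ := hU_val q hq
    set x := extP r s hnosource q D hD1 hqv with hx
    have hπx : π x = q := hπext q hqv hqn
    have := heq x
    rw [hfiber x, hπx] at this
    have hfx : fhat q = f x := hfhat_eq x q hqv (fun i hi =>
      extP_lt r s hnosource q D hD1 hqv hi)
    have hhx : hhat q = h x := hhhat_eq x q hqv (fun i hi =>
      extP_lt r s hnosource q D hD1 hqv hi)
    rw [hfx, hhx, this]
  -- get the invariant weight
  set V₀ : Finset V := Sf.image (fun μ => s (μ (D-1))) with hV₀
  obtain ⟨M, hM1, hMrec⟩ := exists_M r s hrow hnosource hNC V₀ (s (x₀.1 (D-1)))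
  set W : (ℕ → E) → ℤ := fun q => (M (s (q (D-1))) : ℤ) with hW
  -- the key vanishing sum
  have hkey : ∑ q ∈ Sh, W q * hhat q = 0 := by
    have hsub1 : Sh ⊆ U := fun q hq =>
      Finset.mem_union.2 (Or.inl (Finset.mem_union.2 (Or.inr hq)))
    have hsub2 : Sf ⊆ U := fun q hq =>
      Finset.mem_union.2 (Or.inl (Finset.mem_union.2 (Or.inl hq)))
    have h1 : ∑ q ∈ Sh, W q * hhat q = ∑ q ∈ U, W q * hhat q := by
      refine Finset.sum_subset hsub1 ?_
      intro q hqU hqSh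
      obtain ⟨hqv, hqn⟩ := hU_val q hqU
      have : hhat q = 0 := by
        by_contra hcon
        exact hqSh (hSh_of q hqv hqn hcon)
      rw [this, mul_zero]
    rw [h1]
    have h2 : ∀ q ∈ U, W q * hhat q
        = W q * (∑ μ ∈ Sf.filter (fun μ => Crel q μ), fhat μ) - W q * fhat q := by
      intro q hq
      rw [heqq q hq, mul_sub]
    rw [Finset.sum_congr rfl h2, Finset.sum_sub_distrib]
    have h3 : ∑ q ∈ U, W q * fhat q = ∑ q ∈ Sf, W q * fhat q := by
      symm
      refine Finset.sum_subset hsub2 ?_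
      intro q hqU hqSf
      obtain ⟨hqv, hqn⟩ := hU_val q hqU
      have : fhat q = 0 := by
        by_contra hcon
        exact hqSf (hSf_of q hqv hqn hcon)
      rw [this, mul_zero]
    have h4 : ∀ q ∈ U, W q * (∑ μ ∈ Sf.filter (fun μ => Crel q μ), fhat μ)
        = ∑ μ ∈ Sf, if Crel q μ then fhat μ * W q else 0 := by
      intro q _
      rw [Finset.sum_filter, Finset.mul_sum]
      refine Finset.sum_congr rfl fun μ _ => ?_
      by_cases hC : Crel q μ
      · rw [if_pos hC, if_pos hC, mul_comm]
      · rw [if_neg hC, if_neg hC, mul_zero]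
    rw [Finset.sum_congr rfl h4, Finset.sum_comm, h3]
    have h5 : ∀ μ ∈ Sf, (∑ q ∈ U, if Crel q μ then fhat μ * W q else 0)
        = W μ * fhat μ := by
      intro μ hμ
      obtain ⟨hμv, hμn⟩ := hSf_val μ hμ
      rw [← Finset.sum_filter]
      have hUf : U.filter (fun q => Crel q μ) = (Rfin (s (μ (D-1)))).image (extq μ) := by
        ext q
        constructor
        · intro hqf
          obtain ⟨hqU, hC⟩ := Finset.mem_filter.1 hqf
          obtain ⟨hqv, hqn⟩ := hU_val q hqU
          obtain ⟨g', hg', rfl⟩ := (hclass μ hμv hμn q hqv hqn).1 hC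
          exact Finset.mem_image.2 ⟨g', hg', rfl⟩
        · intro hqi
          obtain ⟨g', hg', rfl⟩ := Finset.mem_image.1 hqi
          have hrg : r g' = s (μ (D-1)) := (hRmem _ _).1 hg'
          refine Finset.mem_filter.2 ⟨?_, ?_⟩
          · refine Finset.mem_union.2 (Or.inr ?_)
            exact Finset.mem_biUnion.2 ⟨μ, hμ, Finset.mem_image.2 ⟨g', hg', rfl⟩⟩
          · exact (hclass μ hμv hμn _ (hextq_valid μ g' hμv hrg)
              (hextq_nrm μ g')).2 ⟨g', hg', rfl⟩
      rw [hUf]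
      rw [Finset.sum_image (fun a ha b hb hab => by
        rw [← hextq_last μ a, ← hextq_last μ b, hab])]
      have h6 : ∀ g' ∈ Rfin (s (μ (D-1))),
          fhat μ * W (extq μ g') = fhat μ * (M (s g') : ℤ) := by
        intro g' _
        rw [hW]
        simp only []
        rw [hextq_last μ g']
      rw [Finset.sum_congr rfl h6, ← Finset.mul_sum]
      have hv : s (μ (D-1)) ∈ V₀ := Finset.mem_image_of_mem _ hμ
      have hcast : (∑ g' ∈ Rfin (s (μ (D-1))), (M (s g') : ℤ))
          = (M (s (μ (D-1))) : ℤ) := by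
        rw [hMrec _ hv]
        push_cast
        rfl
      rw [hcast, mul_comm]
    rw [Finset.sum_congr rfl h5]
    exact sub_self _
  -- contradiction
  have hterm : ∀ q ∈ Sh, 0 ≤ W q * hhat q := by
    intro q hq
    refine mul_nonneg (Int.natCast_nonneg _) ?_
    rw [hhhat]
    by_cases hqv : Valid q
    · simp only [dif_pos hqv]
      exact hpos _
    · simp only [dif_neg hqv]
      exact le_refl 0
  have hq0 : π x₀ ∈ Sh := hSh_mem x₀ (subset_tsupport h hx₀)
  have := (Finset.sum_eq_zero_iff_of_nonneg hterm).1 hkey (π x₀) hq0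
  have hWpos : 0 < W (π x₀) := by
    rw [hW]
    simp only []
    rw [hπlt x₀ (D-1) (by omega)]
    exact_mod_cast hM1
  have hhatpos : 0 < hhat (π x₀) := by rw [hhhatπ x₀]; exact hx₀pos
  have := mul_pos hWpos hhatpos
  omega

end PartB

end GraphPos

/-- For a countable row-finite graph with no sources and no sinks, no cycle
has an entrance if and only if `Im(σ_* − id) ∩ C_c(E^∞, ℕ) = {0}`. -/
theorem noCycleHasEntrance_iff_sigmaAst_positivity
    {V E : Type*} [Countable V] [Countable E]
    [TopologicalSpace E] [DiscreteTopology E]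
    (r s : E → V)
    (hrow : ∀ v : V, {e : E | r e = v}.Finite)
    (hnosource : ∀ v : V, ∃ e : E, r e = v)
    (hnosink : ∀ v : V, ∃ e : E, s e = v) :
    NoCycleHasEntrance r s ↔
      ∀ f h : {z : ℕ → E // IsInfinitePath r s z} → ℤ,
        Continuous f → HasCompactSupport f →
        Continuous h → HasCompactSupport h →
        (∀ x, 0 ≤ h x) →
        (∀ x, (∑ᶠ (y) (_ : shiftPath r s y = x), f y) - f x = h x) →
        h = 0 := by
  constructor
  · intro hNC f h hf hcf hh hch2 hpos heq
    exact GraphPos.partB r s hrow hnosource hNC f h hf hcf hh hch2 hpos heq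
  · intro hb p e hcyc hent
    obtain ⟨i, hip, g, hgne, hgr⟩ := hent
    obtain ⟨hp, hchain, hwrap⟩ := hcyc
    set c : ℕ → E := fun j => e ((j + i) % p) with hc
    have hstep : ∀ m < p, s (e m) = r (e ((m+1) % p)) := by
      intro m hm
      rcases Nat.lt_or_ge (m+1) p with h1 | h1
      · rw [Nat.mod_eq_of_lt h1]
        exact hchain m h1
      · have hm1 : (m+1) % p = 0 := by
          rw [show m + 1 = p by omega]
          exact Nat.mod_self p
        rw [hm1, show m = p - 1 by omega]
        exact hwrap
    have hcyc' : IsCycle r s p c := by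
      refine ⟨hp, ?_, ?_⟩
      · intro j hj
        have h1 : (j + i) % p < p := Nat.mod_lt _ (by omega)
        show s (e ((j + i) % p)) = r (e ((j + 1 + i) % p))
        rw [hstep ((j+i) % p) h1]
        congr 1
        rw [Nat.mod_add_mod]
        congr 1
        congr 1
        omega
      · show s (c (p-1)) = r (c 0)
        have h1 : (p - 1 + i) % p < p := Nat.mod_lt _ (by omega)
        show s (e ((p - 1 + i) % p)) = r (e ((0 + i) % p))
        rw [hstep ((p - 1 + i) % p) h1]
        congr 1
        rw [Nat.mod_add_mod, show p - 1 + i + 1 = p + i by omega, Nat.add_mod_left]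
        congr 1
        congr 1
        omega
    have hc0 : c 0 = e i := by
      show e ((0 + i) % p) = e i
      congr 1
      rw [Nat.zero_add]
      exact Nat.mod_eq_of_lt hip
    obtain ⟨F, H, hF1, hF2, hH1, hH2, hHpos, hfe, hHne⟩ :=
      GraphPos.partA r s hrow hnosource p c hcyc' g (by rw [hc0]; exact hgne)
        (by rw [hc0]; exact hgr)
    exact hHne (hb F H hF1 hF2 hH1 hH2 hHpos hfe)
end
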